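/- arXiv:nlin/0307026 — 7 statements merged into one kernel-verified Lean document; each statement's English description precedes it below -/
import Mathlib

section
/- Let L>0, let 0 ≤ x₁ < x₂ < ... < x_n < 2L, and let f : ℝ → ℂ be 2L-periodic, twice continuously differentiable on each open interval between consecutive points of the set {x_j + 2Lm : 1 ≤ j ≤ n, m ∈ ℤ}, with f and its first two derivatives having finite one-sided limits at each such point. Set δ_j = f(x_j⁺) − f(x_j⁻). Then there exists C > 0 such that for every nonzero integer k, |f̂_k − (1/(2πik)) Σ_{j=1}^n δ_j e^{−iπ k x_j/L}| ≤ C/k². -/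
/-!
On each interval between consecutive jump points `f` is `C²` up to the endpoints, so integrating
`f(t) e^{ct}` by parts twice, with `c = −iπk/L`, gives the boundary term `[f(t) e^{ct}]/c` exactly
plus a remainder `O(1/|c|²)`: the second boundary term and the last integral are bounded because
`|e^{ct}| = 1`. Summing over the `n` intervals of the period `[x₁, x₁ + 2L]`, periodicity of
`f(t) e^{ct}` makes the boundary terms telescope into `Σⱼ (f(xⱼ⁻) − f(xⱼ⁺)) e^{c xⱼ} / c`.
-/
set_option autoImplicit false

open MeasureTheory Filter Topology

/-- The `k`-th Fourier coefficient of a `2L`-periodic function: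
`f̂ₖ = (1/(2L)) ∫₀^{2L} f(x) e^{−iπkx/L} dx`. -/
noncomputable def fourierCoeff2L (L : ℝ) (f : ℝ → ℂ) (k : ℤ) : ℂ :=
  (1 / (2 * L : ℂ)) * ∫ x in (0:ℝ)..(2 * L),
    f x * Complex.exp (-(Real.pi * Complex.I * k * x) / L)

open Set Complex Function

section OneSidedLimits

variable {E : Type*} {g : ℝ → E} {a b : ℝ} {la lb : E}

theorem exists_continuousOn_Icc_eqOn_Ioo [TopologicalSpace E] (hab : a < b)
    (hg : ContinuousOn g (Ioo a b)) (hla : Tendsto g (𝓝[>] a) (𝓝 la)) (hlb : Tendsto g (𝓝[<] b) (𝓝 lb)) :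
    ∃ G : ℝ → E, ContinuousOn G (Icc a b) ∧ EqOn G g (Ioo a b) := by
  refine ⟨update (update g a la) b lb, ?_, fun t ht => ?_⟩
  · rw [continuousOn_update_iff, continuousOn_update_iff, Icc_sdiff_right, Ico_sdiff_left]
    refine ⟨⟨hg, fun _ => hla.mono_left (nhdsWithin_mono _ Ioo_subset_Ioi_self)⟩, fun _ => ?_⟩
    refine (hlb.congr' ?_).mono_left (nhdsWithin_mono _ Ico_subset_Iio_self)
    filter_upwards [Ioo_mem_nhdsLT hab] with t ht using (update_of_ne ht.1.ne' _ _).symm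
  · rw [update_of_ne ht.2.ne, update_of_ne ht.1.ne']

variable [NormedAddCommGroup E]

theorem intervalIntegrable_of_tendsto_nhdsGT_nhdsLT (hab : a < b)
    (hg : ContinuousOn g (Ioo a b)) (hla : Tendsto g (𝓝[>] a) (𝓝 la))
    (hlb : Tendsto g (𝓝[<] b) (𝓝 lb)) : IntervalIntegrable g volume a b := by
  obtain ⟨G, hG, hGg⟩ := exists_continuousOn_Icc_eqOn_Ioo hab hg hla hlb
  rw [intervalIntegrable_iff_integrableOn_Ioo_of_le hab.le]
  exact (hG.integrableOn_Icc.mono_set Ioo_subset_Icc_self).congr_fun hGg measurableSet_Ioo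

theorem exists_norm_le_of_tendsto_nhdsGT_nhdsLT (hab : a < b) (hg : ContinuousOn g (Ioo a b))
    (hla : Tendsto g (𝓝[>] a) (𝓝 la)) (hlb : Tendsto g (𝓝[<] b) (𝓝 lb)) :
    ∃ M, ∀ t ∈ Ioo a b, ‖g t‖ ≤ M := by
  obtain ⟨G, hG, hGg⟩ := exists_continuousOn_Icc_eqOn_Ioo hab hg hla hlb
  obtain ⟨M, hM⟩ := isCompact_Icc.exists_bound_of_continuousOn hG
  exact ⟨M, fun t ht => hGg ht ▸ hM t (Ioo_subset_Icc_self ht)⟩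

end OneSidedLimits

section ExpIntegrals

variable {a b : ℝ} {c : ℂ}

theorem norm_cexp_mul_ofReal (hc : c.re = 0) (t : ℝ) : ‖cexp (c * t)‖ = 1 := by
  simp [Complex.norm_exp, hc]

theorem hasDerivAt_cexp_mul_ofReal (c : ℂ) (t : ℝ) :
    HasDerivAt (fun s : ℝ => cexp (c * s)) (c * cexp (c * t)) t := by
  simpa [mul_comm] using ((hasDerivAt_id (t : ℂ)).const_mul c).cexp.comp_ofReal

theorem intervalIntegrable_mul_cexp {g : ℝ → ℂ} {ga gb : ℂ} (hab : a < b)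
    (hg : ContinuousOn g (Ioo a b)) (hga : Tendsto g (𝓝[>] a) (𝓝 ga))
    (hgb : Tendsto g (𝓝[<] b) (𝓝 gb)) (c : ℂ) :
    IntervalIntegrable (fun t => g t * cexp (c * t)) volume a b :=
  have hexp : Continuous fun t : ℝ => cexp (c * t) := by fun_prop
  intervalIntegrable_of_tendsto_nhdsGT_nhdsLT hab (hg.mul hexp.continuousOn)
    (hga.mul hexp.continuousWithinAt.tendsto) (hgb.mul hexp.continuousWithinAt.tendsto)

theorem integral_mul_cexp_eq {g g' : ℝ → ℂ} {ga gb : ℂ} (hab : a < b) (hc : c ≠ 0)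
    (hg : ∀ t ∈ Ioo a b, HasDerivAt g (g' t) t) (hg' : IntervalIntegrable g' volume a b)
    (hga : Tendsto g (𝓝[>] a) (𝓝 ga)) (hgb : Tendsto g (𝓝[<] b) (𝓝 gb)) :
    ∫ t in a..b, g t * cexp (c * t) =
      (gb * cexp (c * b) - ga * cexp (c * a)) / c - (∫ t in a..b, g' t * cexp (c * t)) / c := by
  have hexp : Continuous fun t : ℝ => cexp (c * t) := by fun_prop
  have hint := intervalIntegrable_mul_cexp hab
    (fun t ht => (hg t ht).continuousAt.continuousWithinAt) hga hgb c
  have hint' : IntervalIntegrable (fun t => g' t * cexp (c * t)) volume a b :=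
    hg'.mul_continuousOn hexp.continuousOn
  have hFTC := intervalIntegral.integral_eq_sub_of_hasDerivAt_of_tendsto hab
    (fun t ht => ((hg t ht).mul (hasDerivAt_cexp_mul_ofReal c t)).congr_deriv (by ring))
    (hint'.add (hint.const_mul c)) (hga.mul hexp.continuousWithinAt.tendsto)
    (hgb.mul hexp.continuousWithinAt.tendsto)
  rw [intervalIntegral.integral_add hint' (hint.const_mul c),
    intervalIntegral.integral_const_mul] at hFTC
  field_simp
  linear_combination hFTC

theorem norm_integral_mul_cexp_le {h : ℝ → ℂ} {M : ℝ} (hab : a ≤ b) (hc : c.re = 0)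
    (hM : ∀ t ∈ Ioo a b, ‖h t‖ ≤ M) : ‖∫ t in a..b, h t * cexp (c * t)‖ ≤ M * (b - a) := by
  have hae : ∀ᵐ t, t ∈ uIoc a b → ‖h t * cexp (c * t)‖ ≤ M := by
    filter_upwards [measure_eq_zero_iff_ae_notMem.mp (measure_singleton b)] with t htb ht
    rw [uIoc_of_le hab] at ht
    rw [norm_mul, norm_cexp_mul_ofReal hc, mul_one]
    exact hM t ⟨ht.1, lt_of_le_of_ne ht.2 htb⟩
  simpa [abs_of_nonneg (sub_nonneg.2 hab)] using
    intervalIntegral.norm_integral_le_of_norm_le_const_ae hae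

theorem exists_bound_integral_mul_cexp_sub {f : ℝ → ℂ} {fa fb f'a f'b f''a f''b : ℂ}
    (hab : a < b) (hf : ContDiffOn ℝ 2 f (Ioo a b))
    (hfa : Tendsto f (𝓝[>] a) (𝓝 fa)) (hfb : Tendsto f (𝓝[<] b) (𝓝 fb))
    (hf'a : Tendsto (deriv f) (𝓝[>] a) (𝓝 f'a)) (hf'b : Tendsto (deriv f) (𝓝[<] b) (𝓝 f'b))
    (hf''a : Tendsto (deriv (deriv f)) (𝓝[>] a) (𝓝 f''a))
    (hf''b : Tendsto (deriv (deriv f)) (𝓝[<] b) (𝓝 f''b)) :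
    ∃ M, ∀ c : ℂ, c ≠ 0 → c.re = 0 →
      ‖(∫ t in a..b, f t * cexp (c * t)) - (fb * cexp (c * b) - fa * cexp (c * a)) / c‖ ≤
        M / ‖c‖ ^ 2 := by
  have hf' : ContDiffOn ℝ 1 (deriv f) (Ioo a b) := hf.deriv_of_isOpen isOpen_Ioo (by norm_num)
  have hf'' : ContDiffOn ℝ 0 (deriv (deriv f)) (Ioo a b) :=
    hf'.deriv_of_isOpen isOpen_Ioo (by norm_num)
  obtain ⟨K, hK⟩ := exists_norm_le_of_tendsto_nhdsGT_nhdsLT hab hf''.continuousOn hf''a hf''b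
  refine ⟨K * (b - a) + ‖f'b‖ + ‖f'a‖, fun c hc hre => ?_⟩
  have hIBP₁ := integral_mul_cexp_eq hab hc
    (fun t ht => (hf.differentiableOn two_ne_zero).hasDerivAt (isOpen_Ioo.mem_nhds ht))
    (intervalIntegrable_of_tendsto_nhdsGT_nhdsLT hab hf'.continuousOn hf'a hf'b) hfa hfb
  have hIBP₂ := integral_mul_cexp_eq hab hc
    (fun t ht => (hf'.differentiableOn one_ne_zero).hasDerivAt (isOpen_Ioo.mem_nhds ht))
    (intervalIntegrable_of_tendsto_nhdsGT_nhdsLT hab hf''.continuousOn hf''a hf''b) hf'a hf'b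
  have hrem : (∫ t in a..b, f t * cexp (c * t)) - (fb * cexp (c * b) - fa * cexp (c * a)) / c =
      ((∫ t in a..b, deriv (deriv f) t * cexp (c * t)) -
        (f'b * cexp (c * b) - f'a * cexp (c * a))) / c ^ 2 := by
    rw [hIBP₁, hIBP₂]
    field_simp
    ring
  rw [hrem, norm_div, norm_pow]
  gcongr
  calc _ ≤ ‖∫ t in a..b, deriv (deriv f) t * cexp (c * t)‖ +
        (‖f'b * cexp (c * b)‖ + ‖f'a * cexp (c * a)‖) :=
        (norm_sub_le _ _).trans (by gcongr; exact norm_sub_le _ _)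
    _ ≤ K * (b - a) + ‖f'b‖ + ‖f'a‖ := by
      rw [norm_mul, norm_mul, norm_cexp_mul_ofReal hre, norm_cexp_mul_ofReal hre, mul_one,
        mul_one, ← add_assoc]
      gcongr
      exact norm_integral_mul_cexp_le hab.le hre hK

end ExpIntegrals

section Periodic

variable {α : Type*} [TopologicalSpace α] {f : ℝ → α} {p y : ℝ} {l : α}

theorem Function.Periodic.tendsto_nhdsGT_add_mul_int (hf : Periodic f p) (m : ℤ)
    (h : Tendsto f (𝓝[>] y) (𝓝 l)) : Tendsto f (𝓝[>] (y + p * m)) (𝓝 l) := by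
  rw [← Filter.map_add_right_nhdsGT, tendsto_map'_iff]
  exact h.congr fun t => by simpa [mul_comm] using (hf.int_mul m t).symm

theorem Function.Periodic.tendsto_nhdsLT_add_mul_int (hf : Periodic f p) (m : ℤ)
    (h : Tendsto f (𝓝[<] y) (𝓝 l)) : Tendsto f (𝓝[<] (y + p * m)) (𝓝 l) := by
  rw [← Filter.map_add_right_nhdsLT, tendsto_map'_iff]
  exact h.congr fun t => by simpa [mul_comm] using (hf.int_mul m t).symm

end Periodic

section PeriodicExtension

variable {n : ℕ} (hn : 0 < n)

def periodicIndex (i : ℤ) : Fin n := ⟨i.natMod n, Int.natMod_lt hn.ne'⟩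

theorem periodicIndex_add_mul (j : Fin n) (m : ℤ) : periodicIndex hn (j + n * m) = j := by
  ext
  simp [periodicIndex, Int.natMod, Int.add_mul_emod_self_left,
    Int.emod_eq_of_lt (Int.natCast_nonneg j) (Int.ofNat_lt.2 j.isLt)]

theorem periodicIndex_natCast (j : Fin n) : periodicIndex hn (j : ℕ) = j := by
  simpa using periodicIndex_add_mul hn j 0

theorem periodicIndex_add_mul_ediv (i : ℤ) : (periodicIndex hn i : ℤ) + n * (i / n) = i := by
  have : (0 : ℤ) ≤ i % n := Int.emod_nonneg _ (by exact_mod_cast hn.ne')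
  simp [periodicIndex, Int.natMod, Int.toNat_of_nonneg this, Int.emod_add_mul_ediv]

theorem periodicIndex_add_self (i : ℤ) : periodicIndex hn (i + n) = periodicIndex hn i := by
  simp [periodicIndex, Int.natMod]

variable (x : Fin n → ℝ) (p : ℝ)

-- Enumerates the jump points `x j + p * m` by `ℤ`, increasingly when `x` spans less than `p`.
def periodicExt (i : ℤ) : ℝ := x (periodicIndex hn i) + p * (i / n : ℤ)

theorem periodicExt_add_mul (j : Fin n) (m : ℤ) :
    periodicExt hn x p (j + n * m) = x j + p * m := by
  have hn' : (n : ℤ) ≠ 0 := by exact_mod_cast hn.ne'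
  rw [periodicExt, periodicIndex_add_mul, Int.add_mul_ediv_left _ _ hn',
    Int.ediv_eq_zero_of_lt (Int.natCast_nonneg j) (Int.ofNat_lt.2 j.isLt), zero_add]

theorem periodicExt_natCast (j : Fin n) : periodicExt hn x p (j : ℕ) = x j := by
  simpa using periodicExt_add_mul hn x p j 0

theorem periodicExt_add_self (i : ℤ) :
    periodicExt hn x p (i + n) = periodicExt hn x p i + p := by
  have hn' : (n : ℤ) ≠ 0 := by exact_mod_cast hn.ne'
  have hdiv : (i + n) / n = i / n + 1 := by simpa using Int.add_mul_ediv_left i 1 hn'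
  rw [periodicExt, periodicExt, periodicIndex_add_self, hdiv]
  push_cast
  ring

theorem strictMono_periodicExt (hx : StrictMono x) (hxp : ∀ j, x j < x ⟨0, hn⟩ + p) :
    StrictMono (periodicExt hn x p) := by
  refine strictMono_int_of_lt_succ fun i => ?_
  rw [← periodicIndex_add_mul_ediv hn i]
  set j := periodicIndex hn i
  set m := i / n
  rw [periodicExt_add_mul]
  by_cases hj : (j : ℕ) + 1 < n
  · have hsucc : (j : ℤ) + n * m + 1 = ((⟨j + 1, hj⟩ : Fin n) : ℕ) + n * m := by
      push_cast
      ring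
    rw [hsucc, periodicExt_add_mul]
    exact add_lt_add_left (hx (Fin.mk_lt_mk.2 (Nat.lt_succ_self _))) _
  · have hjn : (n : ℤ) = j + 1 := by omega
    have hwrap : (j : ℤ) + n * m + 1 = ((⟨0, hn⟩ : Fin n) : ℕ) + n * (m + 1) := by
      push_cast
      linear_combination -hjn
    rw [hwrap, periodicExt_add_mul]
    push_cast
    linarith [hxp j]

end PeriodicExtension

section JumpPoints

variable {n : ℕ} (hn : 0 < n) {x : Fin n → ℝ} {p : ℝ}

theorem Ioo_periodicExt_subset_compl (hX : StrictMono (periodicExt hn x p)) (i : ℤ) :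
    Ioo (periodicExt hn x p i) (periodicExt hn x p (i + 1)) ⊆
      {y | ∃ (j : Fin n) (m : ℤ), y = x j + p * m}ᶜ := by
  rintro _ ⟨hi, hi₁⟩ ⟨j, m, rfl⟩
  rw [← periodicExt_add_mul hn x p j m, hX.lt_iff_lt] at hi hi₁
  omega

theorem sum_range_jump_terms {c : ℂ} (hcp : cexp (c * p) = 1) (fl fr : Fin n → ℂ) :
    ∑ i ∈ Finset.range n,
        (fl (periodicIndex hn (i + 1)) * cexp (c * periodicExt hn x p (i + 1)) -
          fr (periodicIndex hn i) * cexp (c * periodicExt hn x p i)) =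
      ∑ j, (fl j - fr j) * cexp (c * x j) := by
  set Q : ℕ → ℂ := fun i => fl (periodicIndex hn i) * cexp (c * periodicExt hn x p i)
  have hQ : Q n = Q 0 := by
    have h := periodicExt_add_self hn x p 0
    simp only [zero_add] at h
    simp only [Q, Nat.cast_zero, h, ← periodicIndex_add_self hn 0, zero_add, ofReal_add,
      mul_add, Complex.exp_add, hcp, mul_one]
  have htel := Finset.sum_range_sub Q n
  rw [hQ, sub_self] at htel
  calc _ = ∑ i ∈ Finset.range n, (Q (i + 1) - Q i) +
        ∑ i ∈ Finset.range n,
          (Q i - fr (periodicIndex hn i) * cexp (c * periodicExt hn x p i)) := by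
        rw [← Finset.sum_add_distrib]
        refine Finset.sum_congr rfl fun i _ => ?_
        simp only [Q, Nat.cast_succ]
        ring
    _ = ∑ j, (fl j - fr j) * cexp (c * x j) := by
        rw [htel, zero_add, ← Fin.sum_univ_eq_sum_range]
        simp only [Q, periodicIndex_natCast, periodicExt_natCast]
        exact Finset.sum_congr rfl fun j _ => by ring

end JumpPoints

theorem exists_bound_integral_mul_cexp_sub_jumps {n : ℕ} (hn : 0 < n) {x : Fin n → ℝ} {p : ℝ}
    (hx : StrictMono x) (hxp : ∀ j, x j < x ⟨0, hn⟩ + p) {f : ℝ → ℂ} (hf : Periodic f p)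
    (hsmooth : ContDiffOn ℝ 2 f {y | ∃ (j : Fin n) (m : ℤ), y = x j + p * m}ᶜ)
    (hlim : ∀ d ∈ {y | ∃ (j : Fin n) (m : ℤ), y = x j + p * m},
      ∀ g ∈ ({deriv f, deriv (deriv f)} : Set (ℝ → ℂ)),
        (∃ l, Tendsto g (𝓝[<] d) (𝓝 l)) ∧ (∃ r, Tendsto g (𝓝[>] d) (𝓝 r)))
    {fl fr : Fin n → ℂ} (hfl : ∀ j, Tendsto f (𝓝[<] (x j)) (𝓝 (fl j)))
    (hfr : ∀ j, Tendsto f (𝓝[>] (x j)) (𝓝 (fr j))) :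
    ∃ M, ∀ c : ℂ, c ≠ 0 → c.re = 0 → cexp (c * p) = 1 →
      ‖(∫ t in 0..p, f t * cexp (c * t)) - (∑ j, (fl j - fr j) * cexp (c * x j)) / c‖ ≤
        M / ‖c‖ ^ 2 := by
  set X := periodicExt hn x p
  have hX : StrictMono X := strictMono_periodicExt hn x p hx hxp
  have hmem (i : ℤ) : X i ∈ {y | ∃ (j : Fin n) (m : ℤ), y = x j + p * m} := ⟨_, _, rfl⟩
  have hR (i : ℤ) : Tendsto f (𝓝[>] (X i)) (𝓝 (fr (periodicIndex hn i))) :=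
    hf.tendsto_nhdsGT_add_mul_int _ (hfr _)
  have hL (i : ℤ) : Tendsto f (𝓝[<] (X i)) (𝓝 (fl (periodicIndex hn i))) :=
    hf.tendsto_nhdsLT_add_mul_int _ (hfl _)
  have hsmooth' (i : ℤ) : ContDiffOn ℝ 2 f (Ioo (X i) (X (i + 1))) :=
    hsmooth.mono (Ioo_periodicExt_subset_compl hn hX i)
  have hpiece (i : ℕ) : ∃ M, ∀ c : ℂ, c ≠ 0 → c.re = 0 →
      ‖(∫ t in X i..X (i + 1), f t * cexp (c * t)) -
        (fl (periodicIndex hn (i + 1)) * cexp (c * X (i + 1)) -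
          fr (periodicIndex hn i) * cexp (c * X i)) / c‖ ≤ M / ‖c‖ ^ 2 := by
    obtain ⟨-, _, h'a⟩ := hlim _ (hmem i) (deriv f) (by simp)
    obtain ⟨_, h'b⟩ := (hlim _ (hmem (i + 1)) (deriv f) (by simp)).1
    obtain ⟨-, _, h''a⟩ := hlim _ (hmem i) (deriv (deriv f)) (by simp)
    obtain ⟨_, h''b⟩ := (hlim _ (hmem (i + 1)) (deriv (deriv f)) (by simp)).1
    exact exists_bound_integral_mul_cexp_sub (hX (lt_add_one _)) (hsmooth' i) (hR i) (hL _)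
      h'a h'b h''a h''b
  choose M hM using hpiece
  refine ⟨∑ i ∈ Finset.range n, M i, fun c hc hre hcp => ?_⟩
  have hint (i : ℕ) (_ : i < n) :
      IntervalIntegrable (fun t => f t * cexp (c * t)) volume (X i) (X (i + 1 : ℕ)) := by
    rw [Nat.cast_succ]
    exact intervalIntegrable_mul_cexp (hX (lt_add_one _)) (hsmooth' i).continuousOn (hR i)
      (hL _) c
  have hperiod : ∫ t in 0..p, f t * cexp (c * t) =
      ∫ t in X (0 : ℕ)..X (n : ℕ), f t * cexp (c * t) := by
    have hper : Periodic (fun t : ℝ => f t * cexp (c * t)) p := fun t => by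
      simp only [hf t, ofReal_add, mul_add, Complex.exp_add, hcp, mul_one]
    rw [Nat.cast_zero, ← zero_add (n : ℤ),
      show X (0 + n) = X 0 + p from periodicExt_add_self hn x p 0]
    simpa using hper.intervalIntegral_add_eq 0 (X 0)
  rw [hperiod, ← intervalIntegral.sum_integral_adjacent_intervals hint,
    ← sum_range_jump_terms hn hcp, Finset.sum_div, ← Finset.sum_sub_distrib, Finset.sum_div]
  refine (norm_sum_le _ _).trans (Finset.sum_le_sum fun i _ => ?_)
  simpa only [Nat.cast_succ] using hM i c hc hre

theorem fourierCoeff2L_sub_jumps_eq {L : ℝ} (hL : L ≠ 0) (f : ℝ → ℂ) {k : ℤ} (hk : k ≠ 0)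
    {n : ℕ} (x : Fin n → ℝ) (fl fr : Fin n → ℂ) :
    fourierCoeff2L L f k - (1 / (2 * Real.pi * I * k)) *
        ∑ j, (fr j - fl j) * cexp (-(Real.pi * I * k * (x j)) / L) =
      (1 / (2 * L)) * ((∫ t in 0..(2 * L), f t * cexp (-(Real.pi * I * k) / L * t)) -
        (∑ j, (fl j - fr j) * cexp (-(Real.pi * I * k) / L * x j)) / (-(Real.pi * I * k) / L)) := by
  have hπ : (Real.pi : ℂ) ≠ 0 := ofReal_ne_zero.2 Real.pi_ne_zero
  have hk' : (k : ℂ) ≠ 0 := Int.cast_ne_zero.2 hk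
  have hL' : (L : ℂ) ≠ 0 := ofReal_ne_zero.2 hL
  have hexp (t : ℝ) : -(Real.pi * I * k * t) / L = -(Real.pi * I * k) / L * t := by ring
  have hjumps : ∑ j, (fl j - fr j) * cexp (-(Real.pi * I * k) / L * x j) =
      -∑ j, (fr j - fl j) * cexp (-(Real.pi * I * k) / L * x j) := by
    rw [← Finset.sum_neg_distrib]
    exact Finset.sum_congr rfl fun j _ => by ring
  simp only [fourierCoeff2L, hexp, hjumps]
  field_simp

/-- For a `2L`-periodic function, piecewise `C²` with jump discontinuities at the points
`x_j + 2Lm`, the Fourier coefficients satisfy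
`f̂ₖ = (1/(2πik)) Σⱼ δⱼ e^{−iπk xⱼ/L} + O(1/k²)`, where `δⱼ` is the jump of `f` at `xⱼ`. -/
theorem fourierCoeff_jump_asymptotics
    (L : ℝ) (hL : 0 < L) (n : ℕ) (hn : 0 < n) (x : Fin n → ℝ)
    (hxmono : StrictMono x) (hxrange : ∀ j, 0 ≤ x j ∧ x j < 2 * L)
    (f : ℝ → ℂ) (hper : ∀ y, f (y + 2 * L) = f y)
    (D : Set ℝ) (hD : D = {y : ℝ | ∃ j : Fin n, ∃ m : ℤ, y = x j + 2 * L * m})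
    (hsmooth : ContDiffOn ℝ 2 f Dᶜ)
    (hlim : ∀ d ∈ D, ∀ g ∈ ({f, deriv f, deriv (deriv f)} : Set (ℝ → ℂ)),
      (∃ l : ℂ, Tendsto g (nhdsWithin d (Set.Iio d)) (nhds l)) ∧
      (∃ r : ℂ, Tendsto g (nhdsWithin d (Set.Ioi d)) (nhds r)))
    (fl fr : Fin n → ℂ)
    (hfl : ∀ j, Tendsto f (nhdsWithin (x j) (Set.Iio (x j))) (nhds (fl j)))
    (hfr : ∀ j, Tendsto f (nhdsWithin (x j) (Set.Ioi (x j))) (nhds (fr j))) :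
    ∃ C > 0, ∀ k : ℤ, k ≠ 0 →
      ‖fourierCoeff2L L f k -
        (1 / (2 * Real.pi * Complex.I * k)) *
          ∑ j, (fr j - fl j) * Complex.exp (-(Real.pi * Complex.I * k * (x j)) / L)‖
        ≤ C / (k : ℝ) ^ 2 := by
  subst hD
  obtain ⟨M, hM⟩ := exists_bound_integral_mul_cexp_sub_jumps hn hxmono
    (fun j => by linarith [(hxrange j).2, (hxrange ⟨0, hn⟩).1]) hper hsmooth
    (fun d hd g hg => hlim d hd g (by aesop)) hfl hfr
  refine ⟨max M 1 * L / (2 * Real.pi ^ 2), by positivity, fun k hk => ?_⟩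
  set c : ℂ := -(Real.pi * I * k) / L
  have hc : c ≠ 0 := by simp [c, hk, hL.ne', Real.pi_ne_zero]
  have hre : c.re = 0 := by simp [c]
  have hcp : cexp (c * ↑(2 * L)) = 1 := by
    have hL' : (L : ℂ) ≠ 0 := ofReal_ne_zero.2 hL.ne'
    rw [show c * ↑(2 * L) = (-k : ℤ) * (2 * Real.pi * I) by push_cast [c]; field_simp]
    exact exp_int_mul_two_pi_mul_I _
  have hnorm : ‖c‖ ^ 2 = Real.pi ^ 2 * k ^ 2 / L ^ 2 := by
    simp [c, div_pow, mul_pow, abs_of_pos hL]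
  have hnorm2L : ‖1 / (2 * (L : ℂ))‖ = 1 / (2 * L) := by simp [abs_of_pos hL]
  rw [fourierCoeff2L_sub_jumps_eq hL.ne' f hk, norm_mul]
  calc _ ≤ ‖1 / (2 * (L : ℂ))‖ * (max M 1 / ‖c‖ ^ 2) := by
        gcongr
        exact (hM c hc hre hcp).trans (by gcongr; exact le_max_left _ _)
    _ = _ := by
      rw [hnorm, hnorm2L]
      field_simp
end

section
/- Let L>0, let 0 ≤ x₁ < x₂ < ... < x_n < 2L, and let f : ℝ → ℂ be 2L-periodic, three times continuously differentiable on each open interval between consecutive points of the set {x_j + 2Lm : 1 ≤ j ≤ n, m ∈ ℤ}, with f and its first three derivatives having finite one-sided limits at each such point. Set δ_j = f(x_j⁺) − f(x_j⁻), and assume that at every discontinuity point the one-sided derivatives coincide: f'(x_j⁺) = f'(x_j⁻) for all j. Then there exists C > 0 such that for every nonzero integer k, |f̂_k − (1/(2πik)) Σ_{j=1}^n δ_j e^{−iπ k x_j/L}| ≤ C/|k|³. -/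
set_option autoImplicit false

open MeasureTheory Filter Topology

/-!
Cut one period at the jump points, `x₀ < x₁ < ⋯ < x_{n-1} < x₀ + 2L`; on each piece `f` is `C³`
with one-sided limits of `f, f', f'', f'''` at the ends. Integration by parts against `e^{cy}`,
`c = −iπk/L`, gives `c ∫ g e^{cy} = −J(g) − ∫ g' e^{cy}`, where by periodicity the boundary terms
telescope to the jump sum `J(g) = Σⱼ (g(xⱼ⁺) − g(xⱼ⁻)) e^{c xⱼ}`. Applied to `f, f', f''` this
yields `f̂ₖ = J(f)/(2πik) − (J(f'') + ∫ f''' e^{cy}) / (2L c³)`, since `J(f') = 0` when the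
one-sided derivatives agree; the numerator of the last term is bounded independently of `k`.
-/

open Set Function intervalIntegral
open scoped Real Complex

section OneSidedLimits

theorem Function.Periodic.tendsto_nhdsLT_add_iff {E : Type*} {g : ℝ → E} {T : ℝ}
    (hg : Periodic g T) {a : ℝ} {l : Filter E} :
    Tendsto g (𝓝[<] (a + T)) l ↔ Tendsto g (𝓝[<] a) l := by
  rw [← Filter.map_add_right_nhdsLT, tendsto_map'_iff, comp_def, hg.funext]

variable {E : Type*} [TopologicalSpace E] {g : ℝ → E} {T : ℝ}

theorem Function.Periodic.leftLim_add [T2Space E] (hg : Periodic g T) (a : ℝ) :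
    leftLim g (a + T) = leftLim g a := by
  by_cases h : ∃ l, Tendsto g (𝓝[<] a) (𝓝 l)
  · obtain ⟨l, hl⟩ := h
    rw [leftLim_eq_of_tendsto hl, leftLim_eq_of_tendsto (hg.tendsto_nhdsLT_add_iff.2 hl)]
  · have h' : ¬∃ l, Tendsto g (𝓝[<] (a + T)) (𝓝 l) := by
      simpa only [hg.tendsto_nhdsLT_add_iff] using h
    rw [leftLim_eq_of_not_tendsto g h, leftLim_eq_of_not_tendsto g h', hg a]

theorem tendsto_leftLim_of_exists [T2Space E] {a : ℝ} (h : ∃ l, Tendsto g (𝓝[<] a) (𝓝 l)) :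
    Tendsto g (𝓝[<] a) (𝓝 (leftLim g a)) := by
  obtain ⟨l, hl⟩ := h
  rwa [leftLim_eq_of_tendsto hl]

theorem tendsto_rightLim_of_exists [T2Space E] {a : ℝ} (h : ∃ r, Tendsto g (𝓝[>] a) (𝓝 r)) :
    Tendsto g (𝓝[>] a) (𝓝 (rightLim g a)) := by
  obtain ⟨r, hr⟩ := h
  rwa [rightLim_eq_of_tendsto hr]

end OneSidedLimits

theorem Function.Periodic.periodic_deriv {F : Type*} [NormedAddCommGroup F] [NormedSpace ℝ F]
    {g : ℝ → F} {T : ℝ} (hg : Periodic g T) : Periodic (deriv g) T := fun y => by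
  rw [← deriv_comp_add_const, hg.funext]

theorem intervalIntegrable_of_continuousOn_Ioo_of_tendsto {E : Type*} [NormedAddCommGroup E]
    {g : ℝ → E} {a b : ℝ} (hab : a < b) (hg : ContinuousOn g (Ioo a b)) {ga gb : E}
    (ha : Tendsto g (𝓝[>] a) (𝓝 ga)) (hb : Tendsto g (𝓝[<] b) (𝓝 gb)) :
    IntervalIntegrable g volume a b := by
  classical
  set G := update (update g a ga) b gb
  have hG : ContinuousOn G (Icc a b) := by
    rw [continuousOn_update_iff, continuousOn_update_iff, Icc_sdiff_right, Ico_sdiff_left]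
    refine ⟨⟨hg, fun _ => ha.mono_left (nhdsWithin_mono _ Ioo_subset_Ioi_self)⟩, fun _ => ?_⟩
    refine (hb.congr' ?_).mono_left (nhdsWithin_mono _ Ico_subset_Iio_self)
    filter_upwards [Ioo_mem_nhdsLT_of_mem (right_mem_Ioc.2 hab)] with y hy using
      (update_of_ne hy.1.ne' _ _).symm
  refine (hG.intervalIntegrable_of_Icc hab.le).congr_uIoo fun y hy => ?_
  rw [uIoo_of_le hab.le] at hy
  simp only [G, update_of_ne hy.2.ne, update_of_ne hy.1.ne']

section IntegrationByParts

variable {g : ℝ → ℂ}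

theorem mul_integral_mul_cexp_eq_sub {a b : ℝ} (hab : a < b) (c : ℂ) {g' : ℝ → ℂ} {ga gb : ℂ}
    (hg : ∀ y ∈ Ioo a b, HasDerivAt g (g' y) y) (hgi : IntervalIntegrable g volume a b)
    (hg'i : IntervalIntegrable g' volume a b)
    (ha : Tendsto g (𝓝[>] a) (𝓝 ga)) (hb : Tendsto g (𝓝[<] b) (𝓝 gb)) :
    c * ∫ y in a..b, g y * cexp (c * y) =
      gb * cexp (c * b) - ga * cexp (c * a) - ∫ y in a..b, g' y * cexp (c * y) := by
  have he : Continuous fun y : ℝ => cexp (c * y) := by fun_prop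
  have he' (y : ℝ) : HasDerivAt (fun t : ℝ => cexp (c * t)) (c * cexp (c * y)) y := by
    simpa [mul_comm] using ((Complex.ofRealCLM.hasDerivAt (x := y)).const_mul c).cexp
  have hgei := hgi.mul_continuousOn he.continuousOn
  have hg'ei := hg'i.mul_continuousOn he.continuousOn
  have htendsto {t : ℝ} {l : Filter ℝ} {gt : ℂ} (hl : l ≤ 𝓝 t) (ht : Tendsto g l (𝓝 gt)) :
      Tendsto (fun y => g y * cexp (c * y)) l (𝓝 (gt * cexp (c * t))) :=
    ht.mul ((he.tendsto t).mono_left hl)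
  have ftc := integral_eq_sub_of_hasDerivAt_of_tendsto hab
    (fun y hy => ((hg y hy).mul (he' y)).congr_deriv
      (by ring : _ = g' y * cexp (c * y) + c * (g y * cexp (c * y))))
    (hg'ei.add (hgei.const_mul c)) (htendsto nhdsWithin_le_nhds ha) (htendsto nhdsWithin_le_nhds hb)
  rw [integral_add hg'ei (hgei.const_mul c), intervalIntegral.integral_const_mul] at ftc
  linear_combination ftc

variable {n : ℕ} {p : ℕ → ℝ}

theorem mul_integral_mul_cexp_eq_sum_sub (hp : ∀ i < n, p i < p (i + 1)) (c : ℂ)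
    (hg : ∀ i < n, ContDiffOn ℝ 1 g (Ioo (p i) (p (i + 1))))
    (hlim : ∀ i ≤ n, (∃ l, Tendsto g (𝓝[<] (p i)) (𝓝 l)) ∧ ∃ r, Tendsto g (𝓝[>] (p i)) (𝓝 r))
    (hlim' : ∀ i ≤ n, (∃ l, Tendsto (deriv g) (𝓝[<] (p i)) (𝓝 l)) ∧
      ∃ r, Tendsto (deriv g) (𝓝[>] (p i)) (𝓝 r)) :
    c * ∫ y in p 0..p n, g y * cexp (c * y) =
      ∑ i ∈ Finset.range n, (leftLim g (p (i + 1)) * cexp (c * p (i + 1)) -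
        rightLim g (p i) * cexp (c * p i)) - ∫ y in p 0..p n, deriv g y * cexp (c * y) := by
  have he : ContinuousOn (fun y : ℝ => cexp (c * y)) univ := by fun_prop
  have hgi : ∀ i < n, IntervalIntegrable g volume (p i) (p (i + 1)) := fun i hi =>
    intervalIntegrable_of_continuousOn_Ioo_of_tendsto (hp i hi) (hg i hi).continuousOn
      (tendsto_rightLim_of_exists (hlim i hi.le).2) (tendsto_leftLim_of_exists (hlim (i + 1) hi).1)
  have hg'i : ∀ i < n, IntervalIntegrable (deriv g) volume (p i) (p (i + 1)) := fun i hi =>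
    intervalIntegrable_of_continuousOn_Ioo_of_tendsto (hp i hi)
      ((hg i hi).continuousOn_deriv_of_isOpen isOpen_Ioo le_rfl)
      (tendsto_rightLim_of_exists (hlim' i hi.le).2)
      (tendsto_leftLim_of_exists (hlim' (i + 1) hi).1)
  rw [← sum_integral_adjacent_intervals fun i hi =>
      (hgi i hi).mul_continuousOn (he.mono (subset_univ _)),
    ← sum_integral_adjacent_intervals fun i hi =>
      (hg'i i hi).mul_continuousOn (he.mono (subset_univ _)),
    Finset.mul_sum, ← Finset.sum_sub_distrib]
  refine Finset.sum_congr rfl fun i hi => ?_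
  have hi := Finset.mem_range.1 hi
  refine mul_integral_mul_cexp_eq_sub (hp i hi) c (fun y hy => ?_) (hgi i hi) (hg'i i hi)
    (tendsto_rightLim_of_exists (hlim i hi.le).2) (tendsto_leftLim_of_exists (hlim (i + 1) hi).1)
  exact (((hg i hi).differentiableOn one_ne_zero y hy).differentiableAt
    (isOpen_Ioo.mem_nhds hy)).hasDerivAt

end IntegrationByParts

theorem Finset.sum_range_succ_eq_of_eq {M : Type*} [AddCommMonoid M] [IsRightCancelAdd M]
    {u : ℕ → M} {n : ℕ} (h : u n = u 0) :
    ∑ i ∈ Finset.range n, u (i + 1) = ∑ i ∈ Finset.range n, u i := by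
  have h' := (Finset.sum_range_succ' u n).symm.trans (Finset.sum_range_succ u n)
  rw [h] at h'
  exact add_right_cancel h'

noncomputable def jumpSum (g : ℝ → ℂ) (c : ℂ) (p : ℕ → ℝ) (n : ℕ) : ℂ :=
  ∑ i ∈ Finset.range n, (rightLim g (p i) - leftLim g (p i)) * cexp (c * p i)

section PeriodicIntegrationByParts

variable {g : ℝ → ℂ} {T : ℝ} {c : ℂ} {n : ℕ} {p : ℕ → ℝ}

theorem Function.Periodic.mul_integral_mul_cexp_eq (hg : Periodic g T) (hc : cexp (c * T) = 1)
    (hp : ∀ i < n, p i < p (i + 1)) (hpn : p n = p 0 + T)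
    (hsmooth : ∀ i < n, ContDiffOn ℝ 1 g (Ioo (p i) (p (i + 1))))
    (hlim : ∀ i ≤ n, (∃ l, Tendsto g (𝓝[<] (p i)) (𝓝 l)) ∧ ∃ r, Tendsto g (𝓝[>] (p i)) (𝓝 r))
    (hlim' : ∀ i ≤ n, (∃ l, Tendsto (deriv g) (𝓝[<] (p i)) (𝓝 l)) ∧
      ∃ r, Tendsto (deriv g) (𝓝[>] (p i)) (𝓝 r)) :
    c * ∫ y in p 0..p n, g y * cexp (c * y) =
      -jumpSum g c p n - ∫ y in p 0..p n, deriv g y * cexp (c * y) := by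
  have hwrap : leftLim g (p n) * cexp (c * p n) = leftLim g (p 0) * cexp (c * p 0) := by
    rw [hpn, hg.leftLim_add, Complex.ofReal_add, mul_add, Complex.exp_add, hc, mul_one]
  rw [mul_integral_mul_cexp_eq_sum_sub hp c hsmooth hlim hlim', Finset.sum_sub_distrib,
    Finset.sum_range_succ_eq_of_eq (u := fun i => leftLim g (p i) * cexp (c * p i)) hwrap,
    ← Finset.sum_sub_distrib, jumpSum, ← Finset.sum_neg_distrib]
  congr 1
  exact Finset.sum_congr rfl fun i _ => by ring

theorem Function.Periodic.cube_mul_integral_mul_cexp_eq (hf : Periodic g T)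
    (hc : cexp (c * T) = 1) (hp : ∀ i < n, p i < p (i + 1)) (hpn : p n = p 0 + T)
    (hsmooth : ∀ i < n, ContDiffOn ℝ 3 g (Ioo (p i) (p (i + 1))))
    (hlim : ∀ i ≤ n, ∀ h ∈ ({g, deriv g, deriv (deriv g), deriv (deriv (deriv g))} : Set (ℝ → ℂ)),
      (∃ l, Tendsto h (𝓝[<] (p i)) (𝓝 l)) ∧ ∃ r, Tendsto h (𝓝[>] (p i)) (𝓝 r)) :
    c ^ 3 * ∫ y in p 0..p n, g y * cexp (c * y) =
      -c ^ 2 * jumpSum g c p n + c * jumpSum (deriv g) c p n - jumpSum (deriv (deriv g)) c p n -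
        ∫ y in p 0..p n, deriv (deriv (deriv g)) y * cexp (c * y) := by
  have hsmooth₁ : ∀ i < n, ContDiffOn ℝ 2 (deriv g) (Ioo (p i) (p (i + 1))) := fun i hi =>
    (hsmooth i hi).deriv_of_isOpen isOpen_Ioo (by norm_num)
  have hsmooth₂ : ∀ i < n, ContDiffOn ℝ 1 (deriv (deriv g)) (Ioo (p i) (p (i + 1))) := fun i hi =>
    (hsmooth₁ i hi).deriv_of_isOpen isOpen_Ioo (by norm_num)
  have hibp₀ := hf.mul_integral_mul_cexp_eq hc hp hpn
    (fun i hi => (hsmooth i hi).of_le (by norm_num))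
    (fun i hi => hlim i hi _ (by simp)) (fun i hi => hlim i hi _ (by simp))
  have hibp₁ := hf.periodic_deriv.mul_integral_mul_cexp_eq hc hp hpn
    (fun i hi => (hsmooth₁ i hi).of_le (by norm_num))
    (fun i hi => hlim i hi _ (by simp)) (fun i hi => hlim i hi _ (by simp))
  have hibp₂ := hf.periodic_deriv.periodic_deriv.mul_integral_mul_cexp_eq hc hp hpn hsmooth₂
    (fun i hi => hlim i hi _ (by simp)) (fun i hi => hlim i hi _ (by simp))
  linear_combination c ^ 2 * hibp₀ - c * hibp₁ + hibp₂

end PeriodicIntegrationByParts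

section FourierCoefficients

variable {L : ℝ} {f : ℝ → ℂ}

theorem cexp_neg_pi_I_int_div_mul_two_mul (k : ℤ) (hL : L ≠ 0) :
    cexp (-(π * Complex.I * k) / L * ↑(2 * L)) = 1 := by
  have hL' : (L : ℂ) ≠ 0 := Complex.ofReal_ne_zero.2 hL
  have h : -(π * Complex.I * k) / L * ↑(2 * L) = ↑(-k) * (2 * π * Complex.I) := by
    push_cast
    field_simp
  rw [h, Complex.exp_int_mul_two_pi_mul_I]

theorem norm_cexp_neg_pi_I_int_div_mul (k : ℤ) (L y : ℝ) :
    ‖cexp (-(π * Complex.I * k) / L * y)‖ = 1 := by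
  have h : -(π * Complex.I * k) / L * y = ↑(-(π * k * y) / L) * Complex.I := by
    push_cast
    ring
  rw [h, Complex.norm_exp_ofReal_mul_I]

theorem fourierCoeff2L_eq_integral_add (hL : L ≠ 0) (hf : Periodic f (2 * L)) (k : ℤ) (a : ℝ) :
    fourierCoeff2L L f k =
      1 / (2 * L) * ∫ y in a..a + 2 * L, f y * cexp (-(π * Complex.I * k) / L * y) := by
  have hper : Periodic (fun y : ℝ => f y * cexp (-(π * Complex.I * k) / L * y)) (2 * L) :=
    fun y => by
      dsimp only
      rw [hf y, Complex.ofReal_add, mul_add, Complex.exp_add,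
        cexp_neg_pi_I_int_div_mul_two_mul k hL, mul_one]
  rw [fourierCoeff2L, ← hper.intervalIntegral_add_eq 0 a, zero_add]
  congr 2
  ext y
  ring_nf

theorem fourierCoeff2L_sub_jumpSum_eq (hL : 0 < L) (hf : Periodic f (2 * L)) {n : ℕ}
    {p : ℕ → ℝ} (hp : ∀ i < n, p i < p (i + 1)) (hpn : p n = p 0 + 2 * L)
    (hsmooth : ∀ i < n, ContDiffOn ℝ 3 f (Ioo (p i) (p (i + 1))))
    (hlim : ∀ i ≤ n, ∀ h ∈ ({f, deriv f, deriv (deriv f), deriv (deriv (deriv f))} : Set (ℝ → ℂ)),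
      (∃ l, Tendsto h (𝓝[<] (p i)) (𝓝 l)) ∧ ∃ r, Tendsto h (𝓝[>] (p i)) (𝓝 r))
    (hmatch : ∀ i < n, rightLim (deriv f) (p i) = leftLim (deriv f) (p i)) {k : ℤ} (hk : k ≠ 0)
    {c : ℂ} (hc : c = -(π * Complex.I * k) / L) :
    fourierCoeff2L L f k - 1 / (2 * π * Complex.I * k) * jumpSum f c p n =
      -(jumpSum (deriv (deriv f)) c p n +
        ∫ y in p 0..p n, deriv (deriv (deriv f)) y * cexp (c * y)) / (2 * L * c ^ 3) := by
  have hibp := hf.cube_mul_integral_mul_cexp_eq (c := c)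
    (hc ▸ cexp_neg_pi_I_int_div_mul_two_mul k hL.ne') hp hpn hsmooth hlim
  have hJ₁ : jumpSum (deriv f) c p n = 0 := Finset.sum_eq_zero fun i hi => by
    rw [hmatch i (Finset.mem_range.1 hi), sub_self, zero_mul]
  have hF := fourierCoeff2L_eq_integral_add hL.ne' hf k (p 0)
  rw [← hpn, ← hc] at hF
  have hL' : (L : ℂ) ≠ 0 := Complex.ofReal_ne_zero.2 hL.ne'
  have hc₀ : c ≠ 0 := hc ▸ div_ne_zero (by simp [hk, Real.pi_ne_zero]) hL'
  have h2πik : 2 * π * Complex.I * k = -(2 * L * c) := by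
    rw [hc]
    field_simp
  rw [hJ₁] at hibp
  rw [hF, h2πik]
  field_simp
  linear_combination hibp

theorem norm_fourierCoeff2L_sub_jumpSum_le (hL : 0 < L) (hf : Periodic f (2 * L)) {n : ℕ}
    {p : ℕ → ℝ} (hp : ∀ i < n, p i < p (i + 1)) (hpn : p n = p 0 + 2 * L)
    (hsmooth : ∀ i < n, ContDiffOn ℝ 3 f (Ioo (p i) (p (i + 1))))
    (hlim : ∀ i ≤ n, ∀ h ∈ ({f, deriv f, deriv (deriv f), deriv (deriv (deriv f))} : Set (ℝ → ℂ)),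
      (∃ l, Tendsto h (𝓝[<] (p i)) (𝓝 l)) ∧ ∃ r, Tendsto h (𝓝[>] (p i)) (𝓝 r))
    (hmatch : ∀ i < n, rightLim (deriv f) (p i) = leftLim (deriv f) (p i)) :
    ∃ C > 0, ∀ k : ℤ, k ≠ 0 →
      ‖fourierCoeff2L L f k -
          1 / (2 * π * Complex.I * k) * jumpSum f (-(π * Complex.I * k) / L) p n‖ ≤
        C / |(k : ℝ)| ^ 3 := by
  set K₂ := ∑ i ∈ Finset.range n,
    ‖rightLim (deriv (deriv f)) (p i) - leftLim (deriv (deriv f)) (p i)‖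
  set K₃ := ∫ y in p 0..p n, ‖deriv (deriv (deriv f)) y‖
  have hp0n : p 0 ≤ p n := by linarith
  have hK₃ : 0 ≤ K₃ := integral_nonneg hp0n fun _ _ => norm_nonneg _
  refine ⟨L ^ 2 * (K₂ + K₃ + 1) / (2 * π ^ 3), by positivity, fun k hk => ?_⟩
  rw [fourierCoeff2L_sub_jumpSum_eq hL hf hp hpn hsmooth hlim hmatch hk rfl]
  set c : ℂ := -(π * Complex.I * k) / L
  have hnorm_c : ‖c‖ = π * |(k : ℝ)| / L := by
    simp [c, abs_of_pos hL, abs_of_pos Real.pi_pos]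
  have hnorm_e : ∀ y : ℝ, ‖cexp (c * y)‖ = 1 := norm_cexp_neg_pi_I_int_div_mul k L
  have hJ₂ : ‖jumpSum (deriv (deriv f)) c p n‖ ≤ K₂ := (norm_sum_le _ _).trans_eq <|
    Finset.sum_congr rfl fun i _ => by rw [norm_mul, hnorm_e, mul_one]
  have hI₃ : ‖∫ y in p 0..p n, deriv (deriv (deriv f)) y * cexp (c * y)‖ ≤ K₃ :=
    (intervalIntegral.norm_integral_le_integral_norm hp0n).trans_eq <| integral_congr fun y _ => by
      rw [norm_mul, hnorm_e, mul_one]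
  have hk : 0 < |(k : ℝ)| := abs_pos.2 (Int.cast_ne_zero.2 hk)
  rw [norm_div, norm_neg, norm_mul, norm_mul, norm_pow, hnorm_c, Complex.norm_ofNat,
    Complex.norm_real, Real.norm_of_nonneg hL.le]
  calc _ ≤ (K₂ + K₃ + 1) / (2 * L * (π * |(k : ℝ)| / L) ^ 3) := by
        gcongr
        linarith [norm_add_le (jumpSum (deriv (deriv f)) c p n)
          (∫ y in p 0..p n, deriv (deriv (deriv f)) y * cexp (c * y))]
    _ = _ := by field_simp

end FourierCoefficients

section PeriodPartition

variable {n : ℕ} (x : Fin n → ℝ) (hn : 0 < n) (T : ℝ)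

noncomputable def periodPartition (i : ℕ) : ℝ :=
  if h : i < n then x ⟨i, h⟩ else x ⟨0, hn⟩ + T

variable {x hn T}

theorem periodPartition_of_lt {i : ℕ} (hi : i < n) : periodPartition x hn T i = x ⟨i, hi⟩ :=
  dif_pos hi

theorem periodPartition_of_le {i : ℕ} (hi : n ≤ i) :
    periodPartition x hn T i = x ⟨0, hn⟩ + T :=
  dif_neg hi.not_gt

theorem periodPartition_self : periodPartition x hn T n = periodPartition x hn T 0 + T := by
  rw [periodPartition_of_le le_rfl, periodPartition_of_lt hn]

theorem periodPartition_lt_succ (hx : StrictMono x) (hxT : ∀ j, x j < x ⟨0, hn⟩ + T) {i : ℕ}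
    (hi : i < n) :
    periodPartition x hn T i < periodPartition x hn T (i + 1) := by
  rw [periodPartition_of_lt hi]
  rcases (Nat.succ_le_of_lt hi).lt_or_eq with h | h
  · rw [periodPartition_of_lt h]
    exact hx (Fin.mk_lt_mk.2 i.lt_succ_self)
  · rw [periodPartition_of_le h.ge]
    exact hxT _

theorem monotone_periodPartition (hx : StrictMono x) (hxT : ∀ j, x j < x ⟨0, hn⟩ + T) :
    Monotone (periodPartition x hn T) :=
  monotone_nat_of_le_succ fun i => by
    rcases lt_or_ge i n with hi | hi
    · exact (periodPartition_lt_succ hx hxT hi).le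
    · rw [periodPartition_of_le hi, periodPartition_of_le (hi.trans i.le_succ)]

theorem periodPartition_mem {i : ℕ} (hi : i ≤ n) :
    periodPartition x hn T i ∈ {y | ∃ j, ∃ m : ℤ, y = x j + T * m} := by
  rcases hi.lt_or_eq with hi | rfl
  · exact ⟨⟨i, hi⟩, 0, by simp [periodPartition_of_lt hi]⟩
  · exact ⟨⟨0, hn⟩, 1, by simp [periodPartition_of_le le_rfl]⟩

theorem Ioo_periodPartition_subset_compl (hx : StrictMono x) (hxT : ∀ j, x j < x ⟨0, hn⟩ + T)
    {i : ℕ} (hi : i < n) :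
    Ioo (periodPartition x hn T i) (periodPartition x hn T (i + 1)) ⊆
      {y | ∃ j, ∃ m : ℤ, y = x j + T * m}ᶜ := by
  rintro _ ⟨hy₁, hy₂⟩ ⟨j, m, rfl⟩
  have hmono := monotone_periodPartition hx hxT
  have hT : 0 < T := by linarith [hxT ⟨0, hn⟩]
  have hx₀ : x ⟨0, hn⟩ ≤ x j := hx.monotone (Fin.mk_le_of_le_val (Nat.zero_le _))
  have hlow : x ⟨0, hn⟩ ≤ periodPartition x hn T i :=
    (periodPartition_of_lt hn).symm.trans_le (hmono (Nat.zero_le i))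
  have hup : periodPartition x hn T (i + 1) ≤ x ⟨0, hn⟩ + T :=
    (hmono hi).trans_eq (periodPartition_of_le le_rfl)
  obtain rfl : m = 0 := by
    have h₁ : (-1 : ℝ) < m := by nlinarith [hxT j]
    have h₂ : (m : ℝ) < 1 := by nlinarith
    have : -1 < m ∧ m < 1 := ⟨by exact_mod_cast h₁, by exact_mod_cast h₂⟩
    omega
  rw [Int.cast_zero, mul_zero, add_zero,
    ← periodPartition_of_lt (x := x) (hn := hn) (T := T) j.isLt] at hy₁ hy₂
  rcases le_or_gt (j : ℕ) i with h | h
  · exact (hmono h).not_gt hy₁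
  · exact (hmono h).not_gt hy₂

theorem jumpSum_periodPartition (g : ℝ → ℂ) (c : ℂ) :
    jumpSum g c (periodPartition x hn T) n =
      ∑ j, (rightLim g (x j) - leftLim g (x j)) * cexp (c * x j) := by
  rw [jumpSum, ← Fin.sum_univ_eq_sum_range]
  exact Finset.sum_congr rfl fun j _ => by rw [periodPartition_of_lt j.isLt]

end PeriodPartition

/-- For a `2L`-periodic function, piecewise `C³` with jump discontinuities at the points
`x_j + 2Lm` at which the one-sided first derivatives coincide, the Fourier coefficients
satisfy `f̂ₖ = (1/(2πik)) Σⱼ δⱼ e^{−iπk xⱼ/L} + O(1/|k|³)`. -/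
theorem fourierCoeff_jump_asymptotics_matchedDerivs
    (L : ℝ) (hL : 0 < L) (n : ℕ) (hn : 0 < n) (x : Fin n → ℝ)
    (hxmono : StrictMono x) (hxrange : ∀ j, 0 ≤ x j ∧ x j < 2 * L)
    (f : ℝ → ℂ) (hper : ∀ y, f (y + 2 * L) = f y)
    (D : Set ℝ) (hD : D = {y : ℝ | ∃ j : Fin n, ∃ m : ℤ, y = x j + 2 * L * m})
    (hsmooth : ContDiffOn ℝ 3 f Dᶜ)
    (hlim : ∀ d ∈ D,
      ∀ g ∈ ({f, deriv f, deriv (deriv f), deriv (deriv (deriv f))} : Set (ℝ → ℂ)),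
      (∃ l : ℂ, Tendsto g (nhdsWithin d (Set.Iio d)) (nhds l)) ∧
      (∃ r : ℂ, Tendsto g (nhdsWithin d (Set.Ioi d)) (nhds r)))
    (fl fr : Fin n → ℂ)
    (hfl : ∀ j, Tendsto f (nhdsWithin (x j) (Set.Iio (x j))) (nhds (fl j)))
    (hfr : ∀ j, Tendsto f (nhdsWithin (x j) (Set.Ioi (x j))) (nhds (fr j)))
    (hderiv_match : ∀ d ∈ D, ∃ m : ℂ,
      Tendsto (deriv f) (nhdsWithin d (Set.Iio d)) (nhds m) ∧
      Tendsto (deriv f) (nhdsWithin d (Set.Ioi d)) (nhds m)) :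
    ∃ C > 0, ∀ k : ℤ, k ≠ 0 →
      ‖fourierCoeff2L L f k -
        (1 / (2 * Real.pi * Complex.I * k)) *
          ∑ j, (fr j - fl j) * Complex.exp (-(Real.pi * Complex.I * k * (x j)) / L)‖
        ≤ C / |(k : ℝ)| ^ 3 := by
  subst hD
  have hxT : ∀ j, x j < x ⟨0, hn⟩ + 2 * L := fun j => by
    linarith [(hxrange j).2, (hxrange ⟨0, hn⟩).1]
  have hpD : ∀ i ≤ n, periodPartition x hn (2 * L) i ∈ _ := fun i hi => periodPartition_mem hi
  obtain ⟨C, hC, hbound⟩ :=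
    norm_fourierCoeff2L_sub_jumpSum_le (p := periodPartition x hn (2 * L)) hL hper
    (fun i hi => periodPartition_lt_succ hxmono hxT hi) periodPartition_self
    (fun i hi => hsmooth.mono (Ioo_periodPartition_subset_compl hxmono hxT hi))
    (fun i hi => hlim _ (hpD i hi))
    (fun i hi => by
      obtain ⟨m, hl, hr⟩ := hderiv_match _ (hpD i hi.le)
      rw [leftLim_eq_of_tendsto hl, rightLim_eq_of_tendsto hr])
  refine ⟨C, hC, fun k hk => ?_⟩
  convert hbound k hk using 4
  rw [jumpSum_periodPartition]
  refine Finset.sum_congr rfl fun j _ => ?_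
  rw [leftLim_eq_of_tendsto (hfl j), rightLim_eq_of_tendsto (hfr j)]
  ring_nf
end

section
/- Let L>0 and let a, b, λ : ℤ → ℝ be sequences such that: a_j ≤ λ_j ≤ b_j for all j; b_j < a_{j+1} for all j (the intervals [a_j,b_j] are pairwise disjoint and ordered); and there exists C > 0 such that |a_j − πj/(2L)| ≤ C/|j| and |b_j − πj/(2L)| ≤ C/|j| for all j ≠ 0. Fix k ∈ ℤ. Then the infinite product over j ∈ ℤ, j ≠ k, of the positive factors sqrt(|(λ_k − a_j)(λ_k − b_j)|) / |λ_k − λ_j| converges to a finite nonzero limit (the family of factors is multipliable). -/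
/-!
The factor for `j ≠ k` equals `√((1 + wₐ(j)) (1 + w_b(j)))` with
`w_u(j) = (λⱼ - uⱼ) / (λₖ - λⱼ)`, and it is positive because `λₖ` lies outside the gap
`[aⱼ, bⱼ]`, which contains `aⱼ`, `bⱼ` and `λⱼ`. The gap asymptotics give `λⱼ - uⱼ = O(1/j)` and
`λₖ - λⱼ ≍ j`, so `w_u(j) = O(1/j²)` is summable over `ℤ`; hence the logarithms of the factors
are summable and the product converges to the exponential of their sum, which is nonzero.
-/

open Real Filter Asymptotics Function

theorem pairwise_disjoint_Icc_of_right_lt_left_succ {a b : ℤ → ℝ} (hab : ∀ j, a j ≤ b j)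
    (hord : ∀ j, b j < a (j + 1)) : Pairwise (Disjoint on fun j => Set.Icc (a j) (b j)) := by
  have hlt : ∀ i j, i < j → b i < a j := by
    intro i j hij
    induction j, hij using Int.leInduction with
    | base => exact hord i
    | succ j _ ih => linarith [hab j, hord j]
  intro i j hij
  refine Set.disjoint_left.mpr fun x hi hj => ?_
  rcases hij.lt_or_gt with h | h
  · linarith [hlt i j h, hi.2, hj.1]
  · linarith [hlt j i h, hi.1, hj.2]

theorem isBigO_intCast_inv_of_abs_le {f : ℤ → ℝ} {C : ℝ}
    (h : ∀ j ≠ 0, |f j| ≤ C / |(j : ℝ)|) : f =O[cofinite] fun j => (j : ℝ)⁻¹ :=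
  IsBigO.of_bound C <| (eventually_cofinite_ne 0).mono fun j hj => by
    simpa [div_eq_mul_inv] using h j hj

theorem tendsto_norm_intCast_cofinite : Tendsto (fun j : ℤ => ‖(j : ℝ)‖) cofinite atTop :=
  tendsto_norm_cocompact_atTop.comp Int.tendsto_coe_cofinite

theorem isBigO_intCast_inv_one : (fun j : ℤ => (j : ℝ)⁻¹) =O[cofinite] fun _ => (1 : ℝ) :=
  (tendsto_inv₀_cobounded.comp (Metric.cobounded_eq_cocompact (α := ℝ) ▸
    Int.tendsto_coe_cofinite)).isBigO_one ℝ

theorem isBigO_inv_sub_of_isBigO_sub_mul {v : ℤ → ℝ} {c : ℝ} (hc : c ≠ 0)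
    (hv : (fun j => v j - c * j) =O[cofinite] fun j => (j : ℝ)⁻¹) (x : ℝ) :
    (fun j => (x - v j)⁻¹) =O[cofinite] fun j : ℤ => (j : ℝ)⁻¹ := by
  have hc' : -c ≠ 0 := neg_ne_zero.mpr hc
  have hone : (fun _ => (1 : ℝ)) =o[cofinite] fun j : ℤ => -c * j :=
    (isLittleO_one_left_iff ℝ).mpr <| by
      simpa [norm_mul] using tendsto_norm_intCast_cofinite.const_mul_atTop (norm_pos_iff.mpr hc')
  have hsmall : (fun j => x - (v j - c * j)) =o[cofinite] fun j : ℤ => -c * j :=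
    ((isBigO_const_one ℝ x _).sub (hv.trans isBigO_intCast_inv_one)).trans_isLittleO hone
  have hlin : (fun j : ℤ => (j : ℝ)) =O[cofinite] fun j => x - v j :=
    ((isBigO_self_const_mul hc' _ _).trans hsmall.right_isBigO_add).congr_right fun j => by ring
  exact hlin.inv_rev ((eventually_cofinite_ne 0).mono fun j hj h => absurd h (by exact_mod_cast hj))

theorem summable_div_sub_of_isBigO_sub_mul {u v : ℤ → ℝ} {c : ℝ} (hc : c ≠ 0)
    (hu : (fun j => u j - c * j) =O[cofinite] fun j => (j : ℝ)⁻¹)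
    (hv : (fun j => v j - c * j) =O[cofinite] fun j => (j : ℝ)⁻¹) (x : ℝ) :
    Summable fun j => (v j - u j) / (x - v j) := by
  refine summable_of_isBigO ((Real.summable_one_div_int_pow (p := 2)).mpr one_lt_two) ?_
  have := (hv.sub hu).mul (isBigO_inv_sub_of_isBigO_sub_mul hc hv x)
  exact this.congr (fun j => by ring) fun j => by ring

theorem sqrt_abs_mul_div_abs_pos {x u v w : ℝ} (hu : x ≠ u) (hv : x ≠ v) (hw : x ≠ w) :
    0 < √|(x - u) * (x - v)| / |x - w| := by
  have := sub_ne_zero.mpr hu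
  have := sub_ne_zero.mpr hv
  have := sub_ne_zero.mpr hw
  positivity

theorem log_sqrt_abs_mul_div_abs {x u v w : ℝ} (hu : x ≠ u) (hv : x ≠ v) (hw : x ≠ w) :
    log (√|(x - u) * (x - v)| / |x - w|) =
      (log (1 + (w - u) / (x - w)) + log (1 + (w - v) / (x - w))) / 2 := by
  have hw' : x - w ≠ 0 := sub_ne_zero.mpr hw
  have hu' : x - u ≠ 0 := sub_ne_zero.mpr hu
  have hv' : x - v ≠ 0 := sub_ne_zero.mpr hv
  rw [one_add_div hw', one_add_div hw', sub_add_sub_cancel, sub_add_sub_cancel,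
    log_div hu' hw', log_div hv' hw', log_div (by positivity) (by positivity),
    log_sqrt (abs_nonneg _), log_abs, log_abs, log_mul hu' hv']
  ring

theorem residue_product_multipliable_general
    (L : ℝ) (hL : 0 < L) (a b lam : ℤ → ℝ)
    (hin : ∀ j, a j ≤ lam j ∧ lam j ≤ b j)
    (hord : ∀ j, b j < a (j + 1))
    (C : ℝ)
    (hasymp : ∀ j : ℤ, j ≠ 0 →
      |a j - Real.pi * j / (2 * L)| ≤ C / |(j : ℝ)| ∧
      |b j - Real.pi * j / (2 * L)| ≤ C / |(j : ℝ)|)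
    (k : ℤ) :
    ∃ P : ℝ, P ≠ 0 ∧
      HasProd (fun j : {j : ℤ // j ≠ k} =>
        Real.sqrt |(lam k - a j) * (lam k - b j)| / |lam k - lam j|) P := by
  set c := π / (2 * L)
  have hc : c ≠ 0 := by positivity
  have hasymp' : ∀ j ≠ 0, |a j - c * j| ≤ C / |(j : ℝ)| ∧ |b j - c * j| ≤ C / |(j : ℝ)| := by
    intro j hj
    simpa only [c, div_mul_eq_mul_div, mul_comm π] using hasymp j hj
  have ha := isBigO_intCast_inv_of_abs_le fun j hj => (hasymp' j hj).1
  have hb := isBigO_intCast_inv_of_abs_le fun j hj => (hasymp' j hj).2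
  have hlam := isBigO_intCast_inv_of_abs_le (f := fun j => lam j - c * j) fun j hj =>
    (abs_le_max_abs_abs (sub_le_sub_right (hin j).1 _) (sub_le_sub_right (hin j).2 _)).trans
      (max_le (hasymp' j hj).1 (hasymp' j hj).2)
  have hab : ∀ j, a j ≤ b j := fun j => (hin j).1.trans (hin j).2
  have hne : ∀ j : {j // j ≠ k}, ∀ y ∈ Set.Icc (a j) (b j), lam k ≠ y := fun j _ hy =>
    ((pairwise_disjoint_Icc_of_right_lt_left_succ hab hord j.2).ne_of_mem hy (hin k)).symm
  have hne_a := fun j => hne j _ ⟨le_rfl, hab j⟩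
  have hne_b := fun j => hne j _ ⟨hab j, le_rfl⟩
  have hne_lam := fun j => hne j _ (hin j)
  have hlog_one_add : ∀ u : ℤ → ℝ, (fun j => u j - c * j) =O[cofinite] (fun j => (j : ℝ)⁻¹) →
      Summable fun j : {j // j ≠ k} => log (1 + (lam j - u j) / (lam k - lam j)) := fun u hu =>
    (Real.summable_log_one_add_of_summable
      (summable_div_sub_of_isBigO_sub_mul hc hu hlam (lam k))).subtype _
  have hsum : Summable fun j : {j // j ≠ k} =>
      log (√|(lam k - a j) * (lam k - b j)| / |lam k - lam j|) :=
    (((hlog_one_add a ha).add (hlog_one_add b hb)).div_const 2).congr fun j =>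
      (log_sqrt_abs_mul_div_abs (hne_a j) (hne_b j) (hne_lam j)).symm
  exact ⟨_, exp_ne_zero _, Real.hasProd_of_hasSum_log
    (fun j => sqrt_abs_mul_div_abs_pos (hne_a j) (hne_b j) (hne_lam j)) hsum.hasSum⟩

/-- Under the gap asymptotics `aⱼ, bⱼ = πj/(2L) + O(1/|j|)`, with `λⱼ ∈ [aⱼ, bⱼ]` and the
intervals `[aⱼ, bⱼ]` pairwise disjoint and ordered, the infinite product
`∏_{j ≠ k} sqrt(|(λₖ − aⱼ)(λₖ − bⱼ)|)/|λₖ − λⱼ|` converges to a finite nonzero limit. -/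
theorem residue_product_multipliable
    (L : ℝ) (hL : 0 < L) (a b lam : ℤ → ℝ)
    (hin : ∀ j, a j ≤ lam j ∧ lam j ≤ b j)
    (hord : ∀ j, b j < a (j + 1))
    (C : ℝ) (hC : 0 < C)
    (hasymp : ∀ j : ℤ, j ≠ 0 →
      |a j - Real.pi * j / (2 * L)| ≤ C / |(j : ℝ)| ∧
      |b j - Real.pi * j / (2 * L)| ≤ C / |(j : ℝ)|)
    (k : ℤ) :
    ∃ P : ℝ, P ≠ 0 ∧
      HasProd (fun j : {j : ℤ // j ≠ k} =>
        Real.sqrt |(lam k - a j) * (lam k - b j)| / |lam k - lam j|) P :=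
  residue_product_multipliable_general L hL a b lam hin hord C hasymp k
end

section
/- Let L>0, I ∈ ℝ, A ∈ ℝ, C > 0, and let a, b, λ : ℤ → ℝ be sequences satisfying the symmetry a_{−j} = −b_j, b_{−j} = −a_j, λ_{−j} = −λ_j for all j, and the asymptotics, for all j ≥ 1: |a_j − (πj/(2L) + (I−A)/(πj))| ≤ C/j³, |b_j − (πj/(2L) + (I+A)/(πj))| ≤ C/j³, |λ_j − (πj/(2L) + I/(πj))| ≤ C/j³. Fix k₀ ∈ ℤ. Then the symmetric partial sums S_N = (1/2) Σ_{|j| ≤ N} (a_j² + b_j²) − Σ_{|j| ≤ N, j ≠ k₀} λ_j² converge to a finite limit as N → ∞. -/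
set_option autoImplicit false
open Filter Topology

private lemma even_sum' (G : ℤ → ℝ) (hG : ∀ j, G (-j) = G j) (N : ℕ) :
    ∑ j ∈ Finset.Icc (-(N : ℤ)) (N : ℤ), G j
      = G 0 + 2 * ∑ n ∈ Finset.range N, G ((n : ℤ) + 1) := by
  induction N with
  | zero => simp
  | succ N ih =>
    have hset : Finset.Icc (-((N+1 : ℕ) : ℤ)) ((N+1 : ℕ) : ℤ)
        = insert (-((N:ℤ)+1)) (insert ((N:ℤ)+1) (Finset.Icc (-(N:ℤ)) (N:ℤ))) := by
      ext x; simp [Finset.mem_Icc]; omega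
    rw [hset, Finset.sum_insert (by simp only [Finset.mem_insert, Finset.mem_Icc]; omega),
      Finset.sum_insert (by simp only [Finset.mem_Icc]; omega), ih,
      Finset.sum_range_succ, hG ((N:ℤ)+1)]
    ring

private lemma sq_diff_bound' (x y Cc K j : ℝ) (hj : 1 ≤ j) (hC : 0 ≤ Cc)
    (h1 : |x - y| ≤ Cc / j ^ 3) (h2 : |y| ≤ K * j) :
    |x ^ 2 - y ^ 2| ≤ (2 * K * Cc + Cc ^ 2) / j ^ 2 := by
  have hj0 : (0:ℝ) < j := by linarith
  have e : x ^ 2 - y ^ 2 = (x - y) * (x + y) := by ring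
  have h3 : |x + y| ≤ Cc / j ^ 3 + 2 * (K * j) := by
    have hxy : x + y = (x - y) + 2 * y := by ring
    rw [hxy]
    calc |(x - y) + 2 * y| ≤ |x - y| + |2 * y| := abs_add_le _ _
      _ = |x - y| + 2 * |y| := by rw [abs_mul, abs_two]
      _ ≤ Cc / j ^ 3 + 2 * (K * j) := by linarith
  rw [e, abs_mul]
  have step : |x - y| * |x + y| ≤ (Cc / j ^ 3) * (Cc / j ^ 3 + 2 * (K * j)) :=
    mul_le_mul h1 h3 (abs_nonneg _) (by positivity)
  refine step.trans ?_
  have hrw : Cc / j ^ 3 * (Cc / j ^ 3 + 2 * (K * j)) = (Cc * Cc + 2 * K * Cc * j ^ 4) / j ^ 6 := by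
    field_simp
  rw [hrw, div_le_div_iff₀ (by positivity) (by positivity)]
  have h26 : j ^ 2 ≤ j ^ 6 := by
    have hj4 : (1:ℝ) ≤ j ^ 4 := one_le_pow₀ hj
    nlinarith [sq_nonneg j]
  nlinarith [mul_le_mul_of_nonneg_left h26 (mul_nonneg hC hC)]

private lemma abs_lin_le' (L : ℝ) (hL : 0 < L) (c j : ℝ) (hj : 1 ≤ j) :
    |Real.pi * j / (2 * L) + c / (Real.pi * j)| ≤ (Real.pi / (2 * L) + |c| / Real.pi) * j := by
  have hπ := Real.pi_pos
  have hj0 : (0:ℝ) < j := by linarith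
  calc |Real.pi * j / (2 * L) + c / (Real.pi * j)|
      ≤ |Real.pi * j / (2 * L)| + |c / (Real.pi * j)| := abs_add_le _ _
    _ = Real.pi * j / (2 * L) + |c| / (Real.pi * j) := by
        rw [abs_of_pos (div_pos (mul_pos hπ hj0) (by linarith)), abs_div,
          abs_of_pos (mul_pos hπ hj0)]
    _ ≤ Real.pi / (2 * L) * j + |c| / Real.pi * j := by
        have h1 : Real.pi * j / (2 * L) = Real.pi / (2 * L) * j := by ring
        have h2 : |c| / (Real.pi * j) ≤ |c| / Real.pi := by
          apply div_le_div_of_nonneg_left (abs_nonneg c) hπ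
          nlinarith
        have h3 : |c| / Real.pi ≤ |c| / Real.pi * j :=
          le_mul_of_one_le_right (by positivity) hj
        linarith [h1.le, h1.ge]
    _ = (Real.pi / (2 * L) + |c| / Real.pi) * j := by ring

/-- Under the symmetric gap asymptotics arising from the Dirichlet problem, the symmetric
partial sums `(1/2) Σ_{|j|≤N} (aⱼ² + bⱼ²) − Σ_{|j|≤N, j≠k₀} λⱼ²` converge to a finite
limit as `N → ∞`. -/
theorem dubrovin_coefficient_welldefined
    (L : ℝ) (hL : 0 < L) (I A C : ℝ) (hC : 0 < C)
    (a b lam : ℤ → ℝ)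
    (hsymm : ∀ j : ℤ, a (-j) = -(b j) ∧ b (-j) = -(a j) ∧ lam (-j) = -(lam j))
    (hasymp : ∀ j : ℤ, 1 ≤ j →
      |a j - (Real.pi * j / (2 * L) + (I - A) / (Real.pi * j))| ≤ C / (j : ℝ) ^ 3 ∧
      |b j - (Real.pi * j / (2 * L) + (I + A) / (Real.pi * j))| ≤ C / (j : ℝ) ^ 3 ∧
      |lam j - (Real.pi * j / (2 * L) + I / (Real.pi * j))| ≤ C / (j : ℝ) ^ 3)
    (k₀ : ℤ) :
    ∃ S : ℝ, Tendsto (fun N : ℕ =>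
        (1 / 2) * ∑ j ∈ Finset.Icc (-(N : ℤ)) (N : ℤ), ((a j) ^ 2 + (b j) ^ 2) -
        ∑ j ∈ (Finset.Icc (-(N : ℤ)) (N : ℤ)).erase k₀, (lam j) ^ 2)
      atTop (nhds S) := by
  have hπ := Real.pi_pos
  set K : ℝ := Real.pi / (2 * L) + (|I| + |A|) / Real.pi with hK
  set E : ℝ := 2 * K * C + C ^ 2 with hE
  set D : ℝ := 4 * E + 2 * A ^ 2 / Real.pi ^ 2 with hD
  set h : ℕ → ℝ := fun n => a ((n:ℤ)+1) ^ 2 + b ((n:ℤ)+1) ^ 2 - 2 * lam ((n:ℤ)+1) ^ 2 with hh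
  have hK0 : 0 ≤ K := by positivity
  have hE0 : 0 ≤ E := by positivity
  -- key bound
  have key : ∀ n : ℕ, |h n| ≤ D / ((n:ℝ) + 1) ^ 2 := by
    intro n
    obtain ⟨ha, hb, hl⟩ := hasymp ((n:ℤ)+1) (by omega)
    push_cast at ha hb hl
    set j : ℝ := (n:ℝ) + 1 with hj
    have hj1 : (1:ℝ) ≤ j := by simp [hj]
    have hj0 : (0:ℝ) < j := by linarith
    set α : ℝ := Real.pi * j / (2 * L) + (I - A) / (Real.pi * j) with hα
    set β : ℝ := Real.pi * j / (2 * L) + (I + A) / (Real.pi * j) with hβ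
    set μ : ℝ := Real.pi * j / (2 * L) + I / (Real.pi * j) with hμ
    have hKc : ∀ c : ℝ, |c| ≤ |I| + |A| →
        |Real.pi * j / (2 * L) + c / (Real.pi * j)| ≤ K * j := by
      intro c hc
      refine (abs_lin_le' L hL c j hj1).trans ?_
      have : Real.pi / (2 * L) + |c| / Real.pi ≤ K := by
        rw [hK]
        have : |c| / Real.pi ≤ (|I| + |A|) / Real.pi := by gcongr
        linarith
      exact mul_le_mul_of_nonneg_right this hj0.le
    have hαb : |α| ≤ K * j := hKc _ (abs_sub _ _)
    have hβb : |β| ≤ K * j := hKc _ (abs_add_le _ _)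
    have hμb : |μ| ≤ K * j := hKc _ (by simpa using le_add_of_nonneg_right (abs_nonneg A))
    have h1 : |a ((n:ℤ)+1) ^ 2 - α ^ 2| ≤ E / j ^ 2 :=
      sq_diff_bound' _ _ C K j hj1 hC.le ha hαb
    have h2 : |b ((n:ℤ)+1) ^ 2 - β ^ 2| ≤ E / j ^ 2 :=
      sq_diff_bound' _ _ C K j hj1 hC.le hb hβb
    have h3 : |lam ((n:ℤ)+1) ^ 2 - μ ^ 2| ≤ E / j ^ 2 :=
      sq_diff_bound' _ _ C K j hj1 hC.le hl hμb
    have hid : α ^ 2 + β ^ 2 - 2 * μ ^ 2 = (2 * A ^ 2 / Real.pi ^ 2) / j ^ 2 := by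
      rw [hα, hβ, hμ]
      field_simp
      ring
    have hdecomp : h n = (a ((n:ℤ)+1) ^ 2 - α ^ 2) + (b ((n:ℤ)+1) ^ 2 - β ^ 2)
        - 2 * (lam ((n:ℤ)+1) ^ 2 - μ ^ 2) + (2 * A ^ 2 / Real.pi ^ 2) / j ^ 2 := by
      rw [hh, ← hid]; ring
    have hDsplit : D / j ^ 2
        = E / j ^ 2 + E / j ^ 2 + 2 * (E / j ^ 2) + ((2 * A ^ 2 / Real.pi ^ 2) / j ^ 2) := by
      rw [hD]; ring
    rw [abs_le] at h1 h2 h3 ⊢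
    have hE2 : 0 ≤ E / j ^ 2 := by positivity
    have hA2 : 0 ≤ (2 * A ^ 2 / Real.pi ^ 2) / j ^ 2 := by positivity
    constructor
    · rw [hdecomp]; simp only [hj] at hDsplit ⊢; linarith [h1.1, h2.1, h3.2]
    · rw [hdecomp]; simp only [hj] at hDsplit ⊢; linarith [h1.2, h2.2, h3.1]
  -- summability
  have hsumD : Summable (fun n : ℕ => D / ((n:ℝ) + 1) ^ 2) := by
    have h0 : Summable (fun n : ℕ => 1 / (n:ℝ) ^ 2) :=
      Real.summable_one_div_nat_pow.mpr (by norm_num)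
    have h1 : Summable (fun n : ℕ => 1 / ((n:ℝ) + 1) ^ 2) := by
      have := (summable_nat_add_iff 1).mpr h0
      refine this.congr fun n => ?_
      push_cast
      rfl
    have := h1.mul_left D
    refine this.congr fun n => ?_
    ring
  have hsabs : Summable (fun n : ℕ => |h n|) :=
    Summable.of_nonneg_of_le (fun n => abs_nonneg _) key hsumD
  have hsum : Summable h := hsabs.of_abs
  have htend : Tendsto (fun N : ℕ => ∑ n ∈ Finset.range N, h n) atTop (nhds (∑' n, h n)) :=
    hsum.hasSum.tendsto_sum_nat
  -- constant
  set c : ℝ := (1/2) * (a 0 ^ 2 + b 0 ^ 2) - lam 0 ^ 2 + lam k₀ ^ 2 with hc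
  refine ⟨c + ∑' n, h n, ?_⟩
  have htend2 : Tendsto (fun N : ℕ => c + ∑ n ∈ Finset.range N, h n) atTop
      (nhds (c + ∑' n, h n)) := htend.const_add c
  refine htend2.congr' ?_
  rw [Filter.EventuallyEq, eventually_atTop]
  refine ⟨k₀.natAbs, fun N hN => ?_⟩
  have hN' : (k₀.natAbs : ℤ) ≤ (N : ℤ) := by exact_mod_cast hN
  have hk : k₀ ∈ Finset.Icc (-(N:ℤ)) (N:ℤ) := by
    simp only [Finset.mem_Icc]; omega
  have hG : ∀ j : ℤ, a (-j) ^ 2 + b (-j) ^ 2 = a j ^ 2 + b j ^ 2 := by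
    intro j; rw [(hsymm j).1, (hsymm j).2.1]; ring
  have hΛ : ∀ j : ℤ, lam (-j) ^ 2 = lam j ^ 2 := by
    intro j; rw [(hsymm j).2.2]; ring
  have e1 := even_sum' (fun j => a j ^ 2 + b j ^ 2) hG N
  have e2 := even_sum' (fun j => lam j ^ 2) hΛ N
  have e3 : ∑ j ∈ (Finset.Icc (-(N:ℤ)) (N:ℤ)).erase k₀, lam j ^ 2
      = (∑ j ∈ Finset.Icc (-(N:ℤ)) (N:ℤ), lam j ^ 2) - lam k₀ ^ 2 :=
    Finset.sum_erase_eq_sub hk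
  have hsplit : ∑ n ∈ Finset.range N, h n
      = (∑ n ∈ Finset.range N, (a ((n:ℤ)+1) ^ 2 + b ((n:ℤ)+1) ^ 2))
        - 2 * ∑ n ∈ Finset.range N, lam ((n:ℤ)+1) ^ 2 := by
    rw [Finset.mul_sum, ← Finset.sum_sub_distrib]
  simp only [e3, e1, e2]
  rw [hsplit, hc]
  ring
end

section
/- Let n ≥ 1, a < b real, and let U : ℝ × [a,b] → (n×n complex matrices) be continuous and continuously differentiable in the first (parameter) variable s. For each s, let T(s; x, y) be the fundamental solution of the linear system, i.e. ∂_x T(s; x, y) = U(s,x) T(s; x, y) with T(s; y, y) = Id. Then the map s ↦ T(s; b, a) is differentiable and ∂_s T(s; b, a) = ∫_a^b T(s; b, x) (∂_s U)(s,x) T(s; x, a) dx. -/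
/-!
Uniqueness for linear equations gives the cocycle identity `T(s;x,y) T(s;y,z) = T(s;x,z)`, hence
`∂_y T(s;x,y) = -T(s;x,y) U(s,y)`, and differentiating `u ↦ T(s₀;x,u) T(s;u,a)` gives Duhamel's
formula `T(s;x,a) - T(s₀;x,a) = ∫_a^x T(s₀;x,u) (U(s,u) - U(s₀,u)) T(s;u,a) du`. Dividing by
`s - s₀`, the difference quotient of `s ↦ T(s;b,a)` becomes an integral whose integrand tends
pointwise to `T(s₀;b,x) ∂ₛU(s₀,x) T(s₀;x,a)`. Grönwall bounds `T(s;·,·)` uniformly for `s` near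
`s₀`; this gives the continuity of `s ↦ T(s;x,a)` (by Duhamel once more) and the domination needed
to pass to the limit. The argument uses nothing about matrices and runs in any real Banach algebra.
-/

open Set Filter Topology Function Real MeasureTheory

theorem lipschitzWith_mul_left {R : Type*} [SeminormedRing R] (c : R) :
    LipschitzWith ‖c‖₊ (c * ·) :=
  LipschitzWith.of_dist_le_mul fun x y => by
    simpa only [dist_eq_norm, mul_sub, coe_nnnorm] using norm_mul_le c (x - y)

theorem norm_slope_le_of_norm_hasDerivWithinAt_le {F : Type*} [NormedAddCommGroup F]
    [NormedSpace ℝ F] {f f' : ℝ → F} {s : Set ℝ} {C x y : ℝ}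
    (hf : ∀ t ∈ s, HasDerivWithinAt f (f' t) s t) (bound : ∀ t ∈ s, ‖f' t‖ ≤ C)
    (hs : Convex ℝ s) (hx : x ∈ s) (hy : y ∈ s) : ‖slope f x y‖ ≤ C := by
  rcases eq_or_ne y x with rfl | hyx
  · simpa using (norm_nonneg _).trans (bound y hy)
  have hpos : 0 < ‖y - x‖ := norm_pos_iff.2 (sub_ne_zero.2 hyx)
  rw [slope_def_module, norm_smul, norm_inv, inv_mul_le_iff₀ hpos, mul_comm]
  exact hs.norm_image_sub_le_of_norm_hasDerivWithin_le hf bound hx hy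

section LinearODE

variable {E : Type*} [NormedRing E] [NormedAlgebra ℝ E] {A f g : ℝ → E} {a b : ℝ}

theorem norm_le_of_hasDerivWithinAt_mul_left {M x : ℝ}
    (hf : ∀ t ∈ Icc a b, HasDerivWithinAt f (A t * f t) (Icc a b) t)
    (hM : ∀ t ∈ Icc a b, ‖A t‖ ≤ M) (hx : x ∈ Icc a b) :
    ‖f x‖ ≤ ‖f a‖ * exp (M * (x - a)) := by
  have hbound := norm_le_gronwallBound_of_norm_deriv_right_le (ε := 0)
    (fun t ht => (hf t ht).continuousWithinAt)
    (fun t ht => (hf t (Ico_subset_Icc_self ht)).mono_of_mem_nhdsWithin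
      (Icc_mem_nhdsGE_of_mem ht))
    le_rfl
    (fun t ht => by
      rw [add_zero]
      exact (norm_mul_le _ _).trans
        (mul_le_mul_of_nonneg_right (hM t (Ico_subset_Icc_self ht)) (norm_nonneg _)))
    x hx
  rwa [gronwallBound_ε0] at hbound

theorem eqOn_of_hasDerivWithinAt_mul_left {c : ℝ} (hA : ContinuousOn A (Icc a b))
    (hf : ∀ t ∈ Icc a b, HasDerivWithinAt f (A t * f t) (Icc a b) t)
    (hg : ∀ t ∈ Icc a b, HasDerivWithinAt g (A t * g t) (Icc a b) t)
    (hc : c ∈ Icc a b) (hfg : f c = g c) : EqOn f g (Icc a b) := by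
  obtain ⟨K, hK⟩ := isCompact_Icc.exists_bound_of_continuousOn hA
  have hv : ∀ t ∈ Icc a b, LipschitzOnWith K.toNNReal (A t * ·) univ := fun t ht =>
    ((lipschitzWith_mul_left (A t)).weaken
      (by rw [← NNReal.coe_le_coe, coe_nnnorm]; exact (hK t ht).trans (le_coe_toNNReal K))
      ).lipschitzOnWith
  have hfc : ContinuousOn f (Icc a b) := fun t ht => (hf t ht).continuousWithinAt
  have hgc : ContinuousOn g (Icc a b) := fun t ht => (hg t ht).continuousWithinAt
  intro x hx
  rcases le_total c x with hcx | hxc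
  · have hsub : Icc c b ⊆ Icc a b := Icc_subset_Icc hc.1 le_rfl
    refine ODE_solution_unique_of_mem_Icc_right (s := fun _ => univ)
      (fun t ht => hv t (hsub (Ico_subset_Icc_self ht))) (hfc.mono hsub)
      (fun t ht => (hf t (hsub (Ico_subset_Icc_self ht))).mono_of_mem_nhdsWithin
        (mem_of_superset (Icc_mem_nhdsGE_of_mem ht) hsub))
      (fun _ _ => trivial) (hgc.mono hsub)
      (fun t ht => (hg t (hsub (Ico_subset_Icc_self ht))).mono_of_mem_nhdsWithin
        (mem_of_superset (Icc_mem_nhdsGE_of_mem ht) hsub))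
      (fun _ _ => trivial) hfg ⟨hcx, hx.2⟩
  · have hsub : Icc a c ⊆ Icc a b := Icc_subset_Icc le_rfl hc.2
    refine ODE_solution_unique_of_mem_Icc_left (s := fun _ => univ)
      (fun t ht => hv t (hsub (Ioc_subset_Icc_self ht))) (hfc.mono hsub)
      (fun t ht => (hf t (hsub (Ioc_subset_Icc_self ht))).mono_of_mem_nhdsWithin
        (mem_of_superset (Icc_mem_nhdsLE_of_mem ht) hsub))
      (fun _ _ => trivial) (hgc.mono hsub)
      (fun t ht => (hg t (hsub (Ioc_subset_Icc_self ht))).mono_of_mem_nhdsWithin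
        (mem_of_superset (Icc_mem_nhdsLE_of_mem ht) hsub))
      (fun _ _ => trivial) hfg ⟨hx.1, hxc⟩

end LinearODE

structure IsFundamentalSolution {E : Type*} [NormedRing E] [NormedAlgebra ℝ E]
    (A : ℝ → E) (T : ℝ → ℝ → E) (a b : ℝ) : Prop where
  apply_self : ∀ y ∈ Icc a b, T y y = 1
  hasDerivWithinAt : ∀ y ∈ Icc a b, ∀ x ∈ Icc a b,
    HasDerivWithinAt (T · y) (A x * T x y) (Icc a b) x

namespace IsFundamentalSolution

variable {E : Type*} [NormedRing E] [NormedAlgebra ℝ E] {A B : ℝ → E} {T S : ℝ → ℝ → E}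
  {a b x y z M δ : ℝ}

theorem continuousOn_left (hT : IsFundamentalSolution A T a b) (hy : y ∈ Icc a b) :
    ContinuousOn (T · y) (Icc a b) :=
  fun x hx => (hT.hasDerivWithinAt y hy x hx).continuousWithinAt

theorem norm_le (hT : IsFundamentalSolution A T a b) (hM : ∀ t ∈ Icc a b, ‖A t‖ ≤ M)
    (hx : x ∈ Icc a b) (hy : y ∈ Icc a b) (hyx : y ≤ x) :
    ‖T x y‖ ≤ ‖(1 : E)‖ * exp (M * (b - a)) := by
  have hsub : Icc y b ⊆ Icc a b := Icc_subset_Icc hy.1 le_rfl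
  have h := norm_le_of_hasDerivWithinAt_mul_left (f := (T · y))
    (fun t ht => (hT.hasDerivWithinAt y hy t (hsub ht)).mono hsub)
    (fun t ht => hM t (hsub ht)) ⟨hyx, hx.2⟩
  rw [hT.apply_self y hy] at h
  have hM_nonneg : 0 ≤ M := (norm_nonneg _).trans (hM y hy)
  refine h.trans (mul_le_mul_of_nonneg_left (exp_le_exp.2 ?_) (norm_nonneg _))
  exact mul_le_mul_of_nonneg_left (by linarith [hx.2, hy.1]) hM_nonneg

theorem apply_mul_apply (hT : IsFundamentalSolution A T a b) (hA : ContinuousOn A (Icc a b))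
    (hx : x ∈ Icc a b) (hy : y ∈ Icc a b) (hz : z ∈ Icc a b) : T x y * T y z = T x z :=
  eqOn_of_hasDerivWithinAt_mul_left hA
    (fun t ht => by simpa only [mul_assoc] using (hT.hasDerivWithinAt y hy t ht).mul_const (T y z))
    (hT.hasDerivWithinAt z hz) hy (by rw [hT.apply_self y hy, one_mul]) hx

variable [CompleteSpace E]

theorem hasDerivWithinAt_right (hT : IsFundamentalSolution A T a b)
    (hA : ContinuousOn A (Icc a b)) (hx : x ∈ Icc a b) (hy : y ∈ Icc a b) :
    HasDerivWithinAt (T x ·) (-(T x y * A y)) (Icc a b) y := by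
  have ha : a ∈ Icc a b := ⟨le_rfl, hx.1.trans hx.2⟩
  have hinv : ∀ t ∈ Icc a b, T x a * Ring.inverse (T t a) = T x t := fun t ht => by
    rw [Ring.inverse_unit ⟨T t a, T a t, by rw [hT.apply_mul_apply hA ht ha ht, hT.apply_self t ht],
      by rw [hT.apply_mul_apply hA ha ht ha, hT.apply_self a ha]⟩]
    exact hT.apply_mul_apply hA hx ha ht
  let u : Eˣ := ⟨T y a, T a y, by rw [hT.apply_mul_apply hA hy ha hy, hT.apply_self y hy],
    by rw [hT.apply_mul_apply hA ha hy ha, hT.apply_self a ha]⟩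
  have hderiv := ((hasFDerivAt_ringInverse (𝕜 := ℝ) u).comp_hasDerivWithinAt y
    (hT.hasDerivWithinAt a ha y hy)).const_mul (T x a)
  have hval : T x a * (-ContinuousLinearMap.mulLeftRight ℝ E ↑u⁻¹ ↑u⁻¹) (A y * T y a) =
      -(T x y * A y) := by
    change T x a * -(T a y * (A y * T y a) * T a y) = _
    simp only [mul_neg, mul_assoc]
    rw [hT.apply_mul_apply hA hy ha hy, hT.apply_self y hy, mul_one, ← mul_assoc,
      hT.apply_mul_apply hA hx ha hy]
  rw [hval] at hderiv
  exact hderiv.congr (fun t ht => (hinv t ht).symm) (hinv y hy).symm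

theorem continuousOn_right (hT : IsFundamentalSolution A T a b)
    (hA : ContinuousOn A (Icc a b)) (hx : x ∈ Icc a b) : ContinuousOn (T x ·) (Icc a b) :=
  fun _ ht => (hT.hasDerivWithinAt_right hA hx ht).continuousWithinAt

theorem sub_eq_integral (hT : IsFundamentalSolution A T a b) (hS : IsFundamentalSolution B S a b)
    (hA : ContinuousOn A (Icc a b)) (hB : ContinuousOn B (Icc a b)) (hx : x ∈ Icc a b) :
    S x a - T x a = ∫ u in a..x, T x u * (B u - A u) * S u a := by
  have ha : a ∈ Icc a b := ⟨le_rfl, hx.1.trans hx.2⟩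
  have hsub : Icc a x ⊆ Icc a b := Icc_subset_Icc le_rfl hx.2
  have hderiv : ∀ u ∈ Ioo a x,
      HasDerivAt (fun u => T x u * S u a) (T x u * (B u - A u) * S u a) u := by
    intro u hu
    have hu' : u ∈ Icc a b := hsub (Ioo_subset_Icc_self hu)
    have h := ((hT.hasDerivWithinAt_right hA hx hu').mul
      (hS.hasDerivWithinAt a ha u hu')).hasDerivAt
      (Icc_mem_nhds hu.1 (hu.2.trans_le hx.2))
    rwa [show -(T x u * A u) * S u a + T x u * (B u * S u a) = T x u * (B u - A u) * S u a by
      noncomm_ring] at h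
  have hcont : ContinuousOn (fun u => T x u * S u a) (Icc a x) :=
    ((hT.continuousOn_right hA hx).mul (hS.continuousOn_left ha)).mono hsub
  have hint : IntervalIntegrable (fun u => T x u * (B u - A u) * S u a) volume a x :=
    ((((hT.continuousOn_right hA hx).mul (hB.sub hA)).mul (hS.continuousOn_left ha)).mono
      hsub).intervalIntegrable_of_Icc hx.1
  rw [intervalIntegral.integral_eq_sub_of_hasDerivAt_of_le hx.1 hcont hderiv hint,
    hT.apply_self x hx, hS.apply_self a ha, one_mul, mul_one]

theorem norm_sub_le (hT : IsFundamentalSolution A T a b) (hS : IsFundamentalSolution B S a b)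
    (hA : ContinuousOn A (Icc a b)) (hB : ContinuousOn B (Icc a b))
    (hMA : ∀ u ∈ Icc a b, ‖A u‖ ≤ M) (hMB : ∀ u ∈ Icc a b, ‖B u‖ ≤ M)
    (hδ : ∀ u ∈ Icc a b, ‖B u - A u‖ ≤ δ) (hx : x ∈ Icc a b) :
    ‖S x a - T x a‖ ≤
      ‖(1 : E)‖ * exp (M * (b - a)) * δ * (‖(1 : E)‖ * exp (M * (b - a))) * (b - a) := by
  have ha : a ∈ Icc a b := ⟨le_rfl, hx.1.trans hx.2⟩
  set C := ‖(1 : E)‖ * exp (M * (b - a))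
  have hC : 0 ≤ C := by positivity
  have hδ0 : 0 ≤ δ := (norm_nonneg _).trans (hδ a ha)
  have hbound : ∀ u ∈ uIoc a x, ‖T x u * (B u - A u) * S u a‖ ≤ C * δ * C := by
    intro u hu
    rw [uIoc_of_le hx.1] at hu
    have hu' : u ∈ Icc a b := ⟨hu.1.le, hu.2.trans hx.2⟩
    refine norm_mul₃_le.trans ?_
    gcongr
    exacts [hT.norm_le hMA hx hu' hu.2, hδ u hu', hS.norm_le hMB hu' ha hu.1.le]
  rw [hT.sub_eq_integral hS hA hB hx]
  refine (intervalIntegral.norm_integral_le_of_norm_le_const hbound).trans ?_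
  rw [abs_of_nonneg (sub_nonneg.2 hx.1)]
  exact mul_le_mul_of_nonneg_left (by linarith [hx.2]) (by positivity)

end IsFundamentalSolution

theorem exists_eventually_norm_le_and_norm_slope_le {F : Type*} [NormedAddCommGroup F]
    [NormedSpace ℝ F] {U Us : ℝ → ℝ → F} {a b : ℝ}
    (hUcont : ContinuousOn (uncurry U) (univ ×ˢ Icc a b))
    (hUs : ∀ s, ∀ x ∈ Icc a b, HasDerivAt (U · x) (Us s x) s)
    (hUscont : ContinuousOn (uncurry Us) (univ ×ˢ Icc a b)) (s₀ : ℝ) :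
    ∃ M, ∀ᶠ s in 𝓝 s₀, ∀ x ∈ Icc a b, ‖U s x‖ ≤ M ∧ ‖slope (U · x) s₀ s‖ ≤ M := by
  have hJ : Icc (s₀ - 1) (s₀ + 1) ×ˢ Icc a b ⊆ univ ×ˢ Icc a b :=
    prod_mono (subset_univ _) subset_rfl
  obtain ⟨M₁, hM₁⟩ :=
    (isCompact_Icc.prod isCompact_Icc).exists_bound_of_continuousOn (hUcont.mono hJ)
  obtain ⟨M₂, hM₂⟩ :=
    (isCompact_Icc.prod isCompact_Icc).exists_bound_of_continuousOn (hUscont.mono hJ)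
  refine ⟨max M₁ M₂, eventually_of_mem (Icc_mem_nhds (by linarith) (by linarith))
    fun s hs x hx => ⟨(hM₁ (s, x) ⟨hs, hx⟩).trans (le_max_left _ _), ?_⟩⟩
  exact norm_slope_le_of_norm_hasDerivWithinAt_le (fun σ _ => (hUs σ x hx).hasDerivWithinAt)
    (fun σ hσ => (hM₂ (σ, x) ⟨hσ, hx⟩).trans (le_max_right _ _)) (convex_Icc _ _)
    ⟨by linarith, by linarith⟩ hs

section Monodromy

variable {E : Type*} [NormedRing E] [NormedAlgebra ℝ E] [CompleteSpace E]
  {U Us : ℝ → ℝ → E} {T : ℝ → ℝ → ℝ → E} {a b s₀ M : ℝ}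

theorem slope_monodromy_eq_integral (hab : a ≤ b) (hU : ∀ s, ContinuousOn (U s) (Icc a b))
    (hT : ∀ s, IsFundamentalSolution (U s) (T s) a b) (s : ℝ) :
    slope (fun s => T s b a) s₀ s = ∫ x in a..b, T s₀ b x * slope (U · x) s₀ s * T s x a := by
  rw [slope_def_module, (hT s₀).sub_eq_integral (hT s) (hU s₀) (hU s) (right_mem_Icc.2 hab),
    ← intervalIntegral.integral_smul]
  refine intervalIntegral.integral_congr fun x _ => ?_
  rw [slope_def_module, mul_smul_comm, smul_mul_assoc]

theorem continuousAt_fundamentalSolution {x : ℝ} (hU : ∀ s, ContinuousOn (U s) (Icc a b))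
    (hT : ∀ s, IsFundamentalSolution (U s) (T s) a b)
    (hM : ∀ᶠ s in 𝓝 s₀, ∀ u ∈ Icc a b, ‖U s u‖ ≤ M ∧ ‖slope (U · u) s₀ s‖ ≤ M)
    (hx : x ∈ Icc a b) : ContinuousAt (fun s => T s x a) s₀ := by
  set C := ‖(1 : E)‖ * exp (M * (b - a))
  have hM₀ : ∀ u ∈ Icc a b, ‖U s₀ u‖ ≤ M := fun u hu => (hM.self_of_nhds u hu).1
  refine tendsto_sub_nhds_zero_iff.1 ?_
  refine squeeze_zero_norm' (a := fun s => C * (M * |s - s₀|) * C * (b - a)) ?_ ?_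
  · filter_upwards [hM] with s hs
    refine (hT s₀).norm_sub_le (hT s) (hU s₀) (hU s) hM₀ (fun u hu => (hs u hu).1)
      (fun u hu => ?_) hx
    have hsub := sub_smul_slope (U · u) s₀ s
    rw [vsub_eq_sub] at hsub
    rw [← hsub, norm_smul, Real.norm_eq_abs, mul_comm]
    exact mul_le_mul_of_nonneg_right (hs u hu).2 (abs_nonneg _)
  · have hcont : Continuous fun s => C * (M * |s - s₀|) * C * (b - a) := by fun_prop
    simpa using hcont.tendsto s₀

theorem hasDerivAt_monodromy (hab : a ≤ b)
    (hUcont : ContinuousOn (uncurry U) (univ ×ˢ Icc a b))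
    (hUs : ∀ s, ∀ x ∈ Icc a b, HasDerivAt (U · x) (Us s x) s)
    (hUscont : ContinuousOn (uncurry Us) (univ ×ˢ Icc a b))
    (hT : ∀ s, IsFundamentalSolution (U s) (T s) a b) (s₀ : ℝ) :
    HasDerivAt (fun s => T s b a) (∫ x in a..b, T s₀ b x * Us s₀ x * T s₀ x a) s₀ := by
  have ha : a ∈ Icc a b := left_mem_Icc.2 hab
  have hb : b ∈ Icc a b := right_mem_Icc.2 hab
  have hU : ∀ s, ContinuousOn (U s) (Icc a b) := fun s => hUcont.uncurry_left s (mem_univ s)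
  obtain ⟨M, hM⟩ := exists_eventually_norm_le_and_norm_slope_le hUcont hUs hUscont s₀
  have hM₀ : ∀ u ∈ Icc a b, ‖U s₀ u‖ ≤ M := fun u hu => (hM.self_of_nhds u hu).1
  have hM_nonneg : 0 ≤ M := (norm_nonneg _).trans (hM₀ a ha)
  set C := ‖(1 : E)‖ * exp (M * (b - a))
  have hC : 0 ≤ C := by positivity
  rw [hasDerivAt_iff_tendsto_slope, funext (slope_monodromy_eq_integral hab hU hT)]
  refine intervalIntegral.tendsto_integral_filter_of_dominated_convergence (fun _ => C * M * C)
    (Eventually.of_forall fun s => ?_) ?_ intervalIntegrable_const ?_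
  · have hslope : ContinuousOn (fun x => slope (U · x) s₀ s) (Icc a b) := by
      simp only [slope_def_module]
      exact ((hU s).sub (hU s₀)).const_smul _
    exact ((((hT s₀).continuousOn_right (hU s₀) hb).mul hslope).mul
      ((hT s).continuousOn_left ha) |>.intervalIntegrable_of_Icc hab).def'.aestronglyMeasurable
  · filter_upwards [nhdsWithin_le_nhds hM] with s hs
    refine Eventually.of_forall fun x hx => ?_
    rw [uIoc_of_le hab] at hx
    have hx' : x ∈ Icc a b := Ioc_subset_Icc_self hx
    refine norm_mul₃_le.trans ?_
    gcongr
    exacts [(hT s₀).norm_le hM₀ hb hx' hx'.2, (hs x hx').2,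
      (hT s).norm_le (fun u hu => (hs u hu).1) hx' ha hx'.1]
  · refine Eventually.of_forall fun x hx => ?_
    rw [uIoc_of_le hab] at hx
    have hx' : x ∈ Icc a b := Ioc_subset_Icc_self hx
    exact (tendsto_const_nhds.mul (hUs s₀ x hx').tendsto_slope).mul
      ((continuousAt_fundamentalSolution hU hT hM hx').tendsto.mono_left nhdsWithin_le_nhds)

end Monodromy

section Matrix

-- The ℓ∞-operator norm makes matrices a Banach algebra whose topology is definitionally the
-- entrywise one of the statement.
attribute [local instance] Matrix.linftyOpNormedRing Matrix.linftyOpNormedAlgebra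

theorem monodromy_variation_general
    (n : ℕ) (a b : ℝ) (hab : a < b)
    (U Us : ℝ → ℝ → Matrix (Fin n) (Fin n) ℂ)
    (hUcont : ContinuousOn (fun p : ℝ × ℝ => U p.1 p.2) (Set.univ ×ˢ Set.Icc a b))
    (hUs : ∀ s : ℝ, ∀ x ∈ Set.Icc a b, ∀ i j : Fin n,
      HasDerivAt (fun s' => U s' x i j) (Us s x i j) s)
    (hUscont : ContinuousOn (fun p : ℝ × ℝ => Us p.1 p.2) (Set.univ ×ˢ Set.Icc a b))
    (T : ℝ → ℝ → ℝ → Matrix (Fin n) (Fin n) ℂ)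
    (hTinit : ∀ s : ℝ, ∀ y ∈ Set.Icc a b, T s y y = 1)
    (hTderiv : ∀ s : ℝ, ∀ y ∈ Set.Icc a b, ∀ x ∈ Set.Icc a b, ∀ i j : Fin n,
      HasDerivWithinAt (fun x' => T s x' y i j) ((U s x * T s x y) i j) (Set.Icc a b) x) :
    ∀ s : ℝ, ∀ i j : Fin n,
      HasDerivAt (fun s' => T s' b a i j)
        (∫ x in a..b, (T s b x * Us s x * T s x a) i j) s := by
  intro s i j
  have hT : ∀ s, IsFundamentalSolution (U s) (T s) a b := fun s =>
    ⟨hTinit s, fun y hy x hx =>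
      hasDerivWithinAt_pi.2 fun i => hasDerivWithinAt_pi.2 (hTderiv s y hy x hx i)⟩
  have hderiv := hasDerivAt_monodromy hab.le hUcont
    (fun s x hx => hasDerivAt_pi.2 fun i => hasDerivAt_pi.2 (hUs s x hx i)) hUscont hT s
  have hU : ContinuousOn (U s) (Icc a b) := hUcont.uncurry_left s (mem_univ s)
  have hintegrand : ContinuousOn (fun x => T s b x * Us s x * T s x a) (Icc a b) :=
    (((hT s).continuousOn_right hU (right_mem_Icc.2 hab.le)).mul
      (hUscont.uncurry_left s (mem_univ s))).mul ((hT s).continuousOn_left (left_mem_Icc.2 hab.le))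
  have hentry : ∫ x in a..b, (T s b x * Us s x * T s x a) i j =
      (∫ x in a..b, T s b x * Us s x * T s x a) i j :=
    (Matrix.entryLinearMap ℝ ℂ i j).toContinuousLinearMap.intervalIntegral_comp_comm
      (hintegrand.intervalIntegrable_of_Icc hab.le)
  rw [hentry]
  exact hasDerivAt_pi.1 (hasDerivAt_pi.1 hderiv i) j

/-- Variation formula for the fundamental solution (monodromy matrix) of a linear system
with respect to a parameter: if `∂ₓ T(s;x,y) = U(s,x) T(s;x,y)`, `T(s;y,y) = Id`, then
`∂ₛ T(s;b,a) = ∫_a^b T(s;b,x) (∂ₛU)(s,x) T(s;x,a) dx`. -/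
theorem monodromy_variation
    (n : ℕ) (hn : 1 ≤ n) (a b : ℝ) (hab : a < b)
    (U Us : ℝ → ℝ → Matrix (Fin n) (Fin n) ℂ)
    (hUcont : ContinuousOn (fun p : ℝ × ℝ => U p.1 p.2) (Set.univ ×ˢ Set.Icc a b))
    (hUs : ∀ s : ℝ, ∀ x ∈ Set.Icc a b, ∀ i j : Fin n,
      HasDerivAt (fun s' => U s' x i j) (Us s x i j) s)
    (hUscont : ContinuousOn (fun p : ℝ × ℝ => Us p.1 p.2) (Set.univ ×ˢ Set.Icc a b))
    (T : ℝ → ℝ → ℝ → Matrix (Fin n) (Fin n) ℂ)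
    (hTinit : ∀ s : ℝ, ∀ y ∈ Set.Icc a b, T s y y = 1)
    (hTderiv : ∀ s : ℝ, ∀ y ∈ Set.Icc a b, ∀ x ∈ Set.Icc a b, ∀ i j : Fin n,
      HasDerivWithinAt (fun x' => T s x' y i j) ((U s x * T s x y) i j) (Set.Icc a b) x) :
    ∀ s : ℝ, ∀ i j : Fin n,
      HasDerivAt (fun s' => T s' b a i j)
        (∫ x in a..b, (T s b x * Us s x * T s x a) i j) s :=
  monodromy_variation_general n a b hab U Us hUcont hUs hUscont T hTinit hTderiv

end Matrix
end

section
/- Let L>0 and let q : ℝ → ℂ be continuous and 2L-periodic. Let (a,b) ⊂ ℝ be a bounded maximal open interval of the set {λ ∈ ℝ : |tr T(λ)| > 2} (a spectral gap of the periodic problem). Then the real-analytic function F(λ) = T₁₁(λ) + T₂₁(λ) − T₁₂(λ) − T₂₂(λ) has exactly one zero in the closed interval [a,b]; that is, each closed gap contains exactly one point of the auxiliary spectrum. -/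
set_option autoImplicit false

/-- The coefficient matrix of the Zakharov–Shabat system with potential `q` and spectral
parameter `λ`. -/
noncomputable def zsMatrix (q : ℝ → ℂ) (l : ℂ) (x : ℝ) : Matrix (Fin 2) (Fin 2) ℂ :=
  !![Complex.I * l, Complex.I * q x;
     -Complex.I * (starRingEnd ℂ) (q x), -Complex.I * l]

/-!
For real `λ` the monodromy matrix is `T(λ, 2L) = !![α, conj β; β, conj α]` with
`|α|² - |β|² = 1`, so `tr T = 2 Re α` and `F = 2i Im (α + β)`. Variation of constants in `λ` gives
`α' = iAα + c conj β`, `β' = iAβ + c conj α` with `|c| < A`. In a gap, say `Re α ≥ 1`; at a zero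
of `G = Im (α + β)` the number `α + β` is then real and positive and `G' = (A + Im c)(α + β) > 0`,
so `G` has at most one zero. At the endpoints `Re α = 1`, and there `(Re α)'` has the sign
opposite to `G`; as `Re α ≥ 1` inside the gap, this forces `G a ≤ 0 ≤ G b`.
-/
open Set Filter Topology Complex ComplexConjugate

theorem HasDerivAt.nonneg_of_isMinOn_Ico {f : ℝ → ℝ} {f' x y : ℝ} (hf : HasDerivAt f f' x)
    (hxy : x < y) (hmin : IsMinOn f (Ico x y) x) : 0 ≤ f' := by
  refine ge_of_tendsto ((hasDerivAt_iff_tendsto_slope.1 hf).mono_left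
    (nhdsWithin_mono x (show Ioi x ⊆ {x}ᶜ from fun _ hz => hz.ne'))) ?_
  filter_upwards [Ioo_mem_nhdsGT hxy] with z hz
  rw [slope_def_field]
  exact div_nonneg (sub_nonneg.2 (hmin ⟨hz.1.le, hz.2⟩)) (sub_pos.2 hz.1).le

theorem HasDerivAt.nonpos_of_isMinOn_Ioc {f : ℝ → ℝ} {f' x y : ℝ} (hf : HasDerivAt f f' x)
    (hyx : y < x) (hmin : IsMinOn f (Ioc y x) x) : f' ≤ 0 := by
  refine le_of_tendsto ((hasDerivAt_iff_tendsto_slope.1 hf).mono_left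
    (nhdsWithin_mono x (show Iio x ⊆ {x}ᶜ from fun _ hz => hz.ne))) ?_
  filter_upwards [Ioo_mem_nhdsLT hyx] with z hz
  rw [slope_def_field]
  exact div_nonpos_of_nonneg_of_nonpos (sub_nonneg.2 (hmin ⟨hz.1, hz.2.le⟩)) (sub_neg.2 hz.2).le

theorem subsingleton_zeros_of_hasDerivAt_pos {w w' : ℝ → ℝ} {a b : ℝ}
    (hw : ∀ x, HasDerivAt w (w' x) x) (hpos : ∀ x ∈ Icc a b, w x = 0 → 0 < w' x) :
    {x ∈ Icc a b | w x = 0}.Subsingleton := by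
  suffices ∀ x ∈ Icc a b, ∀ y ∈ Icc a b, w x = 0 → w y = 0 → ¬ x < y by
    rintro x ⟨hx, hx0⟩ y ⟨hy, hy0⟩
    exact le_antisymm (not_lt.1 (this y hy x hx hy0 hx0)) (not_lt.1 (this x hx y hy hx0 hy0))
  intro x hx y hy hx0 hy0 hxy
  have hnonneg : ∀ z ∈ Icc x y, 0 ≤ w z := fun z hz => by
    simpa using image_le_of_deriv_right_lt_deriv_boundary' (f := fun z => -w z)
      (f' := fun z => -w' z) (B := fun _ => 0) (B' := fun _ => 0)
      (fun z _ => (hw z).continuousAt.neg.continuousWithinAt)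
      (fun z _ => (hw z).neg.hasDerivWithinAt) (by simp [hx0]) continuousOn_const
      (fun _ _ => hasDerivWithinAt_const _ _ _)
      (fun z hz hz0 => neg_neg_of_pos
        (hpos z ⟨hx.1.trans hz.1, hz.2.le.trans hy.2⟩ (by simpa using hz0)))
      hz
  have := (hw y).nonpos_of_isMinOn_Ioc hxy fun z hz => by
    simpa [hy0] using hnonneg z ⟨hz.1.le, hz.2⟩
  exact (hpos y hy hy0).not_ge this

theorem IsPreconnected.forall_lt_or_forall_lt_neg {u : ℝ → ℝ} {s : Set ℝ} {r : ℝ}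
    (hs : IsPreconnected s) (hu : ContinuousOn u s) (hr : 0 ≤ r) (h : ∀ l ∈ s, r < |u l|) :
    (∀ l ∈ s, r < u l) ∨ (∀ l ∈ s, r < -u l) := by
  by_contra! hcon
  obtain ⟨⟨x, hx, hux⟩, ⟨y, hy, huy⟩⟩ := hcon
  have hx' : u x < -r := by cases lt_abs.1 (h x hx) <;> linarith
  have hy' : r < u y := by cases lt_abs.1 (h y hy) <;> linarith
  obtain ⟨z, hz, hz0⟩ := hs.intermediate_value hx hy hu
    (show (0 : ℝ) ∈ Icc (u x) (u y) from ⟨by linarith, by linarith⟩)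
  have := h z hz
  rw [hz0, abs_zero] at this
  linarith

theorem Continuous.le_on_Icc_of_lt_on_Ioo {u : ℝ → ℝ} {a b r : ℝ} (hu : Continuous u)
    (hab : a < b) (h : ∀ l ∈ Ioo a b, r < u l) : ∀ l ∈ Icc a b, r ≤ u l := by
  rw [← closure_Ioo hab.ne]
  exact closure_minimal (fun l hl => (h l hl).le) (isClosed_le continuous_const hu)

theorem im_add_deriv_pos_of_im_add_eq_zero {a b c : ℂ} {A : ℝ}
    (hdet : normSq a - normSq b = 1) (hc : ‖c‖ < A) (hre : 0 < a.re) (him : (a + b).im = 0) :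
    0 < (I * A * (a + b) + c * conj (a + b)).im := by
  simp only [normSq_apply, add_im] at hdet him
  have hbim : b.im = -a.im := by linarith
  rw [hbim] at hdet
  have hs : 0 < a.re + b.re := by nlinarith
  have hcA : 0 < A + c.im := by linarith [neg_abs_le c.im, abs_im_le_norm c]
  have : (I * A * (a + b) + c * conj (a + b)).im = (A + c.im) * (a.re + b.re) := by
    simp only [add_im, mul_im, mul_re, I_re, I_im, ofReal_re, ofReal_im, add_re, conj_re, conj_im]
    rw [hbim]
    ring
  rw [this]
  exact mul_pos hcA hs

theorem re_deriv_mul_im_add_neg_of_re_eq_one {a b c : ℂ} {A : ℝ}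
    (hdet : normSq a - normSq b = 1) (hc : ‖c‖ < A) (hre : a.re = 1) (him : (a + b).im ≠ 0) :
    (I * A * a + c * conj b).re * (a + b).im < 0 := by
  have hb : ‖b‖ = |a.im| := by
    rw [← sq_eq_sq₀ (norm_nonneg _) (abs_nonneg _), sq_abs, ← normSq_eq_norm_sq]
    rw [normSq_apply, hre] at hdet
    linarith
  have hr : |(c * conj b).re| ≤ ‖c‖ * |a.im| := by
    rw [← hb, ← norm_conj b, ← norm_mul]
    exact abs_re_le_norm _
  have hbim : |b.im| ≤ |a.im| := hb ▸ abs_im_le_norm b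
  have hre' : (I * A * a + c * conj b).re = -(A * a.im) + (c * conj b).re := by
    simp [mul_re]
  rw [hre', add_im]
  rw [add_im] at him
  rcases lt_trichotomy a.im 0 with h | h | h
  · rw [abs_of_neg h] at hr hbim
    have h1 : 0 < -(A * a.im) + (c * conj b).re := by nlinarith [(abs_le.1 hr).1]
    have h2 : a.im + b.im < 0 := lt_of_le_of_ne (by linarith [(abs_le.1 hbim).2]) him
    nlinarith
  · rw [h, abs_zero] at hbim
    exact absurd (by rw [h, abs_nonpos_iff.1 hbim, add_zero]) him
  · rw [abs_of_pos h] at hr hbim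
    have h1 : -(A * a.im) + (c * conj b).re < 0 := by nlinarith [(abs_le.1 hr).2]
    have h2 : 0 < a.im + b.im := lt_of_le_of_ne (by linarith [(abs_le.1 hbim).1]) (Ne.symm him)
    nlinarith

section Gap

variable {α β c : ℝ → ℂ} {A : ℝ → ℝ} {a b : ℝ}

theorem existsUnique_im_add_eq_zero_of_one_le_re (hab : a < b)
    (hdet : ∀ l, normSq (α l) - normSq (β l) = 1)
    (hα : ∀ l, HasDerivAt α (I * A l * α l + c l * conj (β l)) l)
    (hβ : ∀ l, HasDerivAt β (I * A l * β l + c l * conj (α l)) l) (hc : ∀ l, ‖c l‖ < A l)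
    (hre : ∀ l ∈ Icc a b, 1 ≤ (α l).re) (ha : (α a).re = 1) (hb : (α b).re = 1) :
    ∃! l, l ∈ Icc a b ∧ (α l + β l).im = 0 := by
  set G := fun l => (α l + β l).im
  have hG (l : ℝ) : HasDerivAt G (I * A l * (α l + β l) + c l * conj (α l + β l)).im l :=
    (imCLM.hasFDerivAt.comp_hasDerivAt l ((hα l).add (hβ l))).congr_deriv
      (by simp only [imCLM_apply, map_add, mul_add, add_im]; ring)
  have hu (l : ℝ) : HasDerivAt (fun l => (α l).re) (I * A l * α l + c l * conj (β l)).re l :=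
    reCLM.hasFDerivAt.comp_hasDerivAt l (hα l)
  have hGa : G a ≤ 0 := by
    by_contra! hpos
    have hmin := (hu a).nonneg_of_isMinOn_Ico hab fun l hl => by
      simpa [ha] using hre l ⟨hl.1, hl.2.le⟩
    nlinarith [re_deriv_mul_im_add_neg_of_re_eq_one (hdet a) (hc a) ha hpos.ne']
  have hGb : 0 ≤ G b := by
    by_contra! hneg
    have hmin := (hu b).nonpos_of_isMinOn_Ioc hab fun l hl => by
      simpa [hb] using hre l ⟨hl.1.le, hl.2⟩
    nlinarith [re_deriv_mul_im_add_neg_of_re_eq_one (hdet b) (hc b) hb hneg.ne]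
  obtain ⟨l, hl, h0⟩ := intermediate_value_Icc hab.le
    (fun l _ => (hG l).continuousAt.continuousWithinAt) ⟨hGa, hGb⟩
  have huniq := subsingleton_zeros_of_hasDerivAt_pos hG fun l hl h0 =>
    im_add_deriv_pos_of_im_add_eq_zero (hdet l) (hc l) (by linarith [hre l hl]) h0
  exact ⟨l, ⟨hl, h0⟩, fun l' hl' => huniq hl' ⟨hl, h0⟩⟩

theorem existsUnique_im_add_eq_zero_of_gap (hab : a < b)
    (hdet : ∀ l, normSq (α l) - normSq (β l) = 1)
    (hα : ∀ l, HasDerivAt α (I * A l * α l + c l * conj (β l)) l)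
    (hβ : ∀ l, HasDerivAt β (I * A l * β l + c l * conj (α l)) l) (hc : ∀ l, ‖c l‖ < A l)
    (hgap : ∀ l ∈ Ioo a b, 1 < |(α l).re|) (ha : |(α a).re| ≤ 1) (hb : |(α b).re| ≤ 1) :
    ∃! l, l ∈ Icc a b ∧ (α l + β l).im = 0 := by
  have hu : Continuous fun l => (α l).re :=
    continuous_re.comp (continuous_iff_continuousAt.2 fun l => (hα l).continuousAt)
  rcases isPreconnected_Ioo.forall_lt_or_forall_lt_neg hu.continuousOn zero_le_one hgap with
    hpos | hneg
  · have hre := hu.le_on_Icc_of_lt_on_Ioo hab hpos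
    exact existsUnique_im_add_eq_zero_of_one_le_re hab hdet hα hβ hc hre
      (le_antisymm (abs_le.1 ha).2 (hre a (left_mem_Icc.2 hab.le)))
      (le_antisymm (abs_le.1 hb).2 (hre b (right_mem_Icc.2 hab.le)))
  · -- the hypotheses and the conclusion are invariant under `(α, β) ↦ (-α, -β)`
    have hre : ∀ l ∈ Icc a b, 1 ≤ -(α l).re := hu.neg.le_on_Icc_of_lt_on_Ioo hab hneg
    have key := existsUnique_im_add_eq_zero_of_one_le_re (α := -α) (β := -β) hab
      (fun l => by simpa using hdet l) (fun l => (hα l).neg.congr_deriv (by simp only [Pi.neg_apply, mul_neg, map_neg]; ring))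
      (fun l => (hβ l).neg.congr_deriv (by simp only [Pi.neg_apply, mul_neg, map_neg]; ring)) hc (by simpa using hre)
      (by rw [Pi.neg_apply, neg_re]; linarith [(abs_le.1 ha).1, hre a (left_mem_Icc.2 hab.le)])
      (by rw [Pi.neg_apply, neg_re]; linarith [(abs_le.1 hb).1, hre b (right_mem_Icc.2 hab.le)])
    refine (existsUnique_congr fun l => ?_).1 key
    simp only [Pi.neg_apply, ← neg_add, neg_im, neg_eq_zero]

end Gap

theorem hasDerivAt_of_norm_sub_le_sq {E : Type*} [NormedAddCommGroup E] [NormedSpace ℝ E]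
    {f : ℝ → E} {f' : E} {x C : ℝ}
    (h : ∀ᶠ y in 𝓝 x, ‖f y - f x - (y - x) • f'‖ ≤ C * (y - x) ^ 2) : HasDerivAt f f' x := by
  rw [hasDerivAt_iff_isLittleO]
  refine (Asymptotics.IsBigO.of_bound C ?_).trans_isLittleO
    (Asymptotics.isLittleO_pow_sub_sub x one_lt_two)
  filter_upwards [h] with y hy
  simpa only [norm_pow, norm_norm, Real.norm_eq_abs, sq_abs] using hy

section LinearODE

variable {𝔸 : Type*} [NormedRing 𝔸] [NormedAlgebra ℝ 𝔸]

theorem norm_le_gronwallBound_of_hasDerivAt_mul_add {U Y F : ℝ → 𝔸} {K ε b : ℝ} (hb : 0 ≤ b)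
    (hY : ∀ x, HasDerivAt Y (U x * Y x + F x) x) (hU : ∀ x ∈ Icc 0 b, ‖U x‖ ≤ K)
    (hF : ∀ x ∈ Icc 0 b, ‖F x‖ ≤ ε) : ‖Y b‖ ≤ gronwallBound ‖Y 0‖ K ε b := by
  simpa using norm_le_gronwallBound_of_norm_deriv_right_le
    (fun x _ => (hY x).continuousAt.continuousWithinAt) (fun x _ => (hY x).hasDerivWithinAt)
    le_rfl (fun x hx => (norm_add_le _ _).trans (add_le_add
      ((norm_mul_le _ _).trans (mul_le_mul_of_nonneg_right (hU x (Ico_subset_Icc_self hx))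
        (norm_nonneg _))) (hF x (Ico_subset_Icc_self hx)))) b ⟨hb, le_rfl⟩

theorem eq_zero_of_hasDerivAt_mul {U Y : ℝ → 𝔸} {b : ℝ} (hb : 0 ≤ b)
    (hU : ContinuousOn U (Icc 0 b)) (hY : ∀ x, HasDerivAt Y (U x * Y x) x) (hY0 : Y 0 = 0) :
    Y b = 0 := by
  obtain ⟨K, hK⟩ := isCompact_Icc.exists_bound_of_continuousOn hU
  have := norm_le_gronwallBound_of_hasDerivAt_mul_add hb (F := 0) (ε := 0)
    (fun x => by simpa using hY x) hK (fun _ _ => by simp)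
  simpa [hY0, gronwallBound_ε0_δ0] using this

theorem hasDerivAt_param_of_hasDerivAt_mul {V : ℝ → 𝔸} {E : 𝔸} {Y : ℝ → ℝ → 𝔸} {S : ℝ → 𝔸}
    {l b : ℝ} (hb : 0 ≤ b) (hV : ContinuousOn V (Icc 0 b))
    (hY : ∀ m x, HasDerivAt (Y m) ((V x + m • E) * Y m x) x) (hY0 : ∀ m, Y m 0 = Y l 0)
    (hS : ∀ x, HasDerivAt S ((V x + l • E) * S x + E * Y l x) x) (hS0 : S 0 = 0) :
    HasDerivAt (fun m => Y m b) (S b) l := by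
  obtain ⟨K, hK⟩ := isCompact_Icc.exists_bound_of_continuousOn hV
  obtain ⟨M, hM⟩ := isCompact_Icc.exists_bound_of_continuousOn (s := Icc 0 b)
    (fun x _ => (hS x).continuousAt.continuousWithinAt)
  set K' := K + (|l| + 1) * ‖E‖
  refine hasDerivAt_of_norm_sub_le_sq (C := gronwallBound 0 K' (‖E‖ * M) b) ?_
  filter_upwards [Metric.closedBall_mem_nhds l zero_lt_one] with m hm
  rw [Metric.mem_closedBall, Real.dist_eq] at hm
  -- the remainder solves the `m`-equation with a forcing term of size `(m - l) ^ 2`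
  have hR (x : ℝ) : HasDerivAt (fun x => Y m x - Y l x - (m - l) • S x)
      ((V x + m • E) * (Y m x - Y l x - (m - l) • S x) + (m - l) ^ 2 • (E * S x)) x := by
    refine (((hY m x).sub (hY l x)).sub ((hS x).const_smul (m - l))).congr_deriv ?_
    simp only [add_mul, mul_sub, smul_mul_assoc, mul_smul_comm, smul_add]
    module
  have hU (x : ℝ) (hx : x ∈ Icc 0 b) : ‖V x + m • E‖ ≤ K' := by
    have : |m| ≤ |l| + 1 := by linarith [abs_sub_abs_le_abs_sub m l]
    calc ‖V x + m • E‖ ≤ K + |m| * ‖E‖ := (norm_add_le _ _).trans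
          (add_le_add (hK x hx) (by rw [norm_smul, Real.norm_eq_abs]))
      _ ≤ K' := by linarith [mul_le_mul_of_nonneg_right this (norm_nonneg E)]
  have hF (x : ℝ) (hx : x ∈ Icc 0 b) : ‖(m - l) ^ 2 • (E * S x)‖ ≤ (m - l) ^ 2 * (‖E‖ * M) := by
    rw [norm_smul, norm_pow, Real.norm_eq_abs, sq_abs]
    gcongr
    exact (norm_mul_le _ _).trans (by gcongr; exact hM x hx)
  have hlin : gronwallBound 0 K' ((m - l) ^ 2 * (‖E‖ * M)) b
      = gronwallBound 0 K' (‖E‖ * M) b * (m - l) ^ 2 := by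
    simp only [gronwallBound]
    split_ifs <;> ring
  simpa [hY0 m, hS0, hlin] using norm_le_gronwallBound_of_hasDerivAt_mul_add hb hR hU hF

end LinearODE

theorem Matrix.hasDerivAt_iff {𝕜 : Type*} [NontriviallyNormedField 𝕜] {α : Type*}
    [NormedAddCommGroup α] [NormedSpace 𝕜 α] {m n : Type*} [Fintype m] [Fintype n]
    {f : 𝕜 → Matrix m n α} {f' : Matrix m n α} {x : 𝕜} :
    HasDerivAt f f' x ↔ ∀ i j, HasDerivAt (fun y => f y i j) (f' i j) x :=
  (hasDerivAt_pi (φ := (f : 𝕜 → m → n → α)) (φ' := (f' : m → n → α))).trans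
    (forall_congr' fun _ => hasDerivAt_pi)

noncomputable def zsPotential (q : ℝ → ℂ) (x : ℝ) : Matrix (Fin 2) (Fin 2) ℂ :=
  !![0, I * q x; -I * conj (q x), 0]

def iSigma3 : Matrix (Fin 2) (Fin 2) ℂ := !![I, 0; 0, -I]

def sigma1 : Matrix (Fin 2) (Fin 2) ℂ := !![0, 1; 1, 0]

theorem zsMatrix_eq_add (q : ℝ → ℂ) (l x : ℝ) :
    zsMatrix q l x = zsPotential q x + l • iSigma3 := by
  ext i j
  fin_cases i <;> fin_cases j <;> simp [zsMatrix, zsPotential, iSigma3, mul_comm]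

theorem continuous_zsPotential {q : ℝ → ℂ} (hq : Continuous q) : Continuous (zsPotential q) := by
  refine continuous_pi fun i => continuous_pi fun j => ?_
  fin_cases i <;> fin_cases j <;> simp [zsPotential] <;> fun_prop

theorem sigma1_mul_self : sigma1 * sigma1 = 1 := by
  ext i j
  fin_cases i <;> fin_cases j <;> simp [sigma1, Matrix.mul_apply, Fin.sum_univ_two]

theorem sigma1_mul_map_conj_zsMatrix_mul_sigma1 (q : ℝ → ℂ) (l x : ℝ) :
    sigma1 * (zsMatrix q l x).map conj * sigma1 = zsMatrix q l x := by
  ext i j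
  simp only [Matrix.mul_apply, Fin.sum_univ_two, Matrix.map_apply]
  fin_cases i <;> fin_cases j <;> simp [sigma1, zsMatrix]

/-- `∫₀ˣ Y⁻¹ (∂zsMatrix/∂λ) Y`, written with the adjugate since `det Y = 1`: by variation of
constants, `∂T/∂λ = T * zsVariation T`. -/
noncomputable def zsVariation (Y : ℝ → Matrix (Fin 2) (Fin 2) ℂ) (x : ℝ) :
    Matrix (Fin 2) (Fin 2) ℂ :=
  Matrix.of fun i j => ∫ s in (0)..x, ((Y s).adjugate * iSigma3 * Y s) i j

noncomputable def zsWeight (Y : ℝ → Matrix (Fin 2) (Fin 2) ℂ) (x : ℝ) : ℝ :=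
  ∫ s in (0)..x, (normSq (Y s 0 0) + normSq (Y s 1 0))

theorem zsVariation_apply_one_zero (Y : ℝ → Matrix (Fin 2) (Fin 2) ℂ) (x : ℝ) :
    zsVariation Y x 1 0 = ∫ s in (0)..x, -2 * I * (Y s 0 0 * Y s 1 0) := by
  rw [zsVariation, Matrix.of_apply]
  refine intervalIntegral.integral_congr fun s _ => ?_
  simp only [Matrix.adjugate_fin_two, iSigma3, Matrix.mul_apply, Fin.sum_univ_two,
    Matrix.of_apply, Matrix.cons_val', Matrix.cons_val_zero, Matrix.cons_val_one,
    Matrix.empty_val', Matrix.cons_val_fin_one]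
  ring

theorem norm_zsVariation_apply_one_zero_lt {Y : ℝ → Matrix (Fin 2) (Fin 2) ℂ}
    (hY : Continuous Y) (hY0 : Y 0 = 1) {x : ℝ} (hx : 0 < x) :
    ‖zsVariation Y x 1 0‖ < zsWeight Y x := by
  have hcont (i j : Fin 2) : Continuous fun s => Y s i j := hY.matrix_elem i j
  rw [zsVariation_apply_one_zero]
  calc ‖∫ s in (0)..x, -2 * I * (Y s 0 0 * Y s 1 0)‖
      ≤ ∫ s in (0)..x, 2 * (‖Y s 0 0‖ * ‖Y s 1 0‖) := by
        refine (intervalIntegral.norm_integral_le_integral_norm hx.le).trans_eq ?_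
        simp
    _ < zsWeight Y x := by
        rw [zsWeight]
        refine intervalIntegral.integral_lt_integral_of_continuousOn_of_le_of_exists_lt hx
          (by fun_prop) (by fun_prop) (fun s _ => ?_) ⟨0, left_mem_Icc.2 hx.le, ?_⟩
        · rw [normSq_eq_norm_sq, normSq_eq_norm_sq]
          linarith [two_mul_le_add_sq ‖Y s 0 0‖ ‖Y s 1 0‖]
        · simp [hY0]

section ZakharovShabat

attribute [local instance] Matrix.linftyOpNormedRing Matrix.linftyOpNormedAlgebra

variable {q : ℝ → ℂ} {Y : ℝ → Matrix (Fin 2) (Fin 2) ℂ}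

theorem det_eq_one_of_hasDerivAt_zsMatrix {l : ℂ}
    (hY : ∀ x, HasDerivAt Y (zsMatrix q l x * Y x) x) (hY0 : Y 0 = 1) (x : ℝ) :
    (Y x).det = 1 := by
  have hd (x : ℝ) : HasDerivAt (fun x => (Y x).det) 0 x := by
    have h := Matrix.hasDerivAt_iff.1 (hY x)
    simp only [Matrix.det_fin_two]
    refine (((h 0 0).mul (h 1 1)).sub ((h 0 1).mul (h 1 0))).congr_deriv ?_
    simp only [zsMatrix, Matrix.mul_apply, Fin.sum_univ_two, Matrix.of_apply, Matrix.cons_val',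
      Matrix.cons_val_fin_one, Matrix.cons_val_zero, Matrix.cons_val_one]
    ring
  have := is_const_of_deriv_eq_zero (fun x => (hd x).differentiableAt) (fun x => (hd x).deriv) x 0
  simpa [hY0] using this

theorem eq_sigma1_mul_map_conj_mul_sigma1 (hq : Continuous q) {l : ℝ}
    (hY : ∀ x, HasDerivAt Y (zsMatrix q l x * Y x) x) (hY0 : Y 0 = 1) {x : ℝ} (hx : 0 ≤ x) :
    Y x = sigma1 * (Y x).map conj * sigma1 := by
  set W := fun x => sigma1 * (Y x).map conj * sigma1
  have hW (x : ℝ) : HasDerivAt W (zsMatrix q l x * W x) x := by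
    have hconj : HasDerivAt (fun x => (Y x).map conj) ((zsMatrix q l x * Y x).map conj) x :=
      Matrix.hasDerivAt_iff.2 fun i j => (Matrix.hasDerivAt_iff.1 (hY x) i j).star
    refine ((hconj.const_mul sigma1).mul_const sigma1).congr_deriv ?_
    conv_rhs => rw [← sigma1_mul_map_conj_zsMatrix_mul_sigma1 q l x]
    simp only [W, Matrix.map_mul, mul_assoc, ← mul_assoc sigma1 sigma1, sigma1_mul_self, one_mul]
  have hcont : Continuous (zsMatrix q l) :=
    ((continuous_zsPotential hq).add continuous_const).congr fun x => (zsMatrix_eq_add q l x).symm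
  have := eq_zero_of_hasDerivAt_mul hx hcont.continuousOn
    (fun x => ((hY x).sub (hW x)).congr_deriv (mul_sub _ _ _).symm)
    (by simp [W, hY0, sigma1_mul_self])
  exact sub_eq_zero.1 this

theorem conj_symm_of_hasDerivAt_zsMatrix (hq : Continuous q) {l : ℝ}
    (hY : ∀ x, HasDerivAt Y (zsMatrix q l x * Y x) x) (hY0 : Y 0 = 1) {x : ℝ} (hx : 0 ≤ x) :
    Y x 1 1 = conj (Y x 0 0) ∧ Y x 0 1 = conj (Y x 1 0) := by
  have h := eq_sigma1_mul_map_conj_mul_sigma1 hq hY hY0 hx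
  constructor <;> conv_lhs => rw [h]
  all_goals simp only [Matrix.mul_apply, Fin.sum_univ_two, Matrix.map_apply]; simp [sigma1]

theorem normSq_sub_normSq_eq_one_of_hasDerivAt_zsMatrix (hq : Continuous q) {l : ℝ}
    (hY : ∀ x, HasDerivAt Y (zsMatrix q l x * Y x) x) (hY0 : Y 0 = 1) {x : ℝ} (hx : 0 ≤ x) :
    normSq (Y x 0 0) - normSq (Y x 1 0) = 1 := by
  have hdet := det_eq_one_of_hasDerivAt_zsMatrix hY hY0 x
  obtain ⟨h11, h01⟩ := conj_symm_of_hasDerivAt_zsMatrix hq hY hY0 hx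
  rw [Matrix.det_fin_two, h11, h01, mul_conj, mul_comm, mul_conj] at hdet
  exact_mod_cast hdet

theorem hasDerivAt_zsVariation (hY : Continuous Y) (x : ℝ) :
    HasDerivAt (zsVariation Y) ((Y x).adjugate * iSigma3 * Y x) x :=
  Matrix.hasDerivAt_iff.2 fun i j =>
    ((((hY.matrix_adjugate.mul continuous_const).mul hY).matrix_elem i j).integral_hasStrictDerivAt
      0 x).hasDerivAt

theorem zsVariation_apply_zero_zero (hq : Continuous q) {l : ℝ}
    (hY : ∀ x, HasDerivAt Y (zsMatrix q l x * Y x) x) (hY0 : Y 0 = 1) {x : ℝ} (hx : 0 ≤ x) :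
    zsVariation Y x 0 0 = I * zsWeight Y x := by
  rw [zsVariation, Matrix.of_apply, zsWeight, ← intervalIntegral.integral_ofReal,
    ← intervalIntegral.integral_const_mul]
  refine intervalIntegral.integral_congr fun s hs => ?_
  rw [uIcc_of_le hx] at hs
  obtain ⟨h11, h01⟩ := conj_symm_of_hasDerivAt_zsMatrix hq hY hY0 hs.1
  simp only [Matrix.adjugate_fin_two, iSigma3, Matrix.mul_apply, Fin.sum_univ_two]
  simp only [h11, h01, Matrix.of_apply, Matrix.cons_val', Matrix.cons_val_zero,
    Matrix.cons_val_one, Matrix.empty_val', Matrix.cons_val_fin_one, ofReal_add, ← mul_conj]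
  ring

variable {T : ℝ → ℝ → Matrix (Fin 2) (Fin 2) ℂ}

theorem hasDerivAt_param_of_hasDerivAt_zsMatrix (hq : Continuous q) (hT0 : ∀ l, T l 0 = 1)
    (hT : ∀ (l : ℝ) x, HasDerivAt (T l) (zsMatrix q l x * T l x) x) (l : ℝ) {b : ℝ}
    (hb : 0 ≤ b) : HasDerivAt (fun m => T m b) (T l b * zsVariation (T l) b) l := by
  refine hasDerivAt_param_of_hasDerivAt_mul (E := iSigma3)
    (S := fun x => T l x * zsVariation (T l) x) hb (continuous_zsPotential hq).continuousOn
    (fun m x => by have := hT m x; rwa [zsMatrix_eq_add] at this) (fun m => by rw [hT0, hT0])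
    (fun x => ?_) (by ext i j; simp [zsVariation, Matrix.mul_apply])
  have hcont : Continuous (T l) := continuous_iff_continuousAt.2 fun x => (hT l x).continuousAt
  refine ((hT l x).mul (hasDerivAt_zsVariation hcont x)).congr_deriv ?_
  rw [zsMatrix_eq_add, ← mul_assoc (T l x), ← mul_assoc (T l x), Matrix.mul_adjugate,
    det_eq_one_of_hasDerivAt_zsMatrix (hT l) (hT0 l), one_smul, one_mul, mul_assoc]

theorem hasDerivAt_param_apply_of_hasDerivAt_zsMatrix (hq : Continuous q) (hT0 : ∀ l, T l 0 = 1)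
    (hT : ∀ (l : ℝ) x, HasDerivAt (T l) (zsMatrix q l x * T l x) x) (l : ℝ) {b : ℝ}
    (hb : 0 ≤ b) :
    HasDerivAt (fun m => T m b 0 0)
        (I * zsWeight (T l) b * T l b 0 0 + zsVariation (T l) b 1 0 * conj (T l b 1 0)) l ∧
      HasDerivAt (fun m => T m b 1 0)
        (I * zsWeight (T l) b * T l b 1 0 + zsVariation (T l) b 1 0 * conj (T l b 0 0)) l := by
  have h := Matrix.hasDerivAt_iff.1 (hasDerivAt_param_of_hasDerivAt_zsMatrix hq hT0 hT l hb)
  obtain ⟨h11, h01⟩ := conj_symm_of_hasDerivAt_zsMatrix hq (hT l) (hT0 l) hb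
  have h00 := zsVariation_apply_zero_zero hq (hT l) (hT0 l) hb
  constructor
  · refine (h 0 0).congr_deriv ?_
    rw [Matrix.mul_apply, Fin.sum_univ_two, h00, h01]
    ring
  · refine (h 1 0).congr_deriv ?_
    rw [Matrix.mul_apply, Fin.sum_univ_two, h00, h11]
    ring

end ZakharovShabat

theorem Complex.norm_add_conj (z : ℂ) : ‖z + conj z‖ = 2 * |z.re| := by
  rw [add_conj, norm_real, Real.norm_eq_abs, abs_mul, abs_two]

theorem Complex.add_sub_conj_sub_conj_eq_zero_iff (a b : ℂ) :
    a + b - conj b - conj a = 0 ↔ (a + b).im = 0 := by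
  rw [show a + b - conj b - conj a = a + b - conj (a + b) by rw [map_add]; ring, sub_conj]
  simp only [mul_eq_zero, ofReal_eq_zero, I_ne_zero, or_false, two_ne_zero, false_or]

theorem one_aux_point_per_gap_general
    (L : ℝ) (hL : 0 < L) (q : ℝ → ℂ) (hq : Continuous q)
    (T : ℝ → ℝ → Matrix (Fin 2) (Fin 2) ℂ)
    (hT0 : ∀ l : ℝ, T l 0 = 1)
    (hTderiv : ∀ (l : ℝ) (x : ℝ) (i j : Fin 2),
      HasDerivAt (fun y => T l y i j) ((zsMatrix q (l : ℂ) x * T l x) i j) x)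
    (a b : ℝ) (hab : a < b)
    (hgap : Set.Ioo a b ⊆ {l : ℝ | 2 < ‖(T l (2 * L)).trace‖})
    (ha : ¬ 2 < ‖(T a (2 * L)).trace‖)
    (hb : ¬ 2 < ‖(T b (2 * L)).trace‖) :
    ∃! l : ℝ, l ∈ Set.Icc a b ∧
      T l (2 * L) 0 0 + T l (2 * L) 1 0 - T l (2 * L) 0 1 - T l (2 * L) 1 1 = 0 := by
  have hT (l x : ℝ) : HasDerivAt (T l) (zsMatrix q l x * T l x) x :=
    Matrix.hasDerivAt_iff.2 (hTderiv l x)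
  have h2L : 0 < 2 * L := by linarith
  have hsymm (l : ℝ) := conj_symm_of_hasDerivAt_zsMatrix hq (hT l) (hT0 l) h2L.le
  have htrace (l : ℝ) : ‖(T l (2 * L)).trace‖ = 2 * |(T l (2 * L) 0 0).re| := by
    rw [Matrix.trace_fin_two, (hsymm l).1, norm_add_conj]
  have key := existsUnique_im_add_eq_zero_of_gap hab
    (fun l => normSq_sub_normSq_eq_one_of_hasDerivAt_zsMatrix hq (hT l) (hT0 l) h2L.le)
    (fun l => (hasDerivAt_param_apply_of_hasDerivAt_zsMatrix hq hT0 hT l h2L.le).1)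
    (fun l => (hasDerivAt_param_apply_of_hasDerivAt_zsMatrix hq hT0 hT l h2L.le).2)
    (fun l => norm_zsVariation_apply_one_zero_lt (continuous_pi fun i => continuous_pi fun j =>
      continuous_iff_continuousAt.2 fun x => (hTderiv l x i j).continuousAt) (hT0 l) h2L)
    (fun l hl => by have : 2 < ‖(T l (2 * L)).trace‖ := hgap hl; rw [htrace] at this; linarith)
    (by rw [htrace] at ha; linarith) (by rw [htrace] at hb; linarith)
  refine (existsUnique_congr fun l => ?_).1 key
  rw [(hsymm l).1, (hsymm l).2, add_sub_conj_sub_conj_eq_zero_iff]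

/-- Each closed spectral gap `[a,b]` of the periodic problem (a bounded maximal open
interval of `{λ : |tr T(λ)| > 2}`) contains exactly one zero of
`F(λ) = T₁₁ + T₂₁ − T₁₂ − T₂₂`, i.e. exactly one point of the auxiliary spectrum. -/
theorem one_aux_point_per_gap
    (L : ℝ) (hL : 0 < L) (q : ℝ → ℂ) (hq : Continuous q)
    (hper : ∀ x, q (x + 2 * L) = q x)
    (T : ℝ → ℝ → Matrix (Fin 2) (Fin 2) ℂ)
    (hT0 : ∀ l : ℝ, T l 0 = 1)
    (hTderiv : ∀ (l : ℝ) (x : ℝ) (i j : Fin 2),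
      HasDerivAt (fun y => T l y i j) ((zsMatrix q (l : ℂ) x * T l x) i j) x)
    (a b : ℝ) (hab : a < b)
    (hgap : Set.Ioo a b ⊆ {l : ℝ | 2 < ‖(T l (2 * L)).trace‖})
    (ha : ¬ 2 < ‖(T a (2 * L)).trace‖)
    (hb : ¬ 2 < ‖(T b (2 * L)).trace‖) :
    ∃! l : ℝ, l ∈ Set.Icc a b ∧
      T l (2 * L) 0 0 + T l (2 * L) 1 0 - T l (2 * L) 0 1 - T l (2 * L) 1 1 = 0 :=
  one_aux_point_per_gap_general L hL q hq T hT0 hTderiv a b hab hgap ha hb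
end

section
/- Let L>0, T>0, and let u : [0,L] × [0,T] → ℂ be continuous, twice continuously differentiable in x and once in t on [0,L] × (0,T) (up to the endpoints in x), satisfying the defocusing NLS equation i∂_t u = ∂_x²u − 2|u|²u on (0,L)×(0,T), with boundary values v₀(t) = u(0,t) and v_L(t) = u(L,t). Let q : ℝ × (0,T) → ℂ be the odd 2L-periodic extension of u: q(x,t) = u(x,t) for 0 < x < L, q(x,t) = −u(−x,t) for −L < x < 0, and q(x+2L,t) = q(x,t). Then for every smooth compactly supported test function φ : ℝ × (0,T) → ℂ one has ∫∫ [ q(x,t)(−i ∂_tφ(x,t) − ∂_x²φ(x,t)) + 2|q(x,t)|² q(x,t) φ(x,t) ] dx dt = 2 ∫ Σ_{n∈ℤ} [ v₀(t) ∂_xφ(2nL, t) − v_L(t) ∂_xφ((2n+1)L, t) ] dt (the sum over n is finite on the support of φ). That is, q satisfies the defocusing NLS with δ'-sources of strengths −2v₀(t) at the points 2nL and 2v_L(t) at the points (2n+1)L, in the distributional sense. -/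
/-!
The odd `2L`-periodic extension is tested against `φ` exactly as `u` is tested on `(0, L)` against
the odd periodization `Ψ y = ∑ₙ (φ (2nL + y) - φ (2nL - y))`: cut `ℝ` into the cells
`[2nL - L, 2nL + L]` and fold each onto `[0, L]`; the cubic term survives because `z ↦ 2|z|²z` is
odd. Since `Ψ` vanishes at `0` and at `L`, Green's identity and the equation turn the spatial part
into `u(0) ∂ₓΨ(0) - u(L) ∂ₓΨ(L)`, and what is left is `∫∫ ∂ₜ(u Ψ) = 0`. Finally
`∂ₓΨ(0) = 2 ∑ₙ ∂ₓφ(2nL)` and, after shifting `n`, `∂ₓΨ(L) = 2 ∑ₙ ∂ₓφ((2n+1)L)`.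
-/

set_option autoImplicit false

open MeasureTheory Set Topology

structure HasContinuousPartials (ψ ψx ψxx ψt : ℝ → ℝ → ℂ) : Prop where
  hasDerivAt_x : ∀ x t, HasDerivAt (fun y => ψ y t) (ψx x t) x
  hasDerivAt_xx : ∀ x t, HasDerivAt (fun y => ψx y t) (ψxx x t) x
  hasDerivAt_t : ∀ x t, HasDerivAt (ψ x) (ψt x t) t
  continuous : Continuous (Function.uncurry ψ)
  continuous_x : Continuous (Function.uncurry ψx)
  continuous_xx : Continuous (Function.uncurry ψxx)
  continuous_t : Continuous (Function.uncurry ψt)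

theorem HasDerivAt.eq_zero_of_eventuallyEq_zero {E : Type*} [NormedAddCommGroup E]
    [NormedSpace ℝ E] {f : ℝ → E} {f' : E} {x : ℝ}
    (hf : HasDerivAt f f' x) (h : f =ᶠ[𝓝 x] 0) : f' = 0 :=
  hf.unique ((hasDerivAt_const x (0 : E)).congr_of_eventuallyEq h)

theorem hasDerivAt_fst_slice {E : Type*} [NormedAddCommGroup E] [NormedSpace ℝ E] {Φ : ℝ × ℝ → E}
    (hΦ : Differentiable ℝ Φ) (x t : ℝ) :
    HasDerivAt (fun y => Φ (y, t)) (fderiv ℝ Φ (x, t) (1, 0)) x :=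
  (hΦ (x, t)).hasFDerivAt.comp_hasDerivAt x ((hasDerivAt_id x).prodMk (hasDerivAt_const x t))

theorem hasDerivAt_snd_slice {E : Type*} [NormedAddCommGroup E] [NormedSpace ℝ E] {Φ : ℝ × ℝ → E}
    (hΦ : Differentiable ℝ Φ) (x t : ℝ) :
    HasDerivAt (fun s => Φ (x, s)) (fderiv ℝ Φ (x, t) (0, 1)) t :=
  (hΦ (x, t)).hasFDerivAt.comp_hasDerivAt t ((hasDerivAt_const t x).prodMk (hasDerivAt_id t))

theorem ContDiff.hasContinuousPartials {φ : ℝ × ℝ → ℂ} (hφ : ContDiff ℝ 2 φ) :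
    HasContinuousPartials (fun x t => φ (x, t)) (fun x t => deriv (fun y => φ (y, t)) x)
      (fun x t => deriv (fun y => deriv (fun z => φ (z, t)) y) x)
      (fun x t => deriv (fun s => φ (x, s)) t) := by
  have hφ1 : Differentiable ℝ φ := hφ.differentiable (by norm_num)
  set φx : ℝ × ℝ → ℂ := fun p => fderiv ℝ φ p (1, 0)
  have hφx : ContDiff ℝ 1 φx := (hφ.fderiv_right (by norm_num)).clm_apply contDiff_const
  have hφx1 : Differentiable ℝ φx := hφx.differentiable (by norm_num)
  have hx : ∀ x t, deriv (fun y => φ (y, t)) x = φx (x, t) := fun x t =>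
    (hasDerivAt_fst_slice hφ1 x t).deriv
  have hxx : ∀ x t, deriv (fun y => deriv (fun z => φ (z, t)) y) x =
      fderiv ℝ φx (x, t) (1, 0) := fun x t => by
    simp only [hx]; exact (hasDerivAt_fst_slice hφx1 x t).deriv
  have ht : ∀ x t, deriv (fun s => φ (x, s)) t = fderiv ℝ φ (x, t) (0, 1) := fun x t =>
    (hasDerivAt_snd_slice hφ1 x t).deriv
  refine ⟨fun x t => ?_, fun x t => ?_, fun x t => ?_, ?_, ?_, ?_, ?_⟩
  · rw [hx]; exact hasDerivAt_fst_slice hφ1 x t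
  · rw [hxx]; simp only [hx]; exact hasDerivAt_fst_slice hφx1 x t
  · rw [ht]; exact hasDerivAt_snd_slice hφ1 x t
  · exact hφ.continuous
  · simpa [Function.uncurry_def, hx] using hφx.continuous
  · simpa [Function.uncurry_def, hxx] using
      (hφx.continuous_fderiv one_ne_zero).clm_apply continuous_const
  · simpa [Function.uncurry_def, ht] using
      (hφ.continuous_fderiv (by norm_num)).clm_apply continuous_const

theorem HasContinuousPartials.t_eq_zero_of_notMem {ψ ψx ψxx ψt : ℝ → ℝ → ℂ}
    (hψ : HasContinuousPartials ψ ψx ψxx ψt) {S : Set ℝ} (hS : IsClosed S)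
    (hvan : ∀ x, ∀ t ∉ S, ψ x t = 0) (x : ℝ) {t : ℝ} (ht : t ∉ S) : ψt x t = 0 :=
  (hψ.hasDerivAt_t x t).eq_zero_of_eventuallyEq_zero
    (Filter.eventually_of_mem (hS.isOpen_compl.mem_nhds ht) fun _ hs => hvan x _ hs)

theorem HasContinuousPartials.eq_zero_of_lt_abs {ψ ψx ψxx ψt : ℝ → ℝ → ℂ}
    (hψ : HasContinuousPartials ψ ψx ψxx ψt) {R : ℝ} (hvan : ∀ x t, R < |x| → ψ x t = 0)
    {x t : ℝ} (hx : R < |x|) : ψ x t = 0 ∧ ψx x t = 0 ∧ ψxx x t = 0 ∧ ψt x t = 0 := by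
  have hopen : IsOpen {y : ℝ | R < |y|} := isOpen_lt continuous_const continuous_abs
  have hψx : ∀ y, R < |y| → ψx y t = 0 := fun y hy =>
    (hψ.hasDerivAt_x y t).eq_zero_of_eventuallyEq_zero
      (Filter.eventually_of_mem (hopen.mem_nhds hy) fun z hz => hvan z t hz)
  exact ⟨hvan x t hx, hψx x hx, (hψ.hasDerivAt_xx x t).eq_zero_of_eventuallyEq_zero
      (Filter.eventually_of_mem (hopen.mem_nhds hx) fun z hz => hψx z hz),
    (hψ.hasDerivAt_t x t).eq_zero_of_eventuallyEq_zero
      (Filter.Eventually.of_forall fun s => hvan x s hx)⟩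

theorem Finset.sum_Icc_neg_natCast_eq_sum_range {E : Type*} [AddCommMonoid E] (f : ℤ → E)
    (M : ℕ) : ∑ n ∈ Finset.Icc (-(M : ℤ)) M, f n = ∑ k ∈ Finset.range (2 * M + 1), f (k - M) := by
  refine Finset.sum_nbij' (fun n => (n + M).toNat) (fun k => (k : ℤ) - M) ?_ ?_ ?_ ?_ ?_ <;>
    intro n hn <;> simp only [Finset.mem_Icc, Finset.mem_range] at hn ⊢
  all_goals try congr 1
  all_goals omega

theorem Finset.sum_comp_equiv_of_notMem {β E : Type*} [AddCommMonoid E] [DecidableEq β]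
    (e : β ≃ β) {s : Finset β} {g : β → E} (h₁ : ∀ b ∉ s, g b = 0)
    (h₂ : ∀ b ∉ s, g (e b) = 0) : ∑ b ∈ s, g (e b) = ∑ b ∈ s, g b := by
  rw [show ∑ b ∈ s, g (e b) = ∑ b ∈ s.map e.toEmbedding, g b from
      (Finset.sum_map s e.toEmbedding g).symm,
    Finset.sum_subset Finset.subset_union_left fun b _ hb => ?_,
    Finset.sum_subset (Finset.subset_union_right (s₁ := s.map e.toEmbedding)) fun b _ hb => h₁ b hb]
  simpa using h₂ (e.symm b) (by simpa [Finset.mem_map_equiv] using hb)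

theorem le_abs_two_mul_intCast_mul_add {L y : ℝ} {M : ℕ} {n : ℤ} (hL : 0 ≤ L)
    (hn : n ∉ Finset.Icc (-(M : ℤ)) M) (hy : |y| ≤ L) : (2 * M + 1) * L ≤ |2 * n * L + y| := by
  rw [Finset.mem_Icc, not_and_or, not_le, not_le] at hn
  obtain ⟨hy₁, hy₂⟩ := abs_le.1 hy
  rcases hn with hn | hn
  · have : (n : ℝ) ≤ -M - 1 := by exact_mod_cast (by omega : n ≤ -M - 1)
    exact le_trans (by nlinarith) (neg_le_abs _)
  · have : (M : ℝ) + 1 ≤ n := by exact_mod_cast (by omega : (M : ℤ) + 1 ≤ n)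
    exact le_trans (by nlinarith) (le_abs_self _)

theorem sum_Icc_sub_eq_sum_Icc_add {ψ : ℝ → ℂ} {L : ℝ} {M : ℕ} (hL : 0 ≤ L)
    (hψ : ∀ x, (2 * M + 1) * L ≤ |x| → ψ x = 0) :
    ∑ n ∈ Finset.Icc (-(M : ℤ)) M, ψ (2 * n * L - L) =
      ∑ n ∈ Finset.Icc (-(M : ℤ)) M, ψ (2 * n * L + L) := by
  have hL' : |L| ≤ L := (abs_of_nonneg hL).le
  have hshift : ∀ n : ℤ, 2 * n * L - L = 2 * ((Equiv.subRight (1 : ℤ) n : ℤ) : ℝ) * L + L :=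
    fun n => by simp only [Equiv.subRight_apply]; push_cast; ring
  simp only [hshift]
  refine Finset.sum_comp_equiv_of_notMem (g := fun n : ℤ => ψ (2 * n * L + L)) _
    (fun n hn => hψ _ (le_abs_two_mul_intCast_mul_add hL hn hL')) fun n hn => ?_
  rw [← hshift, sub_eq_add_neg]
  exact hψ _ (le_abs_two_mul_intCast_mul_add hL hn (by rwa [abs_neg]))

/-- Only the translates with `|n| ≤ M` enter: for `ψ` vanishing on `|x| ≥ (2M+1)L` this is the
whole odd `2L`-periodization. -/
noncomputable def periodizeOdd (L : ℝ) (M : ℕ) (ψ : ℝ → ℝ → ℂ) (y t : ℝ) : ℂ :=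
  ∑ n ∈ Finset.Icc (-(M : ℤ)) M, (ψ (2 * n * L + y) t - ψ (2 * n * L - y) t)

noncomputable def periodizeEven (L : ℝ) (M : ℕ) (ψ : ℝ → ℝ → ℂ) (y t : ℝ) : ℂ :=
  ∑ n ∈ Finset.Icc (-(M : ℤ)) M, (ψ (2 * n * L + y) t + ψ (2 * n * L - y) t)

theorem HasContinuousPartials.periodize {ψ ψx ψxx ψt : ℝ → ℝ → ℂ}
    (hψ : HasContinuousPartials ψ ψx ψxx ψt) (L : ℝ) (M : ℕ) :
    HasContinuousPartials (periodizeOdd L M ψ) (periodizeEven L M ψx) (periodizeOdd L M ψxx)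
      (periodizeOdd L M ψt) := by
  have reflect : ∀ {g g' : ℝ → ℂ}, (∀ x, HasDerivAt g (g' x) x) → ∀ c y : ℝ,
      HasDerivAt (fun z => g (c + z)) (g' (c + y)) y ∧
        HasDerivAt (fun z => g (c - z)) (-g' (c - y)) y := fun hg c y =>
    ⟨(hg (c + y)).comp_const_add c y, (hg (c - y)).comp_const_sub c y⟩
  have hcont : ∀ {g : ℝ → ℝ → ℂ}, Continuous (Function.uncurry g) → ∀ c : ℝ,
      Continuous (fun p : ℝ × ℝ => g (c + p.1) p.2) ∧
        Continuous (fun p : ℝ × ℝ => g (c - p.1) p.2) := fun hg c =>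
    ⟨hg.comp ((continuous_const.add continuous_fst).prodMk continuous_snd),
      hg.comp ((continuous_const.sub continuous_fst).prodMk continuous_snd)⟩
  refine ⟨fun x t => ?_, fun x t => ?_, fun x t => ?_, ?_, ?_, ?_, ?_⟩
  · refine HasDerivAt.fun_sum fun n _ => ?_
    obtain ⟨h₁, h₂⟩ := reflect (fun x => hψ.hasDerivAt_x x t) (2 * n * L) x
    simpa using h₁.fun_sub h₂
  · refine HasDerivAt.fun_sum fun n _ => ?_
    obtain ⟨h₁, h₂⟩ := reflect (fun x => hψ.hasDerivAt_xx x t) (2 * n * L) x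
    simpa [sub_eq_add_neg] using h₁.fun_add h₂
  · exact HasDerivAt.fun_sum fun n _ =>
      (hψ.hasDerivAt_t _ t).sub (hψ.hasDerivAt_t _ t)
  all_goals
    simp only [Function.uncurry_def, periodizeOdd, periodizeEven]
    refine continuous_finsetSum _ fun n _ => ?_
  · exact (hcont hψ.continuous _).1.sub (hcont hψ.continuous _).2
  · exact (hcont hψ.continuous_x _).1.add (hcont hψ.continuous_x _).2
  · exact (hcont hψ.continuous_xx _).1.sub (hcont hψ.continuous_xx _).2
  · exact (hcont hψ.continuous_t _).1.sub (hcont hψ.continuous_t _).2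

theorem periodizeOdd_zero (L : ℝ) (M : ℕ) (ψ : ℝ → ℝ → ℂ) (t : ℝ) :
    periodizeOdd L M ψ 0 t = 0 := by
  simp [periodizeOdd]

theorem periodizeOdd_self {L : ℝ} {M : ℕ} {ψ : ℝ → ℝ → ℂ} {t : ℝ} (hL : 0 ≤ L)
    (hψ : ∀ x, (2 * M + 1) * L ≤ |x| → ψ x t = 0) : periodizeOdd L M ψ L t = 0 := by
  rw [periodizeOdd, Finset.sum_sub_distrib, sum_Icc_sub_eq_sum_Icc_add (ψ := (ψ · t)) hL hψ,
    sub_self]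

theorem periodizeEven_boundary {L : ℝ} {M : ℕ} {ψ : ℝ → ℝ → ℂ} {t : ℝ} (hL : 0 ≤ L)
    (hψ : ∀ x, (2 * M + 1) * L ≤ |x| → ψ x t = 0) (α β : ℂ) :
    α * periodizeEven L M ψ 0 t - β * periodizeEven L M ψ L t =
      2 * ∑' n : ℤ, (α * ψ (2 * n * L) t - β * ψ ((2 * n + 1) * L) t) := by
  have hodd : ∀ n : ℤ, ((2 : ℝ) * n + 1) * L = 2 * n * L + L := fun n => by ring
  simp only [hodd]
  rw [tsum_eq_sum (s := Finset.Icc (-(M : ℤ)) M) fun n hn => by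
    rw [hψ _ (by simpa using le_abs_two_mul_intCast_mul_add (y := 0) hL hn (by simpa using hL)),
      hψ _ (le_abs_two_mul_intCast_mul_add hL hn (abs_of_nonneg hL).le), mul_zero, mul_zero,
      sub_zero]]
  have hL_sum :
      periodizeEven L M ψ L t = 2 * ∑ n ∈ Finset.Icc (-(M : ℤ)) M, ψ (2 * n * L + L) t := by
    rw [periodizeEven, Finset.sum_add_distrib, sum_Icc_sub_eq_sum_Icc_add (ψ := (ψ · t)) hL hψ,
      two_mul]
  have h0_sum :
      periodizeEven L M ψ 0 t = 2 * ∑ n ∈ Finset.Icc (-(M : ℤ)) M, ψ (2 * n * L) t := by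
    simp only [periodizeEven, add_zero, sub_zero, Finset.sum_add_distrib, two_mul]
  rw [hL_sum, h0_sum, Finset.sum_sub_distrib, ← Finset.mul_sum, ← Finset.mul_sum]
  ring

section Folding

variable {E : Type*} [NormedAddCommGroup E]

theorem intervalIntegrable_of_reflect {h : ℝ → E} {c L : ℝ}
    (hr : IntervalIntegrable (fun y => h (c + y)) volume 0 L)
    (hl : IntervalIntegrable (fun y => h (c - y)) volume 0 L) :
    IntervalIntegrable h volume (c - L) c ∧ IntervalIntegrable h volume c (c + L) :=
  ⟨((IntervalIntegrable.comp_sub_left_iff (a := c) (b := c - L) c).1 (by simpa using hl)).symm,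
    (IntervalIntegrable.comp_add_left_iff (a := c) (b := c + L) (c := c)).1 (by simpa using hr)⟩

variable [NormedSpace ℝ E]

theorem intervalIntegral_center_eq_integral_reflect {h : ℝ → E} {c L : ℝ} (hL : 0 ≤ L)
    (hr : IntervalIntegrable (fun y => h (c + y)) volume 0 L)
    (hl : IntervalIntegrable (fun y => h (c - y)) volume 0 L) :
    ∫ x in c - L..c + L, h x = ∫ y in Ioo 0 L, (h (c + y) + h (c - y)) := by
  obtain ⟨hl', hr'⟩ := intervalIntegrable_of_reflect hr hl
  rw [← intervalIntegral.integral_add_adjacent_intervals hl' hr', ← integral_Ioc_eq_integral_Ioo,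
    ← intervalIntegral.integral_of_le hL, intervalIntegral.integral_add hr hl,
    intervalIntegral.integral_comp_add_left, intervalIntegral.integral_comp_sub_left]
  simp only [add_zero, sub_zero]
  exact add_comm _ _

theorem integral_eq_integral_sum_reflect [CompleteSpace E] {h : ℝ → E} {L : ℝ} (hL : 0 ≤ L) (M : ℕ)
    (hzero : ∀ x, (2 * M + 1) * L ≤ |x| → h x = 0)
    (hint : ∀ n : ℤ, IntervalIntegrable (fun y => h (2 * n * L + y)) volume 0 L ∧
      IntervalIntegrable (fun y => h (2 * n * L - y)) volume 0 L) :
    ∫ x, h x = ∫ y in Ioo 0 L, ∑ n ∈ Finset.Icc (-(M : ℤ)) M,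
      (h (2 * n * L + y) + h (2 * n * L - y)) := by
  set a : ℕ → ℝ := fun k => (2 * ((k : ℝ) - M) - 1) * L
  have ha : ∀ k : ℕ, a k = 2 * ((k - M : ℤ) : ℝ) * L - L ∧
      a (k + 1) = 2 * ((k - M : ℤ) : ℝ) * L + L := fun k => by
    constructor <;> (simp only [a]; push_cast; ring)
  have hcell : ∀ k : ℕ, IntervalIntegrable h volume (a k) (a (k + 1)) := fun k => by
    obtain ⟨hl, hr⟩ := intervalIntegrable_of_reflect (hint (k - M)).1 (hint (k - M)).2
    rw [(ha k).1, (ha k).2]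
    exact hl.trans hr
  have hρ : a 0 = -((2 * M + 1) * L) ∧ a (2 * M + 1) = (2 * M + 1) * L := by
    constructor <;> (simp only [a]; push_cast; ring)
  calc ∫ x, h x = ∫ x in a 0..a (2 * M + 1), h x := by
        rw [intervalIntegral.integral_of_le (by rw [hρ.1, hρ.2]; nlinarith),
          setIntegral_eq_integral_of_forall_compl_eq_zero]
        intro x hx
        rw [hρ.1, hρ.2, mem_Ioc, not_and_or, not_lt, not_le] at hx
        exact hzero x (by rcases hx with hx | hx <;> [rw [abs_of_nonpos (by nlinarith)];
          rw [abs_of_pos (by nlinarith)]] <;> linarith)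
    _ = ∑ k ∈ Finset.range (2 * M + 1), ∫ x in a k..a (k + 1), h x :=
        (intervalIntegral.sum_integral_adjacent_intervals fun k _ => hcell k).symm
    _ = ∑ k ∈ Finset.range (2 * M + 1), ∫ y in Ioo 0 L,
          (h (2 * ((k - M : ℤ) : ℝ) * L + y) + h (2 * ((k - M : ℤ) : ℝ) * L - y)) := by
        refine Finset.sum_congr rfl fun k _ => ?_
        rw [(ha k).1, (ha k).2]
        exact intervalIntegral_center_eq_integral_reflect hL (hint _).1 (hint _).2
    _ = _ := by
        rw [← Finset.sum_Icc_neg_natCast_eq_sum_range (fun n : ℤ => ∫ y in Ioo 0 L,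
          (h (2 * n * L + y) + h (2 * n * L - y))), integral_finsetSum]
        exact fun n _ => (intervalIntegrable_iff_integrableOn_Ioo_of_le hL).1
          ((hint n).1.add (hint n).2)

end Folding

section OddExtension

variable {F : Type*} [AddGroup F] {f v : ℝ → F} {L : ℝ}

theorem Function.Periodic.odd_ext_apply (hper : Function.Periodic f (2 * L))
    (hpos : ∀ x ∈ Ioo 0 L, f x = v x) (hneg : ∀ x ∈ Ioo (-L) 0, f x = -v (-x)) (n : ℤ) {y : ℝ}
    (hy : y ∈ Ioo 0 L) : f (2 * n * L + y) = v y ∧ f (2 * n * L - y) = -v y := by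
  rw [show 2 * n * L + y = y + n * (2 * L) by ring, show 2 * n * L - y = -y + n * (2 * L) by ring,
    hper.int_mul n, hper.int_mul n, hpos y hy, hneg (-y) ⟨by linarith [hy.2], by linarith [hy.1]⟩,
    neg_neg]
  exact ⟨rfl, rfl⟩

variable {E : Type*} [NormedAddCommGroup E] [NormedSpace ℝ E] [CompleteSpace E]
  [TopologicalSpace F]

theorem Function.Periodic.integral_odd_ext (hper : Function.Periodic f (2 * L))
    (hpos : ∀ x ∈ Ioo 0 L, f x = v x) (hneg : ∀ x ∈ Ioo (-L) 0, f x = -v (-x))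
    (hL : 0 ≤ L) (hv : ContinuousOn v (Icc 0 L)) (M : ℕ) {K : F → ℝ → E}
    (hK : Continuous (Function.uncurry K)) (hKodd : ∀ z x, K (-z) x = -K z x)
    (hKzero : ∀ z x, (2 * M + 1) * L ≤ |x| → K z x = 0) :
    ∫ x, K (f x) x = ∫ y in Ioo 0 L, ∑ n ∈ Finset.Icc (-(M : ℤ)) M,
      (K (v y) (2 * n * L + y) - K (v y) (2 * n * L - y)) := by
  have hint : ∀ (w : ℝ → F) (g : ℝ → ℝ), ContinuousOn w (Icc 0 L) → Continuous g →
      IntegrableOn (fun y => K (w y) (g y)) (Ioo 0 L) := fun w g hw hg =>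
    (hK.comp_continuousOn (hw.prodMk hg.continuousOn)).integrableOn_Icc.mono_set
      Ioo_subset_Icc_self
  have hcell : ∀ n : ℤ,
      IntervalIntegrable (fun y => K (f (2 * n * L + y)) (2 * n * L + y)) volume 0 L ∧
        IntervalIntegrable (fun y => K (f (2 * n * L - y)) (2 * n * L - y)) volume 0 L := by
    intro n
    refine ⟨(intervalIntegrable_iff_integrableOn_Ioo_of_le hL).2 ?_,
      (intervalIntegrable_iff_integrableOn_Ioo_of_le hL).2 ?_⟩
    · refine (hint v _ hv (continuous_const_add (2 * n * L))).congr_fun (fun y hy => ?_)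
        measurableSet_Ioo
      rw [(hper.odd_ext_apply hpos hneg n hy).1]
    · refine (hint v _ hv (continuous_sub_left (2 * n * L))).neg.congr_fun (fun y hy => ?_)
        measurableSet_Ioo
      rw [(hper.odd_ext_apply hpos hneg n hy).2, hKodd, Pi.neg_apply]
  rw [integral_eq_integral_sum_reflect hL M (fun x hx => hKzero _ _ hx) hcell]
  refine setIntegral_congr_fun measurableSet_Ioo fun y hy => Finset.sum_congr rfl fun n _ => ?_
  obtain ⟨h₁, h₂⟩ := hper.odd_ext_apply hpos hneg n hy
  rw [h₁, h₂, hKodd, ← sub_eq_add_neg]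

end OddExtension

noncomputable def nlsPairing (z ψ ψt ψxx : ℂ) : ℂ :=
  z * (-Complex.I * ψt - ψxx) + 2 * (‖z‖ : ℂ) ^ 2 * z * ψ

theorem nlsPairing_neg (z ψ ψt ψxx : ℂ) :
    nlsPairing (-z) ψ ψt ψxx = -nlsPairing z ψ ψt ψxx := by
  simp only [nlsPairing, norm_neg]; ring

theorem nlsPairing_sum_sub {ι : Type*} (s : Finset ι) (z : ℂ) (a a' b b' c c' : ι → ℂ) :
    ∑ i ∈ s, (nlsPairing z (a i) (b i) (c i) - nlsPairing z (a' i) (b' i) (c' i)) =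
      nlsPairing z (∑ i ∈ s, (a i - a' i)) (∑ i ∈ s, (b i - b' i)) (∑ i ∈ s, (c i - c' i)) := by
  simp only [nlsPairing, Finset.mul_sum, ← Finset.sum_sub_distrib, ← Finset.sum_add_distrib]
  exact Finset.sum_congr rfl fun i _ => by ring

theorem HasContinuousPartials.integral_nlsPairing_odd_ext {ψ ψx ψxx ψt : ℝ → ℝ → ℂ}
    (hψ : HasContinuousPartials ψ ψx ψxx ψt) {f v : ℝ → ℂ} {L : ℝ}
    (hper : Function.Periodic f (2 * L)) (hpos : ∀ x ∈ Ioo 0 L, f x = v x)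
    (hneg : ∀ x ∈ Ioo (-L) 0, f x = -v (-x)) (hL : 0 ≤ L) (hv : ContinuousOn v (Icc 0 L))
    (M : ℕ) {t : ℝ}
    (hvan : ∀ x, (2 * M + 1) * L ≤ |x| → ψ x t = 0 ∧ ψxx x t = 0 ∧ ψt x t = 0) :
    ∫ x, nlsPairing (f x) (ψ x t) (ψt x t) (ψxx x t) =
      ∫ y in Ioo 0 L, nlsPairing (v y) (periodizeOdd L M ψ y t) (periodizeOdd L M ψt y t)
        (periodizeOdd L M ψxx y t) := by
  have hslice : Continuous fun x : ℝ => (x, t) := continuous_id.prodMk continuous_const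
  have h₁ : Continuous fun x => ψ x t := hψ.continuous.comp hslice
  have h₂ : Continuous fun x => ψt x t := hψ.continuous_t.comp hslice
  have h₃ : Continuous fun x => ψxx x t := hψ.continuous_xx.comp hslice
  have hK : Continuous (Function.uncurry fun z x => nlsPairing z (ψ x t) (ψt x t) (ψxx x t)) := by
    simp only [Function.uncurry_def, nlsPairing]
    fun_prop
  refine (hper.integral_odd_ext hpos hneg hL hv M hK (fun z x => nlsPairing_neg _ _ _ _)
    fun z x hx => ?_).trans
    (setIntegral_congr_fun measurableSet_Ioo fun y _ => nlsPairing_sum_sub _ _ _ _ _ _ _ _)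
  obtain ⟨h₀, h₁, h₂⟩ := hvan x hx
  simp only [nlsPairing, h₀, h₁, h₂]
  ring

theorem integral_green_identity {f f' f'' g g' g'' : ℝ → ℂ} {a b : ℝ} (hab : a ≤ b)
    (hf : ∀ x ∈ Icc a b, HasDerivWithinAt f (f' x) (Icc a b) x)
    (hf' : ∀ x ∈ Icc a b, HasDerivWithinAt f' (f'' x) (Icc a b) x)
    (hf'' : ContinuousOn f'' (Icc a b))
    (hg : ∀ x ∈ Icc a b, HasDerivWithinAt g (g' x) (Icc a b) x)
    (hg' : ∀ x ∈ Icc a b, HasDerivWithinAt g' (g'' x) (Icc a b) x)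
    (hg'' : ContinuousOn g'' (Icc a b)) :
    ∫ x in a..b, (f'' x * g x - f x * g'' x) =
      (f' b * g b - f b * g' b) - (f' a * g a - f a * g' a) := by
  have cont : ∀ {k k' : ℝ → ℂ}, (∀ x ∈ Icc a b, HasDerivWithinAt k (k' x) (Icc a b) x) →
      ContinuousOn k (Icc a b) := fun hk x hx => (hk x hx).continuousWithinAt
  have diff : ∀ {k k' : ℝ → ℂ}, (∀ x ∈ Icc a b, HasDerivWithinAt k (k' x) (Icc a b) x) →
      ∀ x ∈ Ioo a b, HasDerivAt k (k' x) x := fun hk x hx =>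
    (hk x (Ioo_subset_Icc_self hx)).hasDerivAt (Icc_mem_nhds hx.1 hx.2)
  refine intervalIntegral.integral_eq_sub_of_hasDerivAt_of_le hab
    (((cont hf').mul (cont hg)).sub ((cont hf).mul (cont hg'))) (fun x hx => ?_) ?_
  · exact (((diff hf' x hx).mul (diff hg x hx)).sub
      ((diff hf x hx).mul (diff hg' x hx))).congr_deriv (by ring)
  · refine ContinuousOn.intervalIntegrable ?_
    rw [uIcc_of_le hab]
    exact (hf''.mul (cont hg)).sub ((cont hf).mul hg'')

section WeakForm

variable {L T t₀ t₁ : ℝ} {u ux uxx ut ψ ψx ψxx ψt : ℝ → ℝ → ℂ}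

theorem integrable_time_deriv_prod
    (hu_cont : ContinuousOn (fun p : ℝ × ℝ => u p.1 p.2) (Icc 0 L ×ˢ Icc 0 T))
    (hut_cont : ContinuousOn (fun p : ℝ × ℝ => ut p.1 p.2) (Icc 0 L ×ˢ Ioo 0 T))
    (hψ : HasContinuousPartials ψ ψx ψxx ψt) (ht₀ : 0 < t₀) (ht₁ : t₁ < T)
    (hvan : ∀ x, ∀ t ∉ Icc t₀ t₁, ψ x t = 0) :
    Integrable (fun p : ℝ × ℝ => ut p.2 p.1 * ψ p.2 p.1 + u p.2 p.1 * ψt p.2 p.1)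
      ((volume.restrict (Ioo 0 T)).prod (volume.restrict (Ioo 0 L))) := by
  rw [Measure.prod_restrict, ← Measure.volume_eq_prod]
  have hsub : Icc t₀ t₁ ⊆ Ioo 0 T := Icc_subset_Ioo ht₀ ht₁
  have hcont : ContinuousOn (fun p : ℝ × ℝ => ut p.2 p.1 * ψ p.2 p.1 + u p.2 p.1 * ψt p.2 p.1)
      (Icc t₀ t₁ ×ˢ Icc 0 L) := by
    refine ((hut_cont.comp continuous_swap.continuousOn fun p hp => ⟨hp.2, hsub hp.1⟩).mul
      (hψ.continuous.comp continuous_swap).continuousOn).add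
      ((hu_cont.comp continuous_swap.continuousOn fun p hp =>
        ⟨hp.2, Ioo_subset_Icc_self (hsub hp.1)⟩).mul
      (hψ.continuous_t.comp continuous_swap).continuousOn)
  refine (hcont.integrableOn_compact (isCompact_Icc.prod isCompact_Icc)).of_forall_sdiff_eq_zero
    (measurableSet_Ioo.prod measurableSet_Ioo) fun p hp => ?_
  have ht : p.1 ∉ Icc t₀ t₁ := fun ht => hp.2 ⟨ht, Ioo_subset_Icc_self hp.1.2⟩
  simp only [hvan _ _ ht, hψ.t_eq_zero_of_notMem isClosed_Icc hvan _ ht, mul_zero, add_zero]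

theorem integral_time_deriv_eq_zero
    (hut : ∀ x ∈ Icc (0:ℝ) L, ∀ t ∈ Ioo (0:ℝ) T, HasDerivAt (fun s => u x s) (ut x t) t)
    (hut_cont : ContinuousOn (fun p : ℝ × ℝ => ut p.1 p.2) (Icc 0 L ×ˢ Ioo 0 T))
    (hψ : HasContinuousPartials ψ ψx ψxx ψt) (ht₀ : 0 < t₀) (ht₀₁ : t₀ ≤ t₁) (ht₁ : t₁ < T)
    (hvan : ∀ x, ∀ t ∉ Icc t₀ t₁, ψ x t = 0) {x : ℝ} (hx : x ∈ Icc 0 L) :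
    ∫ t in Ioo 0 T, (ut x t * ψ x t + u x t * ψt x t) = 0 := by
  obtain ⟨a, ha, hat₀⟩ : ∃ a, 0 < a ∧ a < t₀ := ⟨t₀ / 2, by linarith, by linarith⟩
  obtain ⟨b, ht₁b, hb⟩ : ∃ b, t₁ < b ∧ b < T := ⟨(t₁ + T) / 2, by linarith, by linarith⟩
  have hab : a ≤ b := by linarith
  have habT : uIcc a b ⊆ Ioo 0 T := by
    rw [uIcc_of_le hab]; exact Icc_subset_Ioo ha hb
  have hzero : ∀ t ∉ Icc t₀ t₁, ut x t * ψ x t + u x t * ψt x t = 0 := fun t ht => by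
    simp only [hvan _ _ ht, hψ.t_eq_zero_of_notMem isClosed_Icc hvan _ ht, mul_zero, add_zero]
  have hderiv : ∀ t ∈ uIcc a b, HasDerivAt (fun s => u x s * ψ x s)
      (ut x t * ψ x t + u x t * ψt x t) t := fun t ht =>
    (hut x hx t (habT ht)).mul (hψ.hasDerivAt_t x t)
  have hslice : Continuous fun t : ℝ => (x, t) := continuous_const.prodMk continuous_id
  have hu : ContinuousOn (fun t => u x t) (uIcc a b) := fun t ht =>
    (hut x hx t (habT ht)).continuousAt.continuousWithinAt
  have hut' : ContinuousOn (fun t => ut x t) (uIcc a b) :=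
    hut_cont.comp hslice.continuousOn fun t ht => ⟨hx, habT ht⟩
  have hint : IntervalIntegrable (fun t => ut x t * ψ x t + u x t * ψt x t) volume a b :=
    ((hut'.mul (hψ.continuous.comp hslice).continuousOn).add
      (hu.mul (hψ.continuous_t.comp hslice).continuousOn)).intervalIntegrable
  rw [setIntegral_eq_integral_of_forall_compl_eq_zero fun t ht =>
      hzero t fun h => ht (Icc_subset_Ioo ht₀ ht₁ h),
    ← setIntegral_eq_integral_of_forall_compl_eq_zero (s := Ioc a b) fun t ht =>
      hzero t fun h => ht ⟨by linarith [h.1], by linarith [h.2]⟩,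
    ← intervalIntegral.integral_of_le hab,
    intervalIntegral.integral_eq_sub_of_hasDerivAt hderiv hint,
    hvan x b fun h => by linarith [h.2], hvan x a fun h => by linarith [h.1]]
  ring

theorem integral_nlsPairing_eq (hL : 0 ≤ L)
    (hux : ∀ t ∈ Ioo (0:ℝ) T, ∀ x ∈ Icc (0:ℝ) L,
      HasDerivWithinAt (fun y => u y t) (ux x t) (Icc 0 L) x)
    (huxx : ∀ t ∈ Ioo (0:ℝ) T, ∀ x ∈ Icc (0:ℝ) L,
      HasDerivWithinAt (fun y => ux y t) (uxx x t) (Icc 0 L) x)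
    (huxx_cont : ∀ t ∈ Ioo (0:ℝ) T, ContinuousOn (fun x => uxx x t) (Icc 0 L))
    (hut_cont : ContinuousOn (fun p : ℝ × ℝ => ut p.1 p.2) (Icc 0 L ×ˢ Ioo 0 T))
    (hNLS : ∀ x ∈ Ioo (0:ℝ) L, ∀ t ∈ Ioo (0:ℝ) T,
      Complex.I * ut x t = uxx x t - 2 * (‖u x t‖ : ℂ) ^ 2 * u x t)
    (hψ : HasContinuousPartials ψ ψx ψxx ψt) {t : ℝ} (ht : t ∈ Ioo 0 T) (hψ₀ : ψ 0 t = 0)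
    (hψL : ψ L t = 0) :
    ∫ y in Ioo 0 L, nlsPairing (u y t) (ψ y t) (ψt y t) (ψxx y t) =
      u 0 t * ψx 0 t - u L t * ψx L t -
        Complex.I * ∫ y in Ioo 0 L, (ut y t * ψ y t + u y t * ψt y t) := by
  have hslice : Continuous fun y : ℝ => (y, t) := continuous_id.prodMk continuous_const
  have hu : ContinuousOn (fun y => u y t) (Icc 0 L) := fun y hy =>
    (hux t ht y hy).continuousWithinAt
  have hut' : ContinuousOn (fun y => ut y t) (Icc 0 L) :=
    hut_cont.comp hslice.continuousOn fun y hy => ⟨hy, ht⟩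
  have hG : IntegrableOn (fun y => ut y t * ψ y t + u y t * ψt y t) (Ioo 0 L) :=
    ((hut'.mul (hψ.continuous.comp hslice).continuousOn).add
      (hu.mul (hψ.continuous_t.comp hslice).continuousOn)).integrableOn_Icc.mono_set
      Ioo_subset_Icc_self
  have hW : IntegrableOn (fun y => uxx y t * ψ y t - u y t * ψxx y t) (Ioo 0 L) :=
    (((huxx_cont t ht).mul (hψ.continuous.comp hslice).continuousOn).sub
      (hu.mul (hψ.continuous_xx.comp hslice).continuousOn)).integrableOn_Icc.mono_set
      Ioo_subset_Icc_self
  have hgreen : ∫ y in Ioo 0 L, (uxx y t * ψ y t - u y t * ψxx y t) =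
      u 0 t * ψx 0 t - u L t * ψx L t := by
    rw [← integral_Ioc_eq_integral_Ioo, ← intervalIntegral.integral_of_le hL,
      integral_green_identity hL (hux t ht) (huxx t ht) (huxx_cont t ht)
        (fun y _ => (hψ.hasDerivAt_x y t).hasDerivWithinAt)
        (fun y _ => (hψ.hasDerivAt_xx y t).hasDerivWithinAt)
        (hψ.continuous_xx.comp hslice).continuousOn, hψ₀, hψL]
    ring
  calc ∫ y in Ioo 0 L, nlsPairing (u y t) (ψ y t) (ψt y t) (ψxx y t)
      = ∫ y in Ioo 0 L, ((uxx y t * ψ y t - u y t * ψxx y t) -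
          Complex.I * (ut y t * ψ y t + u y t * ψt y t)) :=
        setIntegral_congr_fun measurableSet_Ioo fun y hy => by
          simp only [nlsPairing]
          linear_combination ψ y t * hNLS y hy t ht
    _ = _ := by rw [integral_sub hW (hG.const_mul _), integral_const_mul, hgreen]

theorem integral_integral_nlsPairing_eq (hL : 0 ≤ L)
    (hu_cont : ContinuousOn (fun p : ℝ × ℝ => u p.1 p.2) (Icc 0 L ×ˢ Icc 0 T))
    (hux : ∀ t ∈ Ioo (0:ℝ) T, ∀ x ∈ Icc (0:ℝ) L,
      HasDerivWithinAt (fun y => u y t) (ux x t) (Icc 0 L) x)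
    (huxx : ∀ t ∈ Ioo (0:ℝ) T, ∀ x ∈ Icc (0:ℝ) L,
      HasDerivWithinAt (fun y => ux y t) (uxx x t) (Icc 0 L) x)
    (huxx_cont : ∀ t ∈ Ioo (0:ℝ) T, ContinuousOn (fun x => uxx x t) (Icc 0 L))
    (hut : ∀ x ∈ Icc (0:ℝ) L, ∀ t ∈ Ioo (0:ℝ) T, HasDerivAt (fun s => u x s) (ut x t) t)
    (hut_cont : ContinuousOn (fun p : ℝ × ℝ => ut p.1 p.2) (Icc 0 L ×ˢ Ioo 0 T))
    (hNLS : ∀ x ∈ Ioo (0:ℝ) L, ∀ t ∈ Ioo (0:ℝ) T,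
      Complex.I * ut x t = uxx x t - 2 * (‖u x t‖ : ℂ) ^ 2 * u x t)
    (hψ : HasContinuousPartials ψ ψx ψxx ψt) (ht₀ : 0 < t₀) (ht₀₁ : t₀ ≤ t₁) (ht₁ : t₁ < T)
    (hvan : ∀ x, ∀ t ∉ Icc t₀ t₁, ψ x t = 0) (hψ₀ : ∀ t, ψ 0 t = 0) (hψL : ∀ t, ψ L t = 0) :
    ∫ t in Ioo 0 T, ∫ y in Ioo 0 L, nlsPairing (u y t) (ψ y t) (ψt y t) (ψxx y t) =
      ∫ t in Ioo 0 T, (u 0 t * ψx 0 t - u L t * ψx L t) := by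
  have hprod := integrable_time_deriv_prod hu_cont hut_cont hψ ht₀ ht₁ hvan
  have hslice : ∀ x : ℝ, Continuous fun t : ℝ => (x, t) := fun x =>
    continuous_const.prodMk continuous_id
  have hB : IntegrableOn (fun t => u 0 t * ψx 0 t - u L t * ψx L t) (Ioo 0 T) :=
    (((hu_cont.comp (hslice 0).continuousOn fun t ht => ⟨left_mem_Icc.2 hL, ht⟩).mul
      (hψ.continuous_x.comp (hslice 0)).continuousOn).sub
      ((hu_cont.comp (hslice L).continuousOn fun t ht => ⟨right_mem_Icc.2 hL, ht⟩).mul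
      (hψ.continuous_x.comp (hslice L)).continuousOn)).integrableOn_Icc.mono_set
      Ioo_subset_Icc_self
  have hzero : ∫ t in Ioo 0 T, ∫ y in Ioo 0 L, (ut y t * ψ y t + u y t * ψt y t) = 0 := by
    rw [integral_integral_swap hprod]
    exact setIntegral_eq_zero_of_forall_eq_zero fun y hy =>
      integral_time_deriv_eq_zero hut hut_cont hψ ht₀ ht₀₁ ht₁ hvan (Ioo_subset_Icc_self hy)
  have hinner : Integrable (fun t => Complex.I *
      ∫ y in Ioo 0 L, (ut y t * ψ y t + u y t * ψt y t)) (volume.restrict (Ioo 0 T)) :=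
    hprod.integral_prod_left.const_mul _
  rw [setIntegral_congr_fun measurableSet_Ioo fun t ht =>
      integral_nlsPairing_eq hL hux huxx huxx_cont hut_cont hNLS hψ ht (hψ₀ t) (hψL t),
    integral_sub hB hinner, integral_const_mul, hzero, mul_zero, sub_zero]

end WeakForm

theorem IsCompact.exists_subset_Icc_of_subset_Ioo {K : Set ℝ} (hK : IsCompact K) {a b : ℝ}
    (hab : a < b) (h : K ⊆ Ioo a b) : ∃ c d, a < c ∧ c ≤ d ∧ d < b ∧ K ⊆ Icc c d := by
  rcases K.eq_empty_or_nonempty with rfl | hne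
  · exact ⟨(a + b) / 2, (a + b) / 2, by linarith, le_rfl, by linarith, empty_subset _⟩
  · exact ⟨sInf K, sSup K, (h (hK.sInf_mem hne)).1, csInf_le_csSup hne hK.bddBelow hK.bddAbove,
      (h (hK.sSup_mem hne)).2, subset_Icc_csInf_csSup hK.bddBelow hK.bddAbove⟩

theorem HasCompactSupport.exists_eq_zero_outside_strip {E : Type*} [Zero E]
    {φ : ℝ × ℝ → E} (hφ : HasCompactSupport φ) {T : ℝ} (hT : 0 < T)
    (hsupp : tsupport φ ⊆ univ ×ˢ Ioo 0 T) :
    ∃ R t₀ t₁, 0 < t₀ ∧ t₀ ≤ t₁ ∧ t₁ < T ∧ (∀ x t, R < |x| → φ (x, t) = 0) ∧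
      ∀ x, ∀ t ∉ Icc t₀ t₁, φ (x, t) = 0 := by
  obtain ⟨R, hR⟩ := (hφ.isCompact.image continuous_fst).isBounded.subset_closedBall 0
  obtain ⟨t₀, t₁, ht₀, ht₀₁, ht₁, ht⟩ :=
    (hφ.isCompact.image continuous_snd).exists_subset_Icc_of_subset_Ioo hT
      (by rintro _ ⟨p, hp, rfl⟩; exact (hsupp hp).2)
  refine ⟨R, t₀, t₁, ht₀, ht₀₁, ht₁, fun x t hx => ?_, fun x t hx => ?_⟩ <;>
    refine image_eq_zero_of_notMem_tsupport fun hp => ?_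
  · have := hR ⟨_, hp, rfl⟩
    rw [Metric.mem_closedBall, dist_zero_right, Real.norm_eq_abs] at this
    linarith
  · exact hx (ht ⟨_, hp, rfl⟩)

/-- The odd `2L`-periodic extension of a solution of the Dirichlet problem for the
defocusing NLS on `[0,L]` satisfies, in the distributional sense, the defocusing NLS
with `δ'`-sources of strengths `−2v₀(t)` at the points `2nL` and `2v_L(t)` at the points
`(2n+1)L`. -/
theorem odd_extension_distributional_NLS
    (L T : ℝ) (hL : 0 < L) (hT : 0 < T)
    (u ux uxx ut : ℝ → ℝ → ℂ)
    (hu_cont : ContinuousOn (fun p : ℝ × ℝ => u p.1 p.2) (Set.Icc 0 L ×ˢ Set.Icc 0 T))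
    (hux : ∀ t ∈ Set.Ioo (0:ℝ) T, ∀ x ∈ Set.Icc (0:ℝ) L,
      HasDerivWithinAt (fun y => u y t) (ux x t) (Set.Icc 0 L) x)
    (huxx : ∀ t ∈ Set.Ioo (0:ℝ) T, ∀ x ∈ Set.Icc (0:ℝ) L,
      HasDerivWithinAt (fun y => ux y t) (uxx x t) (Set.Icc 0 L) x)
    (huxx_cont : ∀ t ∈ Set.Ioo (0:ℝ) T, ContinuousOn (fun x => uxx x t) (Set.Icc 0 L))
    (hut : ∀ x ∈ Set.Icc (0:ℝ) L, ∀ t ∈ Set.Ioo (0:ℝ) T,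
      HasDerivAt (fun s => u x s) (ut x t) t)
    (hut_cont : ContinuousOn (fun p : ℝ × ℝ => ut p.1 p.2) (Set.Icc 0 L ×ˢ Set.Ioo 0 T))
    (hNLS : ∀ x ∈ Set.Ioo (0:ℝ) L, ∀ t ∈ Set.Ioo (0:ℝ) T,
      Complex.I * ut x t = uxx x t - 2 * (‖u x t‖ : ℂ) ^ 2 * u x t)
    (q : ℝ → ℝ → ℂ)
    (hq1 : ∀ t ∈ Set.Ioo (0:ℝ) T, ∀ x ∈ Set.Ioo (0:ℝ) L, q x t = u x t)
    (hq2 : ∀ t ∈ Set.Ioo (0:ℝ) T, ∀ x ∈ Set.Ioo (-L) (0:ℝ), q x t = -u (-x) t)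
    (hqper : ∀ t ∈ Set.Ioo (0:ℝ) T, ∀ x : ℝ, q (x + 2 * L) t = q x t)
    (φ : ℝ × ℝ → ℂ) (hφ : ContDiff ℝ (⊤ : ℕ∞) φ) (hφc : HasCompactSupport φ)
    (hφsupp : tsupport φ ⊆ Set.univ ×ˢ Set.Ioo 0 T) :
    ∫ t in Set.Ioo (0:ℝ) T, ∫ x : ℝ,
        (q x t * (-Complex.I * deriv (fun s => φ (x, s)) t -
            deriv (fun y => deriv (fun z => φ (z, t)) y) x) +
          2 * (‖q x t‖ : ℂ) ^ 2 * q x t * φ (x, t)) =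
      2 * ∫ t in Set.Ioo (0:ℝ) T,
        ∑' n : ℤ, (u 0 t * deriv (fun y => φ (y, t)) (2 * n * L) -
          u L t * deriv (fun y => φ (y, t)) ((2 * n + 1) * L)) := by
  obtain ⟨R, t₀, t₁, ht₀, ht₀₁, ht₁, hφR, hφT⟩ := hφc.exists_eq_zero_outside_strip hT hφsupp
  obtain ⟨M, hM⟩ := exists_nat_gt (R / L)
  have hRM : R < (2 * M + 1) * L := by nlinarith [(div_lt_iff₀ hL).1 hM]
  have hP := (hφ.of_le (by norm_cast)).hasContinuousPartials
  have hfar := fun x t (hx : (2 * M + 1) * L ≤ |x|) =>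
    hP.eq_zero_of_lt_abs (x := x) (t := t) hφR (hRM.trans_le hx)
  change ∫ t in Ioo 0 T, ∫ x, nlsPairing (q x t) (φ (x, t)) (deriv (fun s => φ (x, s)) t)
    (deriv (fun y => deriv (fun z => φ (z, t)) y) x) = _
  rw [setIntegral_congr_fun measurableSet_Ioo fun t ht =>
      hP.integral_nlsPairing_odd_ext (f := (q · t)) (hqper t ht) (hq1 t ht) (hq2 t ht) hL.le
        (fun y hy => (hux t ht y hy).continuousWithinAt) M fun x hx =>
        ⟨(hfar x t hx).1, (hfar x t hx).2.2⟩,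
    integral_integral_nlsPairing_eq hL.le hu_cont hux huxx huxx_cont hut hut_cont hNLS
      (hP.periodize L M) ht₀ ht₀₁ ht₁
      (fun y t ht => Finset.sum_eq_zero fun n _ => by simp only [hφT _ _ ht, sub_self])
      (fun t => periodizeOdd_zero _ _ _ _)
      (fun t => periodizeOdd_self hL.le fun x hx => (hfar x t hx).1),
    ← integral_const_mul]
  exact setIntegral_congr_fun measurableSet_Ioo fun t _ =>
    periodizeEven_boundary hL.le (fun x hx => (hfar x t hx).2.1) _ _
end
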